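/- arXiv:2111.08961 — 5 statements merged into one kernel-verified Lean document; each statement's English description precedes it below -/
import Mathlib

section
/- Integration-by-part (universal) bound: Let H₁, H₂ : ℝ → B(ℋ) be locally integrable maps with H₁(t) and H₂(t) self-adjoint for every t, let U₁, U₂ be the propagators generated by H₁ and H₂, and define the integral action S₂₁(t) = ∫₀ᵗ (H₂(s) − H₁(s)) ds. Then for every t ≥ 0 one has ‖U₂ − U₁‖_{∞,t} ≤ ‖S₂₁‖_{∞,t} · (1 + ‖H₁‖_{1,t} + ‖H₂‖_{1,t}). -/
open MeasureTheory intervalIntegral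

variable {E : Type*} [NormedAddCommGroup E] [InnerProductSpace ℂ E] [CompleteSpace E]
  [TopologicalSpace.SeparableSpace E]

/-- `U` is the propagator generated by the time-dependent Hamiltonian `H`:
the norm-continuous solution of the Volterra integral equation
`U(t) = 1 − i ∫₀ᵗ H(s) U(s) ds`. -/
def IsPropagator (H U : ℝ → E →L[ℂ] E) : Prop :=
  Continuous U ∧ ∀ t : ℝ, U t = 1 - Complex.I • ∫ s in (0:ℝ)..t, (H s).comp (U s)


section UnivBoundAux

open Set

set_option linter.unusedSectionVars false

namespace UnivBound

lemma integrable_prod_op {μ ν : Measure ℝ} [SFinite ν] {a b : ℝ → E →L[ℂ] E}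
    (ha : Integrable a μ) (hb : Integrable b ν) :
    Integrable (fun p : ℝ × ℝ => a p.1 * b p.2) (μ.prod ν) := by
  refine (integrable_prod_iff (ha.1.comp_fst.mul hb.1.comp_snd)).2 ⟨?_, ?_⟩
  · exact Filter.Eventually.of_forall fun x => hb.const_mul (a x)
  · refine Integrable.mono' (ha.norm.mul_const (∫ y, ‖b y‖ ∂ν))
      ((ha.1.comp_fst.mul hb.1.comp_snd).norm.integral_prod_right') ?_
    refine Filter.Eventually.of_forall fun x => ?_
    rw [Real.norm_eq_abs, abs_of_nonneg (integral_nonneg fun y => norm_nonneg _)]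
    calc ∫ y, ‖a x * b y‖ ∂ν ≤ ∫ y, ‖a x‖ * ‖b y‖ ∂ν := by
          refine integral_mono_of_nonneg (Filter.Eventually.of_forall fun y => norm_nonneg _)
            (hb.norm.const_mul ‖a x‖) (Filter.Eventually.of_forall fun y => norm_mul_le _ _)
      _ = ‖a x‖ * ∫ y, ‖b y‖ ∂ν := integral_const_mul _ _

lemma triangle_fubini {a b : ℝ → E →L[ℂ] E}
    (ha : ∀ x y : ℝ, IntervalIntegrable a volume x y)
    (hb : ∀ x y : ℝ, IntervalIntegrable b volume x y)
    {t : ℝ} (ht : (0:ℝ) ≤ t) :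
    ∫ s in (0:ℝ)..t, a s * ((∫ r in (0:ℝ)..t, b r) - ∫ r in (0:ℝ)..s, b r)
      = ∫ r in (0:ℝ)..t, (∫ s in (0:ℝ)..r, a s) * b r := by
  have hbint : ∀ s r : ℝ, IntegrableOn b (Ioc s r) volume := fun s r => (hb s r).1
  have haint : ∀ s r : ℝ, IntegrableOn a (Ioc s r) volume := fun s r => (ha s r).1
  set μ : Measure ℝ := volume.restrict (Ioc 0 t) with hμ
  have hswap : Integrable (Function.uncurry fun s r : ℝ => if s < r then a s * b r else 0)
      (μ.prod μ) := by
    have h1 : Integrable (fun p : ℝ × ℝ => a p.1 * b p.2) (μ.prod μ) :=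
      integrable_prod_op (haint 0 t) (hbint 0 t)
    have h2 := h1.indicator (s := {p : ℝ × ℝ | p.1 < p.2})
      (measurableSet_lt measurable_fst measurable_snd)
    refine h2.congr (Filter.Eventually.of_forall fun p => ?_)
    by_cases h : p.1 < p.2 <;> simp [Function.uncurry, Set.indicator_apply, h]
  have step2 : ∀ s ∈ Ioc (0:ℝ) t,
      a s * ((∫ r in (0:ℝ)..t, b r) - ∫ r in (0:ℝ)..s, b r)
        = ∫ r in Ioc (0:ℝ) t, (if s < r then a s * b r else 0) := by
    intro s hs
    have h1 : (∫ r in (0:ℝ)..t, b r) - ∫ r in (0:ℝ)..s, b r = ∫ r in s..t, b r :=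
      integral_interval_sub_left (hb 0 t) (hb 0 s)
    have h2 : a s * ∫ r in s..t, b r = ∫ r in s..t, a s * b r := by
      have := (ContinuousLinearMap.mul ℂ (E →L[ℂ] E) (a s)).intervalIntegral_comp_comm (hb s t)
      simpa using this.symm
    have hIoc : Ioi s ∩ Ioc (0:ℝ) t = Ioc s t := by
      ext r
      simp only [mem_inter_iff, mem_Ioi, mem_Ioc]
      exact ⟨fun ⟨h1', _, h3⟩ => ⟨h1', h3⟩, fun ⟨h1', h2'⟩ => ⟨h1', lt_of_le_of_lt hs.1.le h1', h2'⟩⟩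
    have h3 : ∫ r in Ioc (0:ℝ) t, (if s < r then a s * b r else 0)
        = ∫ r in Ioc s t, a s * b r := by
      have := integral_indicator (μ := μ) (f := fun r => a s * b r) (measurableSet_Ioi (a := s))
      rw [hμ, Measure.restrict_restrict measurableSet_Ioi, hIoc] at this
      rw [← this]
      refine setIntegral_congr_fun measurableSet_Ioc fun r _ => ?_
      by_cases h : s < r <;> simp [Set.indicator_apply, h]
    rw [h1, h2, h3, intervalIntegral.integral_of_le hs.2]
  have step5 : ∀ r ∈ Ioc (0:ℝ) t,
      (∫ s in Ioc (0:ℝ) t, (if s < r then a s * b r else 0))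
        = (∫ s in (0:ℝ)..r, a s) * b r := by
    intro r hr
    have hIoo : Iio r ∩ Ioc (0:ℝ) t = Ioo 0 r := by
      ext s
      simp only [mem_inter_iff, mem_Iio, mem_Ioo, mem_Ioc]
      exact ⟨fun ⟨h1', h2', _⟩ => ⟨h2', h1'⟩, fun ⟨h1', h2'⟩ => ⟨h2', h1', h2'.le.trans hr.2⟩⟩
    have h3 : ∫ s in Ioc (0:ℝ) t, (if s < r then a s * b r else 0)
        = ∫ s in Ioo (0:ℝ) r, a s * b r := by
      have := integral_indicator (μ := μ) (f := fun s => a s * b r) (measurableSet_Iio (a := r))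
      rw [hμ, Measure.restrict_restrict measurableSet_Iio, hIoo] at this
      rw [← this]
      refine setIntegral_congr_fun measurableSet_Ioc fun s _ => ?_
      by_cases h : s < r <;> simp [Set.indicator_apply, h]
    have h4 : ∫ s in Ioo (0:ℝ) r, a s * b r = (∫ s in Ioo (0:ℝ) r, a s) * b r := by
      have := ((ContinuousLinearMap.mul ℂ (E →L[ℂ] E)).flip (b r)).integral_comp_comm
        ((haint 0 r).mono_set Ioo_subset_Ioc_self)
      simpa using this
    have h5 : (∫ s in Ioo (0:ℝ) r, a s) = ∫ s in (0:ℝ)..r, a s := by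
      rw [intervalIntegral.integral_of_le hr.1.le, integral_Ioc_eq_integral_Ioo]
    rw [h3, h4, h5]
  calc ∫ s in (0:ℝ)..t, a s * ((∫ r in (0:ℝ)..t, b r) - ∫ r in (0:ℝ)..s, b r)
      = ∫ s in Ioc (0:ℝ) t, (∫ r in Ioc (0:ℝ) t, (if s < r then a s * b r else 0)) := by
        rw [intervalIntegral.integral_of_le ht]
        exact setIntegral_congr_fun measurableSet_Ioc step2
    _ = ∫ r in Ioc (0:ℝ) t, (∫ s in Ioc (0:ℝ) t, (if s < r then a s * b r else 0)) :=
        integral_integral_swap hswap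
    _ = ∫ r in Ioc (0:ℝ) t, (∫ s in (0:ℝ)..r, a s) * b r :=
        setIntegral_congr_fun measurableSet_Ioc step5
    _ = ∫ r in (0:ℝ)..t, (∫ s in (0:ℝ)..r, a s) * b r :=
        (intervalIntegral.integral_of_le ht).symm

lemma prodRule {A B a b : ℝ → E →L[ℂ] E} (hA : Continuous A) (hB : Continuous B)
    (ha : ∀ x y : ℝ, IntervalIntegrable a volume x y)
    (hb : ∀ x y : ℝ, IntervalIntegrable b volume x y)
    (hAeq : ∀ u : ℝ, 0 ≤ u → A u = A 0 + ∫ s in (0:ℝ)..u, a s)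
    (hBeq : ∀ u : ℝ, 0 ≤ u → B u = B 0 + ∫ s in (0:ℝ)..u, b s)
    {t : ℝ} (ht : (0:ℝ) ≤ t) :
    A t * B t = A 0 * B 0 + ∫ s in (0:ℝ)..t, (a s * B s + A s * b s) := by
  have haB : IntervalIntegrable (fun s => a s * B s) volume 0 t :=
    (ha 0 t).mul_continuousOn hB.continuousOn
  have hAb : IntervalIntegrable (fun s => A s * b s) volume 0 t :=
    (hb 0 t).continuousOn_mul hA.continuousOn
  have hA0b : IntervalIntegrable (fun s => A 0 * b s) volume 0 t :=
    (hb 0 t).continuousOn_mul continuousOn_const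
  have haBt : IntervalIntegrable (fun s => a s * (B t - B s)) volume 0 t :=
    (ha 0 t).mul_continuousOn (continuous_const.sub hB).continuousOn
  -- step lhs₁ : (A t - A 0) * B t
  have e1 : (A t - A 0) * B t = ∫ s in (0:ℝ)..t, a s * B t := by
    rw [hAeq t ht, add_sub_cancel_left]
    have := (((ContinuousLinearMap.mul ℂ (E →L[ℂ] E)).flip (B t)).intervalIntegral_comp_comm
      (ha 0 t))
    simpa using this.symm
  have e2 : ∫ s in (0:ℝ)..t, a s * B t
      = (∫ s in (0:ℝ)..t, a s * B s) + ∫ s in (0:ℝ)..t, a s * (B t - B s) := by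
    rw [← intervalIntegral.integral_add haB haBt]
    refine intervalIntegral.integral_congr fun s _ => ?_
    simp [mul_sub]
  have e3 : ∫ s in (0:ℝ)..t, a s * (B t - B s)
      = ∫ r in (0:ℝ)..t, (A r - A 0) * b r := by
    have lhs_congr : ∫ s in (0:ℝ)..t, a s * (B t - B s)
        = ∫ s in (0:ℝ)..t, a s * ((∫ r in (0:ℝ)..t, b r) - ∫ r in (0:ℝ)..s, b r) := by
      refine intervalIntegral.integral_congr fun s hs => ?_
      rw [uIcc_of_le ht] at hs
      rw [hBeq t ht, hBeq s hs.1]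
      congr 1
      abel
    have rhs_congr : ∫ r in (0:ℝ)..t, (∫ s in (0:ℝ)..r, a s) * b r
        = ∫ r in (0:ℝ)..t, (A r - A 0) * b r := by
      refine intervalIntegral.integral_congr fun r hr => ?_
      rw [uIcc_of_le ht] at hr
      rw [hAeq r hr.1, add_sub_cancel_left]
    rw [lhs_congr, triangle_fubini ha hb ht, rhs_congr]
  have e4 : A 0 * (B t - B 0) = ∫ r in (0:ℝ)..t, A 0 * b r := by
    rw [hBeq t ht, add_sub_cancel_left]
    have := ((ContinuousLinearMap.mul ℂ (E →L[ℂ] E) (A 0)).intervalIntegral_comp_comm (hb 0 t))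
    simpa using this.symm
  have e5 : ∫ r in (0:ℝ)..t, (A r - A 0) * b r
      = (∫ r in (0:ℝ)..t, A r * b r) - ∫ r in (0:ℝ)..t, A 0 * b r := by
    rw [← intervalIntegral.integral_sub hAb hA0b]
    refine intervalIntegral.integral_congr fun r _ => ?_
    simp [sub_mul]
  have main : A t * B t = A 0 * B 0 + ((A t - A 0) * B t + A 0 * (B t - B 0)) := by
    noncomm_ring
  rw [main, e1, e2, e3, e4, e5, intervalIntegral.integral_add haB hAb]
  abel

lemma gronwall_zero (f h : ℝ → ℝ) (hf : Continuous f) (hf0 : ∀ s, 0 ≤ f s)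
    (hh : ∀ a b : ℝ, IntervalIntegrable h volume a b) (hh0 : ∀ s, 0 ≤ h s)
    {T : ℝ} (hT : (0:ℝ) ≤ T)
    (key : ∀ s ∈ Icc (0:ℝ) T, f s ≤ ∫ r in (0:ℝ)..s, h r * f r) :
    ∀ s ∈ Icc (0:ℝ) T, f s = 0 := by
  have hhf : ∀ a b : ℝ, IntervalIntegrable (fun r => h r * f r) volume a b :=
    fun a b => (hh a b).mul_continuousOn hf.continuousOn
  set A : Set ℝ := {u | u ∈ Icc (0:ℝ) T ∧ ∀ s ∈ Icc (0:ℝ) u, f s = 0} with hA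
  have h0A : (0:ℝ) ∈ A := by
    have hf00 : f 0 = 0 := by
      have := key 0 ⟨le_refl 0, hT⟩
      simp only [intervalIntegral.integral_same] at this
      linarith [hf0 0]
    exact ⟨⟨le_refl 0, hT⟩, fun s hs => by
      have : s = 0 := le_antisymm hs.2 hs.1
      rw [this, hf00]⟩
  have hAne : A.Nonempty := ⟨0, h0A⟩
  have hbdd : BddAbove A := ⟨T, fun u hu => hu.1.2⟩
  set τ := sSup A with hτ
  have hτ0 : (0:ℝ) ≤ τ := le_csSup hbdd h0A
  have hτT : τ ≤ T := csSup_le hAne fun u hu => hu.1.2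
  have claim1 : ∀ s, 0 ≤ s → s < τ → f s = 0 := by
    intro s hs0 hsτ
    obtain ⟨u, huA, hsu⟩ := exists_lt_of_lt_csSup hAne hsτ
    exact huA.2 s ⟨hs0, hsu.le⟩
  have zero_on : ∀ s ∈ Icc (0:ℝ) τ, f s = 0 := by
    intro s hs
    rcases lt_or_eq_of_le hs.2 with hlt | heq
    · exact claim1 s hs.1 hlt
    · rw [heq]
      have hint : ∫ r in (0:ℝ)..τ, h r * f r = 0 := by
        rw [intervalIntegral.integral_of_le hτ0, integral_Ioc_eq_integral_Ioo]
        rw [setIntegral_congr_fun measurableSet_Ioo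
          (g := fun _ => (0:ℝ)) (fun r hr => by rw [claim1 r hr.1.le hr.2]; ring)]
        simp
      have := key τ ⟨hτ0, hτT⟩
      rw [hint] at this
      linarith [hf0 τ]
  have hτeq : τ = T := by
    by_contra hne
    have hτltT : τ < T := lt_of_le_of_ne hτT hne
    have hPcont : Continuous fun u => ∫ r in (0:ℝ)..u, h r :=
      intervalIntegral.continuous_primitive hh 0
    have hPat : ContinuousAt (fun u => ∫ r in (0:ℝ)..u, h r) τ := hPcont.continuousAt
    rw [Metric.continuousAt_iff] at hPat
    obtain ⟨δ, hδ0, hδ⟩ := hPat (1/2) (by norm_num)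
    set τ' := min T (τ + δ/2) with hτ'
    have hττ' : τ < τ' := lt_min hτltT (by linarith)
    have hτ'T : τ' ≤ T := min_le_left _ _
    have hτ'0 : (0:ℝ) ≤ τ' := hτ0.trans hττ'.le
    obtain ⟨c, hc, hcmax⟩ := isCompact_Icc.exists_isMaxOn (Set.nonempty_Icc.2 hττ'.le)
      hf.continuousOn
    have bound : ∀ u ∈ Icc τ τ', f u ≤ (1/2) * f c := by
      intro u hu
      have hu0 : (0:ℝ) ≤ u := hτ0.trans hu.1
      have huT : u ≤ T := hu.2.trans hτ'T
      have hsplit : ∫ r in (0:ℝ)..u, h r * f r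
          = (∫ r in (0:ℝ)..τ, h r * f r) + ∫ r in τ..u, h r * f r :=
        (intervalIntegral.integral_add_adjacent_intervals (hhf 0 τ) (hhf τ u)).symm
      have hzero : ∫ r in (0:ℝ)..τ, h r * f r = 0 := by
        rw [intervalIntegral.integral_congr (g := fun _ => (0:ℝ))
          (fun r hr => by rw [uIcc_of_le hτ0] at hr; rw [zero_on r hr]; ring)]
        simp
      have h2 : ∫ r in τ..u, h r * f r ≤ ∫ r in τ..u, h r * f c := by
        refine intervalIntegral.integral_mono_on hu.1 (hhf τ u) ((hh τ u).mul_const _) ?_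
        intro r hr
        exact mul_le_mul_of_nonneg_left
          (hcmax ⟨hr.1, hr.2.trans hu.2⟩) (hh0 r)
      have h3 : ∫ r in τ..u, h r * f c = (∫ r in τ..u, h r) * f c :=
        intervalIntegral.integral_mul_const _ _
      have h4 : (∫ r in τ..u, h r) ≤ 1/2 := by
        have hsub : (∫ r in (0:ℝ)..u, h r) - ∫ r in (0:ℝ)..τ, h r = ∫ r in τ..u, h r :=
          integral_interval_sub_left (hh 0 u) (hh 0 τ)
        have hdist : dist u τ < δ := by
          rw [Real.dist_eq, abs_of_nonneg (by linarith [hu.1])]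
          have : u ≤ τ + δ/2 := hu.2.trans (min_le_right _ _)
          linarith
        have := hδ hdist
        rw [Real.dist_eq] at this
        have habs := abs_lt.1 this
        linarith [hsub ▸ habs.2]
      have h5 : (∫ r in τ..u, h r) * f c ≤ (1/2) * f c :=
        mul_le_mul_of_nonneg_right h4 (hf0 c)
      calc f u ≤ ∫ r in (0:ℝ)..u, h r * f r := key u ⟨hu0, huT⟩
        _ = ∫ r in τ..u, h r * f r := by rw [hsplit, hzero, zero_add]
        _ ≤ ∫ r in τ..u, h r * f c := h2
        _ = (∫ r in τ..u, h r) * f c := h3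
        _ ≤ (1/2) * f c := h5
    have hfc0 : f c = 0 := by
      have := bound c hc
      have := hf0 c
      linarith
    have hzero' : ∀ u ∈ Icc τ τ', f u = 0 := by
      intro u hu
      have := bound u hu
      rw [hfc0] at this
      have := hf0 u
      linarith
    have hτ'A : τ' ∈ A := by
      refine ⟨⟨hτ'0, hτ'T⟩, fun s hs => ?_⟩
      rcases le_or_gt s τ with hsτ | hsτ
      · exact zero_on s ⟨hs.1, hsτ⟩
      · exact hzero' s ⟨hsτ.le, hs.2⟩
    have := le_csSup hbdd hτ'A
    rw [← hτ] at this
    linarith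
  intro s hs
  exact zero_on s ⟨hs.1, by rw [hτeq]; exact hs.2⟩

def IsPropagator' (H U : ℝ → E →L[ℂ] E) : Prop :=
  Continuous U ∧ ∀ t : ℝ, U t = 1 - Complex.I • ∫ s in (0:ℝ)..t, (H s).comp (U s)

variable {H U : ℝ → E →L[ℂ] E}

lemma propagator_zero (hU : IsPropagator' H U) : U 0 = 1 := by
  simpa using hU.2 0

lemma propagator_volterra (hU : IsPropagator' H U) (u : ℝ) :
    U u = 1 + ∫ s in (0:ℝ)..u, (-Complex.I) • (H s * U s) := by
  have h := hU.2 u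
  simp only [← ContinuousLinearMap.mul_def] at h
  rw [h, intervalIntegral.integral_smul, sub_eq_add_neg, ← neg_smul]

lemma propagator_integrand_int
    (hHint : ∀ a b : ℝ, IntervalIntegrable H volume a b) (hU : IsPropagator' H U)
    (x y : ℝ) :
    IntervalIntegrable (fun s => (-Complex.I) • (H s * U s)) volume x y :=
  ((hHint x y).mul_continuousOn hU.1.continuousOn).smul (-Complex.I)

lemma propagator_star_volterra
    (hHint : ∀ a b : ℝ, IntervalIntegrable H volume a b)
    (hsa : ∀ t : ℝ, IsSelfAdjoint (H t)) (hU : IsPropagator' H U) (u : ℝ) :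
    star (U u) = 1 + ∫ s in (0:ℝ)..u, Complex.I • (star (U s) * H s) := by
  have h1 := congrArg star (propagator_volterra hU u)
  rw [star_add, star_one] at h1
  have h2 : star (∫ s in (0:ℝ)..u, (-Complex.I) • (H s * U s))
      = ∫ s in (0:ℝ)..u, star ((-Complex.I) • (H s * U s)) :=
    ((starL' ℝ : (E →L[ℂ] E) ≃L[ℝ] (E →L[ℂ] E)).toContinuousLinearMap.intervalIntegral_comp_comm
      (propagator_integrand_int hHint hU 0 u)).symm
  rw [h1, h2]
  congr 1
  refine intervalIntegral.integral_congr fun s _ => ?_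
  rw [star_smul, star_mul, (hsa s).star_eq]
  simp

lemma propagator_star_integrand_int
    (hHint : ∀ a b : ℝ, IntervalIntegrable H volume a b) (hU : IsPropagator' H U)
    (x y : ℝ) :
    IntervalIntegrable (fun s => Complex.I • (star (U s) * H s)) volume x y :=
  ((hHint x y).continuousOn_mul (continuous_star.comp hU.1).continuousOn).smul Complex.I

lemma propagator_star_mul_self
    (hHint : ∀ a b : ℝ, IntervalIntegrable H volume a b)
    (hsa : ∀ t : ℝ, IsSelfAdjoint (H t)) (hU : IsPropagator' H U)
    {t : ℝ} (ht : (0:ℝ) ≤ t) : star (U t) * U t = 1 := by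
  have hstar0 : star (U 0) = 1 := by rw [propagator_zero hU, star_one]
  have hpr : star (U t) * U t = star (U 0) * U 0 + ∫ s in (0:ℝ)..t,
      ((Complex.I • (star (U s) * H s)) * U s + star (U s) * ((-Complex.I) • (H s * U s))) :=
    prodRule (A := fun u => star (U u)) (B := U)
      (a := fun s => Complex.I • (star (U s) * H s))
      (b := fun s => (-Complex.I) • (H s * U s))
      (continuous_star.comp hU.1) hU.1
      (propagator_star_integrand_int hHint hU) (propagator_integrand_int hHint hU)
      (fun u _ => by
        show star (U u) = star (U 0) + ∫ s in (0:ℝ)..u, Complex.I • (star (U s) * H s)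
        rw [propagator_star_volterra hHint hsa hU u, hstar0])
      (fun u _ => by rw [propagator_volterra hU u, propagator_zero hU]) ht
  have hzero : ∀ s : ℝ, (Complex.I • (star (U s) * H s)) * U s
      + star (U s) * ((-Complex.I) • (H s * U s)) = 0 := by
    intro s
    rw [smul_mul_assoc, mul_smul_comm, mul_assoc, neg_smul]
    exact add_neg_cancel _
  rw [hpr, hstar0, propagator_zero hU,
    intervalIntegral.integral_congr (g := fun _ => (0:E →L[ℂ] E)) fun s _ => hzero s]
  simp

lemma propagator_norm_le
    (hHint : ∀ a b : ℝ, IntervalIntegrable H volume a b)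
    (hsa : ∀ t : ℝ, IsSelfAdjoint (H t)) (hU : IsPropagator' H U)
    {t : ℝ} (ht : (0:ℝ) ≤ t) : ‖U t‖ ≤ 1 := by
  refine ContinuousLinearMap.opNorm_le_bound _ zero_le_one fun x => ?_
  have h1 := propagator_star_mul_self hHint hsa hU ht
  have h2 : ContinuousLinearMap.adjoint (U t) (U t x) = x := by
    have := congrArg (fun A : E →L[ℂ] E => A x) h1
    simpa [ContinuousLinearMap.mul_apply, ContinuousLinearMap.star_eq_adjoint] using this
  have h3 : (inner ℂ (U t x) (U t x) : ℂ) = inner ℂ x x := by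
    rw [← ContinuousLinearMap.adjoint_inner_left, h2]
  have h4 : (‖U t x‖ : ℝ) ^ 2 = ‖x‖ ^ 2 := by
    have h5 := h3
    rw [@inner_self_eq_norm_sq_to_K ℂ, @inner_self_eq_norm_sq_to_K ℂ] at h5
    exact_mod_cast h5
  nlinarith [norm_nonneg (U t x), norm_nonneg x, sq_nonneg (‖U t x‖ - ‖x‖)]

lemma propagator_mul_star_self
    (hHint : ∀ a b : ℝ, IntervalIntegrable H volume a b)
    (hsa : ∀ t : ℝ, IsSelfAdjoint (H t)) (hU : IsPropagator' H U)
    {t : ℝ} (ht : (0:ℝ) ≤ t) : U t * star (U t) = 1 := by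
  set Q : ℝ → E →L[ℂ] E := fun u => U u * star (U u) - 1 with hQdef
  have hQcont : Continuous Q := (hU.1.mul (continuous_star.comp hU.1)).sub continuous_const
  set g : ℝ → E →L[ℂ] E := fun s =>
    ((-Complex.I) • (H s * U s)) * star (U s) + U s * (Complex.I • (star (U s) * H s)) with hgdef
  have hgint : ∀ x y : ℝ, IntervalIntegrable g volume x y := fun x y =>
    (((propagator_integrand_int hHint hU x y).mul_continuousOn
      (continuous_star.comp hU.1).continuousOn)).add
      ((propagator_star_integrand_int hHint hU x y).continuousOn_mul hU.1.continuousOn)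
  have hstar0 : star (U 0) = 1 := by rw [propagator_zero hU, star_one]
  have hQeq : ∀ u : ℝ, 0 ≤ u → Q u = ∫ s in (0:ℝ)..u, g s := by
    intro u hu
    have hpr : U u * star (U u) = U 0 * star (U 0) + ∫ s in (0:ℝ)..u, g s :=
      prodRule (A := U) (B := fun u => star (U u))
        (a := fun s => (-Complex.I) • (H s * U s))
        (b := fun s => Complex.I • (star (U s) * H s))
        hU.1 (continuous_star.comp hU.1)
        (propagator_integrand_int hHint hU) (propagator_star_integrand_int hHint hU)
        (fun u _ => by rw [propagator_volterra hU u, propagator_zero hU])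
        (fun u _ => by
          show star (U u) = star (U 0) + ∫ s in (0:ℝ)..u, Complex.I • (star (U s) * H s)
          rw [propagator_star_volterra hHint hsa hU u, hstar0]) hu
    show U u * star (U u) - 1 = _
    rw [hpr, hstar0, propagator_zero hU, one_mul, add_sub_cancel_left]
  have hgQ : ∀ s : ℝ, g s = (-Complex.I) • (H s * Q s) + Complex.I • (Q s * H s) := by
    intro s
    show ((-Complex.I) • (H s * U s)) * star (U s) + U s * (Complex.I • (star (U s) * H s))
      = (-Complex.I) • (H s * (U s * star (U s) - 1)) + Complex.I • ((U s * star (U s) - 1) * H s)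
    simp only [mul_sub, sub_mul, mul_one, one_mul, smul_sub, smul_mul_assoc, mul_smul_comm,
      mul_assoc]
    module
  have hQ0 : ∀ s ∈ Icc (0:ℝ) t, ‖Q s‖ = 0 := by
    refine gronwall_zero (fun u => ‖Q u‖) (fun s => 2 * ‖H s‖) hQcont.norm
      (fun s => norm_nonneg _)
      (fun a b => (hHint a b).norm.const_mul 2) (fun s => by positivity) ht ?_
    intro s hs
    have h1 : ‖Q s‖ ≤ ∫ r in (0:ℝ)..s, ‖g r‖ := by
      rw [hQeq s hs.1]
      exact intervalIntegral.norm_integral_le_integral_norm hs.1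
    have h2 : ∫ r in (0:ℝ)..s, ‖g r‖ ≤ ∫ r in (0:ℝ)..s, 2 * ‖H r‖ * ‖Q r‖ := by
      refine intervalIntegral.integral_mono_on hs.1 ((hgint 0 s).norm)
        (((hHint 0 s).norm.const_mul 2).mul_continuousOn hQcont.norm.continuousOn) ?_
      intro r _
      rw [hgQ r]
      calc ‖(-Complex.I) • (H r * Q r) + Complex.I • (Q r * H r)‖
          ≤ ‖(-Complex.I) • (H r * Q r)‖ + ‖Complex.I • (Q r * H r)‖ := norm_add_le _ _
        _ = ‖H r * Q r‖ + ‖Q r * H r‖ := by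
            rw [norm_smul, norm_smul, norm_neg, Complex.norm_I, one_mul, one_mul]
        _ ≤ ‖H r‖ * ‖Q r‖ + ‖Q r‖ * ‖H r‖ := add_le_add (norm_mul_le _ _) (norm_mul_le _ _)
        _ = 2 * ‖H r‖ * ‖Q r‖ := by ring
    exact h1.trans h2
  have h0 : Q t = 0 := norm_eq_zero.1 (hQ0 t ⟨ht, le_refl t⟩)
  have h1 : U t * star (U t) - 1 = 0 := h0
  exact sub_eq_zero.1 h1

end UnivBound

open UnivBound in
theorem universal_bound'
    (H₁ H₂ U₁ U₂ : ℝ → E →L[ℂ] E)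
    (hH₁int : ∀ a b : ℝ, IntervalIntegrable H₁ volume a b)
    (hH₂int : ∀ a b : ℝ, IntervalIntegrable H₂ volume a b)
    (hH₁sa : ∀ t : ℝ, IsSelfAdjoint (H₁ t))
    (hH₂sa : ∀ t : ℝ, IsSelfAdjoint (H₂ t))
    (hU₁ : IsPropagator' H₁ U₁) (hU₂ : IsPropagator' H₂ U₂)
    (S : ℝ → E →L[ℂ] E)
    (hS : ∀ t : ℝ, S t = ∫ s in (0:ℝ)..t, (H₂ s - H₁ s)) :
    ∀ t : ℝ, 0 ≤ t →
      (⨆ s : Set.Icc (0:ℝ) t, ‖U₂ s - U₁ s‖)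
        ≤ (⨆ s : Set.Icc (0:ℝ) t, ‖S s‖) *
          (1 + (∫ s in (0:ℝ)..t, ‖H₁ s‖) + (∫ s in (0:ℝ)..t, ‖H₂ s‖)) := by
  intro t ht
  have hb21int : ∀ x y : ℝ, IntervalIntegrable (fun r => H₂ r - H₁ r) volume x y :=
    fun x y => (hH₂int x y).sub (hH₁int x y)
  have hScont : Continuous S := by
    have : S = fun u => ∫ r in (0:ℝ)..u, (H₂ r - H₁ r) := funext hS
    rw [this]
    exact intervalIntegral.continuous_primitive hb21int 0
  have hS0 : S 0 = 0 := by rw [hS]; simp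
  have hSeq : ∀ u : ℝ, 0 ≤ u → S u = S 0 + ∫ r in (0:ℝ)..u, (H₂ r - H₁ r) :=
    fun u _ => by rw [hS u, hS0, zero_add]
  haveI hne : Nonempty (Set.Icc (0:ℝ) t) := ⟨⟨0, le_refl 0, ht⟩⟩
  have hbdd : BddAbove (Set.range fun s : Set.Icc (0:ℝ) t => ‖S s‖) := by
    have h1 : (Set.range fun s : Set.Icc (0:ℝ) t => ‖S s‖)
        = (fun u => ‖S u‖) '' Set.Icc (0:ℝ) t := by
      ext x
      simp [Set.mem_image, Subtype.exists]
    rw [h1]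
    exact (isCompact_Icc.image_of_continuousOn hScont.norm.continuousOn).bddAbove
  set σ : ℝ := ⨆ s : Set.Icc (0:ℝ) t, ‖S s‖ with hσdef
  have hσS : ∀ r ∈ Set.Icc (0:ℝ) t, ‖S r‖ ≤ σ := fun r hr => le_ciSup hbdd ⟨r, hr⟩
  have hσ0 : 0 ≤ σ := le_trans (norm_nonneg _) (hσS 0 ⟨le_refl 0, ht⟩)
  -- auxiliary notation
  have contV : Continuous fun u => star (U₁ u) := continuous_star.comp hU₁.1
  have hKcont : Continuous fun u => star (U₁ u) * S u := contV.mul hScont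
  have ha₁int : ∀ x y : ℝ,
      IntervalIntegrable (fun r => Complex.I • (star (U₁ r) * H₁ r)) volume x y :=
    propagator_star_integrand_int hH₁int hU₁
  have hb₂int : ∀ x y : ℝ,
      IntervalIntegrable (fun r => (-Complex.I) • (H₂ r * U₂ r)) volume x y :=
    propagator_integrand_int hH₂int hU₂
  have hkint : ∀ x y : ℝ, IntervalIntegrable
      (fun r => (Complex.I • (star (U₁ r) * H₁ r)) * S r
        + star (U₁ r) * (H₂ r - H₁ r)) volume x y := fun x y =>
    ((((hH₁int x y).continuousOn_mul contV.continuousOn).smul Complex.I).mul_continuousOn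
      hScont.continuousOn).add ((hb21int x y).continuousOn_mul contV.continuousOn)
  have hstar0₁ : star (U₁ 0) = 1 := by rw [propagator_zero hU₁, star_one]
  have hKeq : ∀ u : ℝ, 0 ≤ u → star (U₁ u) * S u = star (U₁ 0) * S 0
      + ∫ r in (0:ℝ)..u, ((Complex.I • (star (U₁ r) * H₁ r)) * S r
        + star (U₁ r) * (H₂ r - H₁ r)) := by
    intro u hu
    exact prodRule (A := fun r => star (U₁ r)) (B := S)
      (a := fun r => Complex.I • (star (U₁ r) * H₁ r)) (b := fun r => H₂ r - H₁ r)
      contV hScont ha₁int hb21int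
      (fun v _ => by
        show star (U₁ v) = star (U₁ 0) + ∫ r in (0:ℝ)..v, Complex.I • (star (U₁ r) * H₁ r)
        rw [propagator_star_volterra hH₁int hH₁sa hU₁ v, hstar0₁])
      hSeq hu
  -- the bound for each s in [0, t]
  have main : ∀ s ∈ Set.Icc (0:ℝ) t, ‖U₂ s - U₁ s‖
      ≤ σ * (1 + (∫ r in (0:ℝ)..t, ‖H₁ r‖) + (∫ r in (0:ℝ)..t, ‖H₂ r‖)) := by
    intro s hs
    have hs0 : (0:ℝ) ≤ s := hs.1
    -- triple product rule
    have hG : (star (U₁ s) * S s) * U₂ s = (star (U₁ 0) * S 0) * U₂ 0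
        + ∫ r in (0:ℝ)..s, (((Complex.I • (star (U₁ r) * H₁ r)) * S r
            + star (U₁ r) * (H₂ r - H₁ r)) * U₂ r
          + (star (U₁ r) * S r) * ((-Complex.I) • (H₂ r * U₂ r))) :=
      prodRule (A := fun u => star (U₁ u) * S u) (B := U₂)
        (a := fun r => (Complex.I • (star (U₁ r) * H₁ r)) * S r
          + star (U₁ r) * (H₂ r - H₁ r))
        (b := fun r => (-Complex.I) • (H₂ r * U₂ r))
        hKcont hU₂.1 hkint hb₂int
        (fun v hv => by
          show star (U₁ v) * S v = star (U₁ 0) * S 0 + _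
          exact hKeq v hv)
        (fun v _ => by rw [propagator_volterra hU₂ v, propagator_zero hU₂]) hs0
    have hD : star (U₁ s) * U₂ s = star (U₁ 0) * U₂ 0
        + ∫ r in (0:ℝ)..s, ((Complex.I • (star (U₁ r) * H₁ r)) * U₂ r
          + star (U₁ r) * ((-Complex.I) • (H₂ r * U₂ r))) :=
      prodRule (A := fun u => star (U₁ u)) (B := U₂)
        (a := fun r => Complex.I • (star (U₁ r) * H₁ r))
        (b := fun r => (-Complex.I) • (H₂ r * U₂ r))
        contV hU₂.1 ha₁int hb₂int
        (fun v _ => by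
          show star (U₁ v) = star (U₁ 0) + ∫ r in (0:ℝ)..v, Complex.I • (star (U₁ r) * H₁ r)
          rw [propagator_star_volterra hH₁int hH₁sa hU₁ v, hstar0₁])
        (fun v _ => by rw [propagator_volterra hU₂ v, propagator_zero hU₂]) hs0
    -- pointwise algebraic identity
    have hptw : ∀ r : ℝ, (Complex.I • (star (U₁ r) * H₁ r)) * U₂ r
          + star (U₁ r) * ((-Complex.I) • (H₂ r * U₂ r))
        = ((-Complex.I) • (((Complex.I • (star (U₁ r) * H₁ r)) * S r
            + star (U₁ r) * (H₂ r - H₁ r)) * U₂ r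
          + (star (U₁ r) * S r) * ((-Complex.I) • (H₂ r * U₂ r)))
          - star (U₁ r) * (H₁ r * (S r * U₂ r)))
          + (star (U₁ r) * S r) * (H₂ r * U₂ r) := by
      intro r
      simp only [smul_mul_assoc, mul_smul_comm, mul_assoc, mul_sub, sub_mul, add_mul, mul_add,
        smul_add, smul_sub, smul_smul, neg_mul, mul_neg, Complex.I_mul_I, neg_neg, one_smul,
        neg_smul, one_mul]
      match_scalars
      all_goals first
        | ring1
        | linear_combination Complex.I_sq
        | linear_combination -Complex.I_sq
    -- integrability on [0, s]
    have hXint : IntervalIntegrable (fun r => star (U₁ r) * (H₁ r * (S r * U₂ r))) volume 0 s :=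
      ((hH₁int 0 s).mul_continuousOn (hScont.mul hU₂.1).continuousOn).continuousOn_mul
        contV.continuousOn
    have hYint : IntervalIntegrable (fun r => (star (U₁ r) * S r) * (H₂ r * U₂ r)) volume 0 s :=
      ((hH₂int 0 s).mul_continuousOn hU₂.1.continuousOn).continuousOn_mul hKcont.continuousOn
    have hkWint : IntervalIntegrable (fun r => ((Complex.I • (star (U₁ r) * H₁ r)) * S r
        + star (U₁ r) * (H₂ r - H₁ r)) * U₂ r
        + (star (U₁ r) * S r) * ((-Complex.I) • (H₂ r * U₂ r))) volume 0 s :=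
      ((hkint 0 s).mul_continuousOn hU₂.1.continuousOn).add
        ((hb₂int 0 s).continuousOn_mul hKcont.continuousOn)
    -- combine the integrals
    have hIeq : ∫ r in (0:ℝ)..s, ((Complex.I • (star (U₁ r) * H₁ r)) * U₂ r
          + star (U₁ r) * ((-Complex.I) • (H₂ r * U₂ r)))
        = ((-Complex.I) • (∫ r in (0:ℝ)..s, (((Complex.I • (star (U₁ r) * H₁ r)) * S r
            + star (U₁ r) * (H₂ r - H₁ r)) * U₂ r
            + (star (U₁ r) * S r) * ((-Complex.I) • (H₂ r * U₂ r))))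
          - ∫ r in (0:ℝ)..s, star (U₁ r) * (H₁ r * (S r * U₂ r)))
          + ∫ r in (0:ℝ)..s, (star (U₁ r) * S r) * (H₂ r * U₂ r) := by
      have hsmulint : IntervalIntegrable (fun r =>
          (-Complex.I) • (((Complex.I • (star (U₁ r) * H₁ r)) * S r
            + star (U₁ r) * (H₂ r - H₁ r)) * U₂ r
            + (star (U₁ r) * S r) * ((-Complex.I) • (H₂ r * U₂ r)))) volume 0 s :=
        hkWint.smul (-Complex.I)
      rw [intervalIntegral.integral_congr (fun r _ => hptw r),
        intervalIntegral.integral_add (hsmulint.sub hXint) hYint,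
        intervalIntegral.integral_sub hsmulint hXint,
        intervalIntegral.integral_smul]
    have hGs : ∫ r in (0:ℝ)..s, (((Complex.I • (star (U₁ r) * H₁ r)) * S r
          + star (U₁ r) * (H₂ r - H₁ r)) * U₂ r
          + (star (U₁ r) * S r) * ((-Complex.I) • (H₂ r * U₂ r)))
        = (star (U₁ s) * S s) * U₂ s := by
      have h0 : (star (U₁ 0) * S 0) * U₂ 0 = 0 := by rw [hS0]; simp
      rw [h0, zero_add] at hG
      exact hG.symm
    have hone : star (U₁ 0) * U₂ 0 = 1 := by
      rw [propagator_zero hU₁, propagator_zero hU₂, star_one, one_mul]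
    have hDval : star (U₁ s) * U₂ s - 1
        = ((-Complex.I) • ((star (U₁ s) * S s) * U₂ s)
          - ∫ r in (0:ℝ)..s, star (U₁ r) * (H₁ r * (S r * U₂ r)))
          + ∫ r in (0:ℝ)..s, (star (U₁ r) * S r) * (H₂ r * U₂ r) := by
      rw [hD, hone, hIeq, hGs]
      abel
    -- norm estimates
    have hU₁n : ∀ r : ℝ, 0 ≤ r → ‖U₁ r‖ ≤ 1 := fun r hr =>
      propagator_norm_le hH₁int hH₁sa hU₁ hr
    have hU₂n : ∀ r : ℝ, 0 ≤ r → ‖U₂ r‖ ≤ 1 := fun r hr =>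
      propagator_norm_le hH₂int hH₂sa hU₂ hr
    have hVn : ∀ r : ℝ, 0 ≤ r → ‖star (U₁ r)‖ ≤ 1 := fun r hr => by
      rw [norm_star]; exact hU₁n r hr
    have hKn : ∀ r ∈ Set.Icc (0:ℝ) t, ‖star (U₁ r) * S r‖ ≤ σ := fun r hr =>
      calc ‖star (U₁ r) * S r‖ ≤ ‖star (U₁ r)‖ * ‖S r‖ := norm_mul_le _ _
        _ ≤ 1 * σ := mul_le_mul (hVn r hr.1) (hσS r hr) (norm_nonneg _) zero_le_one
        _ = σ := one_mul σ
    have hH₁mono : (∫ r in (0:ℝ)..s, ‖H₁ r‖) ≤ ∫ r in (0:ℝ)..t, ‖H₁ r‖ := by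
      rw [← intervalIntegral.integral_add_adjacent_intervals (a := (0:ℝ)) (b := s) (c := t)
        (hH₁int 0 s).norm (hH₁int s t).norm]
      have : 0 ≤ ∫ r in s..t, ‖H₁ r‖ :=
        intervalIntegral.integral_nonneg hs.2 fun r _ => norm_nonneg _
      linarith
    have hH₂mono : (∫ r in (0:ℝ)..s, ‖H₂ r‖) ≤ ∫ r in (0:ℝ)..t, ‖H₂ r‖ := by
      rw [← intervalIntegral.integral_add_adjacent_intervals (a := (0:ℝ)) (b := s) (c := t)
        (hH₂int 0 s).norm (hH₂int s t).norm]
      have : 0 ≤ ∫ r in s..t, ‖H₂ r‖ :=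
        intervalIntegral.integral_nonneg hs.2 fun r _ => norm_nonneg _
      linarith
    have hXbound : ‖∫ r in (0:ℝ)..s, star (U₁ r) * (H₁ r * (S r * U₂ r))‖
        ≤ σ * ∫ r in (0:ℝ)..t, ‖H₁ r‖ := by
      calc ‖∫ r in (0:ℝ)..s, star (U₁ r) * (H₁ r * (S r * U₂ r))‖
          ≤ ∫ r in (0:ℝ)..s, ‖star (U₁ r) * (H₁ r * (S r * U₂ r))‖ :=
            intervalIntegral.norm_integral_le_integral_norm hs0
        _ ≤ ∫ r in (0:ℝ)..s, ‖H₁ r‖ * σ := by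
            refine intervalIntegral.integral_mono_on hs0 hXint.norm
              ((hH₁int 0 s).norm.mul_const σ) fun r hr => ?_
            have hrt : r ∈ Set.Icc (0:ℝ) t := ⟨hr.1, hr.2.trans hs.2⟩
            calc ‖star (U₁ r) * (H₁ r * (S r * U₂ r))‖
                ≤ ‖star (U₁ r)‖ * ‖H₁ r * (S r * U₂ r)‖ := norm_mul_le _ _
              _ ≤ 1 * (‖H₁ r‖ * (σ * 1)) := by
                  refine mul_le_mul (hVn r hr.1) ?_ (norm_nonneg _) zero_le_one
                  refine le_trans (norm_mul_le _ _) ?_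
                  refine mul_le_mul_of_nonneg_left ?_ (norm_nonneg _)
                  refine le_trans (norm_mul_le _ _) ?_
                  exact mul_le_mul (hσS r hrt) (hU₂n r hr.1) (norm_nonneg _) hσ0
              _ = ‖H₁ r‖ * σ := by ring
        _ = (∫ r in (0:ℝ)..s, ‖H₁ r‖) * σ := intervalIntegral.integral_mul_const _ _
        _ ≤ (∫ r in (0:ℝ)..t, ‖H₁ r‖) * σ := mul_le_mul_of_nonneg_right hH₁mono hσ0
        _ = σ * ∫ r in (0:ℝ)..t, ‖H₁ r‖ := mul_comm _ _
    have hYbound : ‖∫ r in (0:ℝ)..s, (star (U₁ r) * S r) * (H₂ r * U₂ r)‖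
        ≤ σ * ∫ r in (0:ℝ)..t, ‖H₂ r‖ := by
      calc ‖∫ r in (0:ℝ)..s, (star (U₁ r) * S r) * (H₂ r * U₂ r)‖
          ≤ ∫ r in (0:ℝ)..s, ‖(star (U₁ r) * S r) * (H₂ r * U₂ r)‖ :=
            intervalIntegral.norm_integral_le_integral_norm hs0
        _ ≤ ∫ r in (0:ℝ)..s, σ * ‖H₂ r‖ := by
            refine intervalIntegral.integral_mono_on hs0 hYint.norm
              ((hH₂int 0 s).norm.const_mul σ) fun r hr => ?_
            have hrt : r ∈ Set.Icc (0:ℝ) t := ⟨hr.1, hr.2.trans hs.2⟩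
            calc ‖(star (U₁ r) * S r) * (H₂ r * U₂ r)‖
                ≤ ‖star (U₁ r) * S r‖ * ‖H₂ r * U₂ r‖ := norm_mul_le _ _
              _ ≤ σ * (‖H₂ r‖ * 1) := by
                  refine mul_le_mul (hKn r hrt) ?_ (norm_nonneg _) hσ0
                  refine le_trans (norm_mul_le _ _) ?_
                  exact mul_le_mul_of_nonneg_left (hU₂n r hr.1) (norm_nonneg _)
              _ = σ * ‖H₂ r‖ := by ring
        _ = σ * ∫ r in (0:ℝ)..s, ‖H₂ r‖ := by
            rw [← intervalIntegral.integral_const_mul]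
        _ ≤ σ * ∫ r in (0:ℝ)..t, ‖H₂ r‖ := mul_le_mul_of_nonneg_left hH₂mono hσ0
    have hDnorm : ‖star (U₁ s) * U₂ s - 1‖
        ≤ σ * (1 + (∫ r in (0:ℝ)..t, ‖H₁ r‖) + (∫ r in (0:ℝ)..t, ‖H₂ r‖)) := by
      rw [hDval]
      have h1 : ‖(-Complex.I) • ((star (U₁ s) * S s) * U₂ s)‖ ≤ σ := by
        rw [norm_smul, norm_neg, Complex.norm_I, one_mul]
        calc ‖(star (U₁ s) * S s) * U₂ s‖ ≤ ‖star (U₁ s) * S s‖ * ‖U₂ s‖ := norm_mul_le _ _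
          _ ≤ σ * 1 := mul_le_mul (hKn s hs) (hU₂n s hs0) (norm_nonneg _) hσ0
          _ = σ := mul_one σ
      calc ‖((-Complex.I) • ((star (U₁ s) * S s) * U₂ s)
            - ∫ r in (0:ℝ)..s, star (U₁ r) * (H₁ r * (S r * U₂ r)))
            + ∫ r in (0:ℝ)..s, (star (U₁ r) * S r) * (H₂ r * U₂ r)‖
          ≤ ‖(-Complex.I) • ((star (U₁ s) * S s) * U₂ s)
            - ∫ r in (0:ℝ)..s, star (U₁ r) * (H₁ r * (S r * U₂ r))‖
            + ‖∫ r in (0:ℝ)..s, (star (U₁ r) * S r) * (H₂ r * U₂ r)‖ := norm_add_le _ _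
        _ ≤ (‖(-Complex.I) • ((star (U₁ s) * S s) * U₂ s)‖
            + ‖∫ r in (0:ℝ)..s, star (U₁ r) * (H₁ r * (S r * U₂ r))‖)
            + ‖∫ r in (0:ℝ)..s, (star (U₁ r) * S r) * (H₂ r * U₂ r)‖ :=
            add_le_add_left (norm_sub_le _ _) _
        _ ≤ (σ + σ * ∫ r in (0:ℝ)..t, ‖H₁ r‖) + σ * ∫ r in (0:ℝ)..t, ‖H₂ r‖ :=
            add_le_add (add_le_add h1 hXbound) hYbound
        _ = σ * (1 + (∫ r in (0:ℝ)..t, ‖H₁ r‖) + (∫ r in (0:ℝ)..t, ‖H₂ r‖)) := by ring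
    have hfact : U₁ s * (star (U₁ s) * U₂ s - 1) = U₂ s - U₁ s := by
      rw [mul_sub, mul_one, ← mul_assoc,
        propagator_mul_star_self hH₁int hH₁sa hU₁ hs0, one_mul]
    calc ‖U₂ s - U₁ s‖ = ‖U₁ s * (star (U₁ s) * U₂ s - 1)‖ := by rw [hfact]
      _ ≤ ‖U₁ s‖ * ‖star (U₁ s) * U₂ s - 1‖ := norm_mul_le _ _
      _ ≤ 1 * (σ * (1 + (∫ r in (0:ℝ)..t, ‖H₁ r‖) + (∫ r in (0:ℝ)..t, ‖H₂ r‖))) :=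
          mul_le_mul (hU₁n s hs0) hDnorm (norm_nonneg _) zero_le_one
      _ = σ * (1 + (∫ r in (0:ℝ)..t, ‖H₁ r‖) + (∫ r in (0:ℝ)..t, ‖H₂ r‖)) := one_mul _
  exact ciSup_le fun s => main s s.2

end UnivBoundAux

/-- Integration-by-part (universal) bound:
`‖U₂ − U₁‖_{∞,t} ≤ ‖S₂₁‖_{∞,t} (1 + ‖H₁‖_{1,t} + ‖H₂‖_{1,t})`. -/
theorem universal_bound
    (H₁ H₂ U₁ U₂ : ℝ → E →L[ℂ] E)
    (hH₁int : ∀ a b : ℝ, IntervalIntegrable H₁ volume a b)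
    (hH₂int : ∀ a b : ℝ, IntervalIntegrable H₂ volume a b)
    (hH₁sa : ∀ t : ℝ, IsSelfAdjoint (H₁ t))
    (hH₂sa : ∀ t : ℝ, IsSelfAdjoint (H₂ t))
    (hU₁ : IsPropagator H₁ U₁) (hU₂ : IsPropagator H₂ U₂)
    (S : ℝ → E →L[ℂ] E)
    (hS : ∀ t : ℝ, S t = ∫ s in (0:ℝ)..t, (H₂ s - H₁ s)) :
    ∀ t : ℝ, 0 ≤ t →
      (⨆ s : Set.Icc (0:ℝ) t, ‖U₂ s - U₁ s‖)
        ≤ (⨆ s : Set.Icc (0:ℝ) t, ‖S s‖) *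
          (1 + (∫ s in (0:ℝ)..t, ‖H₁ s‖) + (∫ s in (0:ℝ)..t, ‖H₂ s‖)) := by
  exact universal_bound' H₁ H₂ U₁ U₂ hH₁int hH₂int hH₁sa hH₂sa hU₁ hU₂ S hS
end

section
/- Divergence identity for locally integrable generators: Let H₁, H₂ : ℝ → B(ℋ) be locally integrable maps with H₁(t) and H₂(t) self-adjoint for every t, let U₁, U₂ be the propagators generated by H₁ and H₂, and let S₂₁(t) = ∫₀ᵗ (H₂(s) − H₁(s)) ds. Then for every t ≥ 0: U₂(t) − U₁(t) = −i S₂₁(t) U₂(t) − ∫₀ᵗ U₁(t) U₁(s)* (H₁(s) S₂₁(s) − S₂₁(s) H₂(s)) U₂(s) ds, where * denotes the adjoint. -/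
open MeasureTheory intervalIntegral Set

section Aux

variable {A : Type*} [NormedRing A] [NormedAlgebra ℝ A] [CompleteSpace A]

lemma my_ii_const_mul {f : ℝ → A} {a b : ℝ} (c : A) (hf : IntervalIntegrable f volume a b) :
    ∫ s in a..b, c * f s = c * ∫ s in a..b, f s :=
  ContinuousLinearMap.intervalIntegral_comp_comm (ContinuousLinearMap.mul ℝ A c) hf

lemma my_ii_mul_const {f : ℝ → A} {a b : ℝ} (c : A) (hf : IntervalIntegrable f volume a b) :
    ∫ s in a..b, f s * c = (∫ s in a..b, f s) * c :=
  ContinuousLinearMap.intervalIntegral_comp_comm ((ContinuousLinearMap.mul ℝ A).flip c) hf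

lemma my_integral_const_mul {μ : Measure ℝ} {f : ℝ → A} (c : A) (hf : Integrable f μ) :
    ∫ s, c * f s ∂μ = c * ∫ s, f s ∂μ :=
  ContinuousLinearMap.integral_comp_comm (ContinuousLinearMap.mul ℝ A c) hf

lemma my_integral_mul_const {μ : Measure ℝ} {f : ℝ → A} (c : A) (hf : Integrable f μ) :
    ∫ s, f s * c ∂μ = (∫ s, f s ∂μ) * c :=
  ContinuousLinearMap.integral_comp_comm ((ContinuousLinearMap.mul ℝ A).flip c) hf

lemma tri {p q : ℝ → A} (hp : ∀ a b : ℝ, IntervalIntegrable p volume a b)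
    (hq : ∀ a b : ℝ, IntervalIntegrable q volume a b) {t : ℝ} (ht : 0 ≤ t) :
    ∫ s in (0:ℝ)..t, p s * (∫ u in (0:ℝ)..s, q u)
      = ∫ u in (0:ℝ)..t, (∫ s in u..t, p s) * q u := by
  set I : Set ℝ := Set.Ioc (0:ℝ) t with hI
  set μ : Measure ℝ := volume.restrict I with hμ
  have hpI : Integrable p μ := (hp 0 t).1
  have hqI : Integrable q μ := (hq 0 t).1
  set F : ℝ × ℝ → A := Set.indicator {x : ℝ × ℝ | x.2 ≤ x.1} (fun x => p x.1 * q x.2) with hF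
  have hbase : AEStronglyMeasurable (fun x : ℝ × ℝ => p x.1 * q x.2) (μ.prod μ) := by
    have h1 : AEStronglyMeasurable (fun x : ℝ × ℝ => p x.1) (μ.prod μ) :=
      hpI.aestronglyMeasurable.comp_fst
    have h2 : AEStronglyMeasurable (fun x : ℝ × ℝ => q x.2) (μ.prod μ) :=
      hqI.aestronglyMeasurable.comp_snd
    exact h1.mul h2
  have hbase_int : Integrable (fun x : ℝ × ℝ => p x.1 * q x.2) (μ.prod μ) := by
    refine Integrable.mono' (hpI.norm.mul_prod hqI.norm) hbase ?_
    filter_upwards with x using norm_mul_le _ _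
  have hFint : Integrable F (μ.prod μ) :=
    hbase_int.indicator (measurableSet_le measurable_snd measurable_fst)
  have hswap : ∫ s, (∫ u, F (s, u) ∂μ) ∂μ = ∫ u, (∫ s, F (s, u) ∂μ) ∂μ := by
    apply integral_integral_swap
    exact hFint
  have hL : ∫ s in (0:ℝ)..t, p s * (∫ u in (0:ℝ)..s, q u) = ∫ s, (∫ u, F (s, u) ∂μ) ∂μ := by
    rw [integral_of_le ht]
    refine setIntegral_congr_fun measurableSet_Ioc (fun s hs => ?_)
    have h0s : (0:ℝ) ≤ s := le_of_lt hs.1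
    have : (fun u => F (s, u)) = Set.indicator (Set.Iic s) (fun u => p s * q u) := by
      funext u
      simp only [hF, Set.indicator_apply, Set.mem_setOf_eq, Set.mem_Iic]
    rw [this, MeasureTheory.integral_indicator measurableSet_Iic, hμ,
      Measure.restrict_restrict measurableSet_Iic]
    have hset : Set.Iic s ∩ I = Set.Ioc 0 s := by
      ext x
      simp only [Set.mem_inter_iff, Set.mem_Iic, hI, Set.mem_Ioc]
      exact ⟨fun ⟨h1, h2, h3⟩ => ⟨h2, h1⟩, fun ⟨h1, h2⟩ => ⟨h2, h1, h2.trans hs.2⟩⟩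
    rw [hset, integral_of_le h0s]
    exact (my_integral_const_mul (p s) (hq 0 s).1).symm
  have hR : ∫ u in (0:ℝ)..t, (∫ s in u..t, p s) * q u = ∫ u, (∫ s, F (s, u) ∂μ) ∂μ := by
    rw [integral_of_le ht]
    refine setIntegral_congr_fun measurableSet_Ioc (fun u hu => ?_)
    have : (fun s => F (s, u)) = Set.indicator (Set.Ici u) (fun s => p s * q u) := by
      funext s
      simp only [hF, Set.indicator_apply, Set.mem_setOf_eq, Set.mem_Ici]
    rw [this, MeasureTheory.integral_indicator measurableSet_Ici, hμ,
      Measure.restrict_restrict measurableSet_Ici]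
    have hset : Set.Ici u ∩ I = Set.Icc u t := by
      ext x
      simp only [Set.mem_inter_iff, Set.mem_Ici, hI, Set.mem_Ioc, Set.mem_Icc]
      exact ⟨fun ⟨h1, h2, h3⟩ => ⟨h1, h3⟩, fun ⟨h1, h2⟩ => ⟨h1, lt_of_lt_of_le hu.1 h1, h2⟩⟩
    rw [hset, integral_Icc_eq_integral_Ioc, integral_of_le hu.2]
    exact (my_integral_mul_const (q u) (hp u t).1).symm
  rw [hL, hR, hswap]

lemma prim_mul {p q P Q : ℝ → A} (hp : ∀ a b : ℝ, IntervalIntegrable p volume a b)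
    (hq : ∀ a b : ℝ, IntervalIntegrable q volume a b) {t : ℝ} (ht : 0 ≤ t)
    (hP : ∀ s ∈ Set.Icc (0:ℝ) t, P s = P 0 + ∫ u in (0:ℝ)..s, p u)
    (hQ : ∀ s ∈ Set.Icc (0:ℝ) t, Q s = Q 0 + ∫ u in (0:ℝ)..s, q u) :
    P t * Q t = P 0 * Q 0 + ∫ s in (0:ℝ)..t, (p s * Q s + P s * q s) := by
  have hicc : Set.uIcc (0:ℝ) t = Set.Icc 0 t := uIcc_of_le ht
  have cP : ContinuousOn P (Set.uIcc (0:ℝ) t) := by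
    rw [hicc]
    exact ((continuous_const.add (continuous_primitive hp 0)).continuousOn).congr hP
  have cQ : ContinuousOn Q (Set.uIcc (0:ℝ) t) := by
    rw [hicc]
    exact ((continuous_const.add (continuous_primitive hq 0)).continuousOn).congr hQ
  have iA : IntervalIntegrable (fun s => p s * Q s) volume 0 t := (hp 0 t).mul_continuousOn cQ
  have iB : IntervalIntegrable (fun s => P s * q s) volume 0 t := (hq 0 t).continuousOn_mul cP
  have cprim_q : Continuous fun s => ∫ u in (0:ℝ)..s, q u := continuous_primitive hq 0
  have cprim_p : Continuous fun s => ∫ u in (0:ℝ)..s, p u := continuous_primitive hp 0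
  have splitQ : ∫ s in (0:ℝ)..t, p s * Q s
      = (∫ s in (0:ℝ)..t, p s) * Q 0 + ∫ s in (0:ℝ)..t, p s * ∫ u in (0:ℝ)..s, q u := by
    have e1 : Set.EqOn (fun s => p s * Q s)
        (fun s => p s * Q 0 + p s * ∫ u in (0:ℝ)..s, q u) (Set.uIcc 0 t) := by
      intro s hs
      rw [hicc] at hs
      simp only
      rw [hQ s hs, mul_add]
    rw [integral_congr e1,
      integral_add ((hp 0 t).mul_continuousOn continuousOn_const)
        ((hp 0 t).mul_continuousOn cprim_q.continuousOn),
      my_ii_mul_const (Q 0) (hp 0 t)]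
  have splitP : ∫ s in (0:ℝ)..t, P s * q s
      = P 0 * (∫ s in (0:ℝ)..t, q s) + ∫ s in (0:ℝ)..t, (∫ u in (0:ℝ)..s, p u) * q s := by
    have e1 : Set.EqOn (fun s => P s * q s)
        (fun s => P 0 * q s + (∫ u in (0:ℝ)..s, p u) * q s) (Set.uIcc 0 t) := by
      intro s hs
      rw [hicc] at hs
      simp only
      rw [hP s hs, add_mul]
    rw [integral_congr e1,
      integral_add ((hq 0 t).continuousOn_mul continuousOn_const)
        ((hq 0 t).continuousOn_mul cprim_p.continuousOn),
      my_ii_const_mul (P 0) (hq 0 t)]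
  have hsub : ∀ u : ℝ, (∫ s in u..t, p s) = (∫ s in (0:ℝ)..t, p s) - ∫ s in (0:ℝ)..u, p s := by
    intro u
    rw [eq_sub_iff_add_eq, add_comm, integral_add_adjacent_intervals (hp 0 u) (hp u t)]
  have cor : (∫ s in (0:ℝ)..t, p s * (∫ u in (0:ℝ)..s, q u))
      + (∫ s in (0:ℝ)..t, (∫ u in (0:ℝ)..s, p u) * q s)
      = (∫ s in (0:ℝ)..t, p s) * (∫ s in (0:ℝ)..t, q s) := by
    have i1 : IntervalIntegrable (fun u => (∫ s in u..t, p s) * q u) volume 0 t := by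
      apply (hq 0 t).continuousOn_mul
      have : Continuous fun u => (∫ s in (0:ℝ)..t, p s) - ∫ s in (0:ℝ)..u, p s :=
        continuous_const.sub cprim_p
      exact (this.continuousOn).congr fun u _ => hsub u
    have i2 : IntervalIntegrable (fun u => (∫ s in (0:ℝ)..u, p s) * q u) volume 0 t :=
      (hq 0 t).continuousOn_mul cprim_p.continuousOn
    rw [tri hp hq ht, ← integral_add i1 i2]
    have e2 : Set.EqOn (fun u => (∫ s in u..t, p s) * q u + (∫ s in (0:ℝ)..u, p s) * q u)
        (fun u => (∫ s in (0:ℝ)..t, p s) * q u) (Set.uIcc 0 t) := by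
      intro u _
      simp only
      rw [← add_mul, add_comm, integral_add_adjacent_intervals (hp 0 u) (hp u t)]
    rw [integral_congr e2, my_ii_const_mul _ (hq 0 t)]
  rw [integral_add iA iB, splitQ, splitP, hP t ⟨ht, le_refl t⟩, hQ t ⟨ht, le_refl t⟩,
    add_mul, mul_add, mul_add, ← cor]
  abel

end Aux

section Gron
variable {B : Type*} [NormedAddCommGroup B]

lemma gronwall {h : ℝ → ℝ} (hh : ∀ a b : ℝ, IntervalIntegrable h volume a b)
    (hh0 : ∀ s, 0 ≤ h s) {φ : ℝ → B} (hφ : Continuous φ) {T : ℝ}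
    (hb : ∀ t ∈ Set.Icc (0:ℝ) T, ‖φ t‖ ≤ ∫ s in (0:ℝ)..t, h s * ‖φ s‖) :
    ∀ t ∈ Set.Icc (0:ℝ) T, φ t = 0 := by
  set g : ℝ → ℝ := fun t => ∫ s in (0:ℝ)..t, h s with hg
  have cg : Continuous g := continuous_primitive hh 0
  have gpow : ∀ n : ℕ, ∀ t : ℝ, 0 ≤ t →
      g t ^ (n + 1) = ∫ s in (0:ℝ)..t, ((n:ℝ) + 1) * (h s * g s ^ n) := by
    intro n
    induction n with
    | zero =>
      intro t ht
      simp only [pow_one, Nat.cast_zero, zero_add, pow_zero, mul_one, one_mul, hg]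
    | succ n ih =>
      intro t ht
      have hgn : ∀ a b : ℝ, IntervalIntegrable
          (fun s => ((n:ℝ) + 1) * (h s * g s ^ n)) volume a b := by
        intro a b
        have := ((hh a b).mul_continuousOn ((cg.pow n).continuousOn)).const_mul ((n:ℝ)+1)
        simpa [mul_assoc] using this
      have key := prim_mul (P := g) (Q := fun s => g s ^ (n+1)) hh hgn ht
        (fun s _ => by simp [hg])
        (fun s hs => by
          have h2 := ih s hs.1
          rw [h2]
          simp [hg])
      have e0 : g 0 = 0 := by simp [hg]
      rw [← pow_succ'] at key
      rw [key, e0]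
      simp only [zero_mul, zero_add]
      apply integral_congr
      intro s _
      simp only
      push_cast
      ring
  obtain ⟨C, hC⟩ := (isCompact_Icc (a := (0:ℝ)) (b := T)).exists_bound_of_continuousOn
    hφ.continuousOn
  have claim : ∀ n : ℕ, ∀ t ∈ Set.Icc (0:ℝ) T, ‖φ t‖ ≤ C * g t ^ n / n.factorial := by
    intro n
    induction n with
    | zero => intro t htm; simpa using hC t htm
    | succ n ih =>
      intro t htm
      have ht : (0:ℝ) ≤ t := htm.1
      have ii1 : IntervalIntegrable (fun s => h s * ‖φ s‖) volume 0 t :=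
        (hh 0 t).mul_continuousOn (hφ.norm.continuousOn)
      have ii2 : IntervalIntegrable (fun s => h s * (C * g s ^ n / n.factorial)) volume 0 t :=
        (hh 0 t).mul_continuousOn ((continuous_const.mul (cg.pow n)).div_const _).continuousOn
      have mono : ∫ s in (0:ℝ)..t, h s * ‖φ s‖
          ≤ ∫ s in (0:ℝ)..t, h s * (C * g s ^ n / n.factorial) := by
        apply integral_mono_on ht ii1 ii2
        intro s hs
        exact mul_le_mul_of_nonneg_left (ih s ⟨hs.1, hs.2.trans htm.2⟩) (hh0 s)
      have e : ∀ s : ℝ, h s * (C * g s ^ n / n.factorial)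
          = (C / (((n:ℝ) + 1) * n.factorial)) * (((n:ℝ) + 1) * (h s * g s ^ n)) := by
        intro s
        have : (n.factorial : ℝ) ≠ 0 := Nat.cast_ne_zero.mpr n.factorial_ne_zero
        field_simp
      have calc2 : ∫ s in (0:ℝ)..t, h s * (C * g s ^ n / n.factorial)
          = C * g t ^ (n+1) / (n+1).factorial := by
        rw [integral_congr (g := fun s => (C / (((n:ℝ) + 1) * n.factorial))
            * (((n:ℝ) + 1) * (h s * g s ^ n))) (fun s _ => e s),
          intervalIntegral.integral_const_mul, ← gpow n t ht]
        have hf : ((n+1).factorial : ℝ) = ((n:ℝ)+1) * n.factorial := by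
          rw [Nat.factorial_succ]
          push_cast
          ring
        rw [hf]
        have h1 : ((n:ℝ) + 1) ≠ 0 := by positivity
        have h2 : (n.factorial : ℝ) ≠ 0 := Nat.cast_ne_zero.mpr n.factorial_ne_zero
        field_simp
      calc ‖φ t‖ ≤ ∫ s in (0:ℝ)..t, h s * ‖φ s‖ := hb t htm
        _ ≤ _ := mono
        _ = _ := calc2
  intro t htm
  have hlim : Filter.Tendsto (fun n : ℕ => C * g t ^ n / n.factorial)
      Filter.atTop (nhds 0) := by
    have h1 := FloorSemiring.tendsto_pow_div_factorial_atTop (K := ℝ) (g t)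
    have h2 := h1.const_mul C
    rw [mul_zero] at h2
    convert h2 using 2 with n
    rw [mul_div_assoc]
  have : ‖φ t‖ ≤ 0 := ge_of_tendsto' hlim (fun n => claim n t htm)
  exact norm_le_zero_iff.mp this

end Gron

open MeasureTheory intervalIntegral

variable {E : Type*} [NormedAddCommGroup E] [InnerProductSpace ℂ E] [CompleteSpace E]
  [TopologicalSpace.SeparableSpace E]

lemma star_ii {f : ℝ → E →L[ℂ] E} {a b : ℝ} (hf : IntervalIntegrable f volume a b) :
    star (∫ s in a..b, f s) = ∫ s in a..b, star (f s) :=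
  ((starL' ℝ (A := E →L[ℂ] E)).toContinuousLinearMap.intervalIntegral_comp_comm hf).symm

/-- Divergence identity:
`U₂(t) − U₁(t) = −i S₂₁(t) U₂(t) − ∫₀ᵗ U₁(t) U₁(s)* (H₁(s) S₂₁(s) − S₂₁(s) H₂(s)) U₂(s) ds`. -/
theorem divergence_identity
    (H₁ H₂ U₁ U₂ : ℝ → E →L[ℂ] E)
    (hH₁int : ∀ a b : ℝ, IntervalIntegrable H₁ volume a b)
    (hH₂int : ∀ a b : ℝ, IntervalIntegrable H₂ volume a b)
    (hH₁sa : ∀ t : ℝ, IsSelfAdjoint (H₁ t))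
    (hH₂sa : ∀ t : ℝ, IsSelfAdjoint (H₂ t))
    (hU₁ : IsPropagator H₁ U₁) (hU₂ : IsPropagator H₂ U₂)
    (S : ℝ → E →L[ℂ] E)
    (hS : ∀ t : ℝ, S t = ∫ s in (0:ℝ)..t, (H₂ s - H₁ s)) :
    ∀ t : ℝ, 0 ≤ t →
      U₂ t - U₁ t
        = -(Complex.I • (S t).comp (U₂ t))
          - ∫ s in (0:ℝ)..t,
              ((U₁ t).comp (ContinuousLinearMap.adjoint (U₁ s))).comp
                (((H₁ s).comp (S s) - (S s).comp (H₂ s)).comp (U₂ s)) := by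
  obtain ⟨cU₁, hU₁e'⟩ := hU₁
  obtain ⟨cU₂, hU₂e'⟩ := hU₂
  have hU₁e : ∀ s : ℝ, U₁ s = 1 - Complex.I • ∫ u in (0:ℝ)..s, H₁ u * U₁ u := by
    simpa only [ContinuousLinearMap.mul_def] using hU₁e'
  have hU₂e : ∀ s : ℝ, U₂ s = 1 - Complex.I • ∫ u in (0:ℝ)..s, H₂ u * U₂ u := by
    simpa only [ContinuousLinearMap.mul_def] using hU₂e'
  have hU₁0 : U₁ 0 = 1 := by simpa using hU₁e 0
  have hU₂0 : U₂ 0 = 1 := by simpa using hU₂e 0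
  have hS0 : S 0 = 0 := by simpa using hS 0
  set V : ℝ → E →L[ℂ] E := fun s => star (U₁ s) with hV
  have cV : Continuous V := continuous_star.comp cU₁
  have hV0 : V 0 = 1 := by rw [hV]; simp [hU₁0]
  have cS : Continuous S := by
    rw [show S = fun u => ∫ s in (0:ℝ)..u, (H₂ s - H₁ s) from funext hS]
    exact continuous_primitive (fun a b => (hH₂int a b).sub (hH₁int a b)) 0
  -- integrability combinators
  have i_p₁ : ∀ a b : ℝ, IntervalIntegrable
      (fun s => -(Complex.I • (H₁ s * U₁ s))) volume a b := fun a b =>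
    (((hH₁int a b).mul_continuousOn cU₁.continuousOn).smul Complex.I).neg
  have i_p₂ : ∀ a b : ℝ, IntervalIntegrable
      (fun s => -(Complex.I • (H₂ s * U₂ s))) volume a b := fun a b =>
    (((hH₂int a b).mul_continuousOn cU₂.continuousOn).smul Complex.I).neg
  have i_v : ∀ a b : ℝ, IntervalIntegrable
      (fun s => Complex.I • (V s * H₁ s)) volume a b := fun a b =>
    ((hH₁int a b).continuousOn_mul cV.continuousOn).smul Complex.I
  have i_σ : ∀ a b : ℝ, IntervalIntegrable (fun s => H₂ s - H₁ s) volume a b := fun a b =>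
    (hH₂int a b).sub (hH₁int a b)
  have i_d : ∀ a b : ℝ, IntervalIntegrable
      (fun s => -(Complex.I • (H₂ s * U₂ s)) - -(Complex.I • (H₁ s * U₁ s))) volume a b :=
    fun a b => (i_p₂ a b).sub (i_p₁ a b)
  have i_n : ∀ a b : ℝ, IntervalIntegrable
      (fun s => (H₂ s - H₁ s) * U₂ s + S s * -(Complex.I • (H₂ s * U₂ s))) volume a b :=
    fun a b => ((i_σ a b).mul_continuousOn cU₂.continuousOn).add
      ((i_p₂ a b).continuousOn_mul cS.continuousOn)
  -- primitive equations
  have hU₁prim : ∀ s : ℝ, U₁ s = U₁ 0 + ∫ u in (0:ℝ)..s, -(Complex.I • (H₁ u * U₁ u)) := by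
    intro s
    rw [hU₁e s, hU₁0, intervalIntegral.integral_neg, intervalIntegral.integral_smul, ← sub_eq_add_neg]
  have hU₂prim : ∀ s : ℝ, U₂ s = U₂ 0 + ∫ u in (0:ℝ)..s, -(Complex.I • (H₂ u * U₂ u)) := by
    intro s
    rw [hU₂e s, hU₂0, intervalIntegral.integral_neg, intervalIntegral.integral_smul, ← sub_eq_add_neg]
  have hVprim : ∀ s : ℝ, V s = V 0 + ∫ u in (0:ℝ)..s, Complex.I • (V u * H₁ u) := by
    intro s
    have h1 : V s = star (U₁ 0) + star (∫ u in (0:ℝ)..s, -(Complex.I • (H₁ u * U₁ u))) := by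
      rw [hV]
      simp only
      rw [hU₁prim s, star_add]
    rw [h1, star_ii (i_p₁ 0 s)]
    congr 1
    apply integral_congr
    intro u _
    simp only [star_neg, star_smul, star_mul, Complex.star_def, Complex.conj_I,
      (hH₁sa u).star_eq, neg_smul, neg_neg, hV]
  have hSprim : ∀ s : ℝ, S s = S 0 + ∫ u in (0:ℝ)..s, (H₂ u - H₁ u) := by
    intro s
    rw [hS0, zero_add, hS s]
  -- unitarity : U₁ τ * V τ = 1 for τ ≥ 0
  have cY : Continuous (fun s => U₁ s * V s - 1) := (cU₁.mul cV).sub continuous_const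
  have i_w : ∀ a b : ℝ, IntervalIntegrable
      (fun s => -(Complex.I • (H₁ s * (U₁ s * V s - 1)))
        + Complex.I • ((U₁ s * V s - 1) * H₁ s)) volume a b := fun a b =>
    ((((hH₁int a b).mul_continuousOn cY.continuousOn).smul Complex.I).neg).add
      (((hH₁int a b).continuousOn_mul cY.continuousOn).smul Complex.I)
  have hYe : ∀ τ : ℝ, 0 ≤ τ → U₁ τ * V τ - 1
      = ∫ s in (0:ℝ)..τ, (-(Complex.I • (H₁ s * (U₁ s * V s - 1)))
        + Complex.I • ((U₁ s * V s - 1) * H₁ s)) := by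
    intro τ hτ
    have key := prim_mul (P := U₁) (Q := V)
      (p := fun s => -(Complex.I • (H₁ s * U₁ s)))
      (q := fun s => Complex.I • (V s * H₁ s))
      (i_p₁) (i_v) hτ (fun s _ => hU₁prim s) (fun s _ => hVprim s)
    rw [key, hU₁0, hV0, one_mul]
    rw [add_sub_cancel_left]
    apply integral_congr
    intro s _
    simp only [smul_mul_assoc, mul_smul_comm, neg_mul, mul_assoc, mul_sub, sub_mul,
      mul_one, one_mul, smul_sub]
    abel
  have hX : ∀ τ : ℝ, 0 ≤ τ → U₁ τ * V τ = 1 := by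
    intro τ hτ
    have hb : ∀ r ∈ Set.Icc (0:ℝ) τ, ‖U₁ r * V r - 1‖
        ≤ ∫ s in (0:ℝ)..r, (2 * ‖H₁ s‖) * ‖U₁ s * V s - 1‖ := by
      intro r hr
      rw [hYe r hr.1]
      refine (intervalIntegral.norm_integral_le_integral_norm hr.1).trans ?_
      apply integral_mono_on hr.1 (i_w 0 r).norm
        (((hH₁int 0 r).norm.const_mul 2).mul_continuousOn cY.norm.continuousOn)
      intro s _
      calc ‖-(Complex.I • (H₁ s * (U₁ s * V s - 1)))
            + Complex.I • ((U₁ s * V s - 1) * H₁ s)‖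
          ≤ ‖Complex.I • (H₁ s * (U₁ s * V s - 1))‖
            + ‖Complex.I • ((U₁ s * V s - 1) * H₁ s)‖ := by
            refine (norm_add_le _ _).trans_eq ?_
            rw [norm_neg]
        _ ≤ ‖H₁ s‖ * ‖U₁ s * V s - 1‖ + ‖U₁ s * V s - 1‖ * ‖H₁ s‖ := by
            rw [norm_smul, norm_smul, Complex.norm_I, one_mul, one_mul]
            exact add_le_add (norm_mul_le _ _) (norm_mul_le _ _)
        _ = (2 * ‖H₁ s‖) * ‖U₁ s * V s - 1‖ := by ring
    have := gronwall (h := fun s => 2 * ‖H₁ s‖)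
      (fun a b => (hH₁int a b).norm.const_mul 2)
      (fun s => by positivity) cY hb τ ⟨hτ, le_refl _⟩
    exact sub_eq_zero.mp this
  -- main derivation
  intro t ht
  simp only [← ContinuousLinearMap.mul_def, ← ContinuousLinearMap.star_eq_adjoint]
  have i_m : ∀ a b : ℝ, IntervalIntegrable
      (fun u => Complex.I • (U₁ t * (V u * H₁ u))) volume a b := fun a b =>
    ((((hH₁int a b).continuousOn_mul cV.continuousOn)).continuousOn_mul
      continuousOn_const).smul Complex.I
  have hMprim : ∀ s ∈ Set.Icc (0:ℝ) t, U₁ t * V s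
      = U₁ t * V 0 + ∫ u in (0:ℝ)..s, Complex.I • (U₁ t * (V u * H₁ u)) := by
    intro s _
    rw [hVprim s, mul_add, ← my_ii_const_mul (U₁ t) (i_v 0 s)]
    congr 1
    apply integral_congr
    intro u _
    simp only [mul_smul_comm]
  have hDprim : ∀ s ∈ Set.Icc (0:ℝ) t, U₂ s - U₁ s
      = (U₂ 0 - U₁ 0) + ∫ u in (0:ℝ)..s,
        (-(Complex.I • (H₂ u * U₂ u)) - -(Complex.I • (H₁ u * U₁ u))) := by
    intro s _
    rw [integral_sub (i_p₂ 0 s) (i_p₁ 0 s)]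
    rw [hU₂prim s, hU₁prim s]
    abel
  have star1 := prim_mul (P := fun s => U₁ t * V s) (Q := fun s => U₂ s - U₁ s)
    (p := fun u => Complex.I • (U₁ t * (V u * H₁ u)))
    (q := fun u => -(Complex.I • (H₂ u * U₂ u)) - -(Complex.I • (H₁ u * U₁ u)))
    i_m i_d ht hMprim hDprim
  have hNprim : ∀ s ∈ Set.Icc (0:ℝ) t, S s * U₂ s
      = S 0 * U₂ 0 + ∫ u in (0:ℝ)..s,
        ((H₂ u - H₁ u) * U₂ u + S u * -(Complex.I • (H₂ u * U₂ u))) := by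
    intro s hs
    exact prim_mul (P := S) (Q := U₂) (p := fun u => H₂ u - H₁ u)
      (q := fun u => -(Complex.I • (H₂ u * U₂ u))) i_σ i_p₂ hs.1
      (fun u _ => hSprim u) (fun u _ => hU₂prim u)
  have star2 := prim_mul (P := fun s => U₁ t * V s) (Q := fun s => S s * U₂ s)
    (p := fun u => Complex.I • (U₁ t * (V u * H₁ u)))
    (q := fun u => (H₂ u - H₁ u) * U₂ u + S u * -(Complex.I • (H₂ u * U₂ u)))
    i_m i_n ht hMprim hNprim
  have i_G : IntervalIntegrable
      (fun s => U₁ t * (V s * ((H₂ s - H₁ s) * U₂ s))) volume 0 t :=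
    (((i_σ 0 t).mul_continuousOn cU₂.continuousOn).continuousOn_mul
      cV.continuousOn).continuousOn_mul continuousOn_const
  have i_B : IntervalIntegrable
      (fun s => (U₁ t * V s) * ((H₁ s * S s - S s * H₂ s) * U₂ s)) volume 0 t :=
    ((((hH₁int 0 t).mul_continuousOn cS.continuousOn).sub
      ((hH₂int 0 t).continuousOn_mul cS.continuousOn)).mul_continuousOn
      cU₂.continuousOn).continuousOn_mul (continuous_const.mul cV).continuousOn
  have e1 : U₂ t - U₁ t
      = -(Complex.I • ∫ s in (0:ℝ)..t, U₁ t * (V s * ((H₂ s - H₁ s) * U₂ s))) := by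
    rw [hX t ht, one_mul, hU₂0, hU₁0, sub_self, mul_zero, zero_add] at star1
    rw [star1, ← intervalIntegral.integral_smul, ← intervalIntegral.integral_neg]
    apply integral_congr
    intro s _
    simp only [smul_mul_assoc, mul_smul_comm, mul_assoc, mul_sub, sub_mul, mul_add, add_mul,
      mul_neg, neg_mul, smul_sub, smul_add, smul_neg]
    abel
  have e2 : S t * U₂ t
      = Complex.I • (∫ s in (0:ℝ)..t, (U₁ t * V s) * ((H₁ s * S s - S s * H₂ s) * U₂ s))
        + ∫ s in (0:ℝ)..t, U₁ t * (V s * ((H₂ s - H₁ s) * U₂ s)) := by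
    rw [hX t ht, one_mul, hS0, zero_mul, mul_zero, zero_add] at star2
    have hsplit : ∫ s in (0:ℝ)..t,
        (Complex.I • ((U₁ t * V s) * ((H₁ s * S s - S s * H₂ s) * U₂ s))
          + U₁ t * (V s * ((H₂ s - H₁ s) * U₂ s)))
        = Complex.I • (∫ s in (0:ℝ)..t, (U₁ t * V s) * ((H₁ s * S s - S s * H₂ s) * U₂ s))
          + ∫ s in (0:ℝ)..t, U₁ t * (V s * ((H₂ s - H₁ s) * U₂ s)) := by
      have i_IB : IntervalIntegrable
          (fun s => Complex.I • ((U₁ t * V s) * ((H₁ s * S s - S s * H₂ s) * U₂ s)))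
          volume 0 t := i_B.smul Complex.I
      rw [intervalIntegral.integral_add i_IB i_G, intervalIntegral.integral_smul]
    rw [star2, ← hsplit]
    apply integral_congr
    intro s _
    simp only [smul_mul_assoc, mul_smul_comm, mul_assoc, mul_sub, sub_mul, mul_add, add_mul,
      mul_neg, neg_mul, smul_sub, smul_add, smul_neg]
    abel
  rw [e1, e2, smul_add, smul_smul, Complex.I_mul_I, neg_one_smul]
  abel
end

section
/- Rotating-frame bound: Let H₀, H₁, H₂ : ℝ → B(ℋ) be locally integrable maps with pointwise self-adjoint values, let U₀, U₁, U₂ be the propagators generated by H₀, H₁, H₂, and define the rotating-frame action Ŝ₂₁(t) = ∫₀ᵗ U₀(s)* (H₂(s) − H₁(s)) U₀(s) ds. Then for every t ≥ 0 one has ‖U₂ − U₁‖_{∞,t} ≤ ‖Ŝ₂₁‖_{∞,t} · (1 + ‖H₁ − H₀‖_{1,t} + ‖H₂ − H₀‖_{1,t}). -/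
open MeasureTheory intervalIntegral

variable {E : Type*} [NormedAddCommGroup E] [InnerProductSpace ℂ E] [CompleteSpace E]
  [TopologicalSpace.SeparableSpace E]

set_option linter.unusedSectionVars false
set_option maxHeartbeats 1000000

section Bilin

variable {𝕜 : Type*} [RCLike 𝕜]
variable {F G K : Type*}
  [NormedAddCommGroup F] [NormedSpace 𝕜 F] [NormedSpace ℝ F]
  [NormedAddCommGroup G] [NormedSpace 𝕜 G] [NormedSpace ℝ G]
  [NormedAddCommGroup K] [NormedSpace 𝕜 K] [NormedSpace ℝ K]
  [CompleteSpace F] [CompleteSpace G] [CompleteSpace K]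

lemma II_bilin (L : F →L[𝕜] G →L[𝕜] K) {a : ℝ → F} {c : ℝ → G} {x y : ℝ}
    (ha : IntervalIntegrable a volume x y) (hc : Continuous c) :
    IntervalIntegrable (fun s => L (a s) (c s)) volume x y := by
  obtain ⟨C, hC⟩ : ∃ C, ∀ s ∈ Set.uIcc x y, ‖c s‖ ≤ C :=
    isCompact_uIcc.exists_bound_of_continuousOn hc.continuousOn
  rw [intervalIntegrable_iff] at ha ⊢
  refine Integrable.mono' ((ha.norm.const_mul (‖L‖ * C))) ?_ ?_
  · exact L.continuous₂.comp_aestronglyMeasurable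
      (ha.aestronglyMeasurable.prodMk (hc.aestronglyMeasurable.restrict))
  · filter_upwards [ae_restrict_mem measurableSet_uIoc] with s hs
    calc ‖L (a s) (c s)‖ ≤ ‖L‖ * ‖a s‖ * ‖c s‖ := L.le_opNorm₂ _ _
    _ ≤ ‖L‖ * ‖a s‖ * C := by
        refine mul_le_mul_of_nonneg_left (hC s (Set.uIoc_subset_uIcc hs)) ?_
        positivity
    _ = ‖L‖ * C * ‖a s‖ := by ring

lemma swap_triangle (L : F →L[𝕜] G →L[𝕜] K) {a : ℝ → F} {b : ℝ → G}
    (ha : ∀ x y : ℝ, IntervalIntegrable a volume x y)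
    (hb : ∀ x y : ℝ, IntervalIntegrable b volume x y)
    {t : ℝ} (ht : 0 ≤ t) :
    ∫ s in (0:ℝ)..t, L (a s) (∫ u in s..t, b u)
      = ∫ u in (0:ℝ)..t, L (∫ s in (0:ℝ)..u, a s) (b u) := by
  set g : ℝ × ℝ → K := fun q => {q : ℝ × ℝ | q.1 < q.2}.indicator
    (fun q => L (a q.1) (b q.2)) q with hg
  have hmeas_set : MeasurableSet {q : ℝ × ℝ | q.1 < q.2} :=
    measurableSet_lt measurable_fst measurable_snd
  set μ := volume.restrict (Set.Ioc (0:ℝ) t) with hμ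
  have hbase : AEStronglyMeasurable (fun q : ℝ × ℝ => L (a q.1) (b q.2)) (μ.prod μ) :=
    L.continuous₂.comp_aestronglyMeasurable
      ((((ha 0 t).1.aestronglyMeasurable).comp_fst).prodMk
        (((hb 0 t).1.aestronglyMeasurable).comp_snd))
  have hgint : Integrable g (μ.prod μ) := by
    refine Integrable.mono' (((((ha 0 t).1.norm).mul_prod ((hb 0 t).1.norm)).const_mul ‖L‖))
      (hbase.indicator hmeas_set) ?_
    refine Filter.Eventually.of_forall fun q => ?_
    calc ‖g q‖ ≤ ‖L (a q.1) (b q.2)‖ := norm_indicator_le_norm_self _ _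
    _ ≤ ‖L‖ * ‖a q.1‖ * ‖b q.2‖ := L.le_opNorm₂ _ _
    _ = ‖L‖ * (‖a q.1‖ * ‖b q.2‖) := by ring
  have swap := MeasureTheory.integral_integral_swap (f := fun s u => g (s, u)) hgint
  have hL : (∫ s in (0:ℝ)..t, L (a s) (∫ u in s..t, b u))
      = ∫ s, (∫ u, g (s, u) ∂μ) ∂μ := by
    rw [intervalIntegral.integral_of_le ht]
    refine setIntegral_congr_ae measurableSet_Ioc ?_
    refine Filter.Eventually.of_forall fun s hs => ?_
    have h1 : ∀ u : ℝ, g (s, u) = (Set.Ioi s).indicator (fun u => L (a s) (b u)) u := by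
      intro u
      by_cases h : s < u <;> simp [hg, Set.indicator, h]
    calc L (a s) (∫ u in s..t, b u)
        = L (a s) (∫ u in Set.Ioc s t, b u) := by
          rw [intervalIntegral.integral_of_le hs.2]
      _ = ∫ u in Set.Ioc s t, L (a s) (b u) := ((L (a s)).integral_comp_comm (hb s t).1).symm
      _ = ∫ u in Set.Ioc 0 t ∩ Set.Ioi s, L (a s) (b u) := by
          rw [Set.Ioc_inter_Ioi, max_eq_right hs.1.le]
      _ = ∫ u, (Set.Ioi s).indicator (fun u => L (a s) (b u)) u ∂μ := by
          rw [hμ, setIntegral_indicator measurableSet_Ioi]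
      _ = ∫ u, g (s, u) ∂μ := by simp_rw [h1]
  have hR : (∫ u in (0:ℝ)..t, L (∫ s in (0:ℝ)..u, a s) (b u))
      = ∫ u, (∫ s, g (s, u) ∂μ) ∂μ := by
    rw [intervalIntegral.integral_of_le ht]
    refine setIntegral_congr_ae measurableSet_Ioc ?_
    refine Filter.Eventually.of_forall fun u hu => ?_
    have h1 : ∀ s : ℝ, g (s, u) = (Set.Iio u).indicator (fun s => L (a s) (b u)) s := by
      intro s
      by_cases h : s < u <;> simp [hg, Set.indicator, h]
    have h2 : Set.Ioc (0:ℝ) t ∩ Set.Iio u = Set.Ioo 0 u := by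
      ext z
      simp only [Set.mem_inter_iff, Set.mem_Ioc, Set.mem_Iio, Set.mem_Ioo]
      exact ⟨fun h => ⟨h.1.1, h.2⟩, fun h => ⟨⟨h.1, h.2.le.trans hu.2⟩, h.2⟩⟩
    calc L (∫ s in (0:ℝ)..u, a s) (b u)
        = L (∫ s in Set.Ioc 0 u, a s) (b u) := by
          rw [intervalIntegral.integral_of_le hu.1.le]
      _ = L.flip (b u) (∫ s in Set.Ioc 0 u, a s) := rfl
      _ = ∫ s in Set.Ioc 0 u, L (a s) (b u) := ((L.flip (b u)).integral_comp_comm (ha 0 u).1).symm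
      _ = ∫ s in Set.Ioo 0 u, L (a s) (b u) := by
          rw [integral_Ioc_eq_integral_Ioo]
      _ = ∫ s in Set.Ioc 0 t ∩ Set.Iio u, L (a s) (b u) := by rw [h2]
      _ = ∫ s, (Set.Iio u).indicator (fun s => L (a s) (b u)) s ∂μ := by
          rw [hμ, setIntegral_indicator measurableSet_Iio]
      _ = ∫ s, g (s, u) ∂μ := by simp_rw [h1]
  rw [hL, hR, swap]

lemma integral_prod_rule (L : F →L[𝕜] G →L[𝕜] K) {a : ℝ → F} {b : ℝ → G}
    {A : ℝ → F} {B : ℝ → G} {A₀ : F} {B₀ : G}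
    (ha : ∀ x y : ℝ, IntervalIntegrable a volume x y)
    (hb : ∀ x y : ℝ, IntervalIntegrable b volume x y)
    (hA : ∀ u : ℝ, 0 ≤ u → A u = A₀ + ∫ s in (0:ℝ)..u, a s)
    (hB : ∀ u : ℝ, 0 ≤ u → B u = B₀ + ∫ s in (0:ℝ)..u, b s)
    {t : ℝ} (ht : 0 ≤ t) :
    L (A t) (B t) = L A₀ B₀ + ∫ s in (0:ℝ)..t, (L (a s) (B s) + L (A s) (b s)) := by
  set Ap : ℝ → F := fun u => ∫ s in (0:ℝ)..u, a s with hAp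
  set Bp : ℝ → G := fun u => ∫ s in (0:ℝ)..u, b s with hBp
  have hApc : Continuous Ap := intervalIntegral.continuous_primitive ha 0
  have hBpc : Continuous Bp := intervalIntegral.continuous_primitive hb 0
  have htail : ∀ s : ℝ, (∫ u in s..t, b u) = Bp t - Bp s := fun s =>
    eq_sub_of_add_eq' (integral_add_adjacent_intervals (hb 0 s) (hb s t))
  have htailc : Continuous fun s => ∫ u in s..t, b u := by
    simp_rw [htail]; exact continuous_const.sub hBpc
  -- interval integrability facts
  have iaB0 : IntervalIntegrable (fun s => L (a s) B₀) volume 0 t :=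
    II_bilin L (ha 0 t) continuous_const
  have iaBp : IntervalIntegrable (fun s => L (a s) (Bp s)) volume 0 t :=
    II_bilin L (ha 0 t) hBpc
  have ibA0 : IntervalIntegrable (fun s => L A₀ (b s)) volume 0 t := by
    simpa using II_bilin L.flip (hb 0 t) (continuous_const (y := A₀))
  have ibAp : IntervalIntegrable (fun s => L (Ap s) (b s)) volume 0 t := by
    simpa using II_bilin L.flip (hb 0 t) hApc
  have iaTail : IntervalIntegrable (fun s => L (a s) (∫ u in s..t, b u)) volume 0 t :=
    II_bilin L (ha 0 t) htailc
  -- replace A, B by their primitive forms inside the integral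
  have hcong : (∫ s in (0:ℝ)..t, (L (a s) (B s) + L (A s) (b s)))
      = ∫ s in (0:ℝ)..t, (L (a s) (B₀ + Bp s) + L (A₀ + Ap s) (b s)) := by
    refine intervalIntegral.integral_congr fun s hs => ?_
    rw [Set.uIcc_of_le ht] at hs
    rw [hA s hs.1, hB s hs.1]
  rw [hA t ht, hB t ht, hcong]
  -- basic transfers of the continuous linear map through integrals
  have e1 : (∫ s in (0:ℝ)..t, L (a s) B₀) = L (Ap t) B₀ := by
    simp only [hAp]; simpa using ((L.flip B₀).intervalIntegral_comp_comm (ha 0 t))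
  have e2 : (∫ s in (0:ℝ)..t, L A₀ (b s)) = L A₀ (Bp t) := by
    simp only [hBp]; exact ((L A₀).intervalIntegral_comp_comm (hb 0 t))
  have e3 : L (Ap t) (Bp t) = (∫ s in (0:ℝ)..t, L (a s) (Bp s))
      + ∫ s in (0:ℝ)..t, L (Ap s) (b s) := by
    have e3a : L (Ap t) (Bp t) = ∫ s in (0:ℝ)..t, L (a s) (Bp t) := by
      conv_lhs => rw [hAp]
      simpa using ((L.flip (Bp t)).intervalIntegral_comp_comm (ha 0 t)).symm
    have e3b : (∫ s in (0:ℝ)..t, L (a s) (Bp t))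
        = ∫ s in (0:ℝ)..t, (L (a s) (Bp s) + L (a s) (∫ u in s..t, b u)) := by
      refine intervalIntegral.integral_congr fun s hs => ?_
      rw [htail s]
      simp [map_sub, map_add]
    have e3c := swap_triangle L ha hb ht
    rw [e3a, e3b, intervalIntegral.integral_add iaBp iaTail, e3c]
  -- expand the integrand and split the integral
  have hsplit : (∫ s in (0:ℝ)..t, (L (a s) (B₀ + Bp s) + L (A₀ + Ap s) (b s)))
      = ((∫ s in (0:ℝ)..t, L (a s) B₀) + ∫ s in (0:ℝ)..t, L (a s) (Bp s))
        + ((∫ s in (0:ℝ)..t, L A₀ (b s)) + ∫ s in (0:ℝ)..t, L (Ap s) (b s)) := by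
    rw [← intervalIntegral.integral_add iaB0 iaBp, ← intervalIntegral.integral_add ibA0 ibAp,
      ← intervalIntegral.integral_add (iaB0.add iaBp) (ibA0.add ibAp)]
    refine intervalIntegral.integral_congr fun s hs => ?_
    simp [map_add, ContinuousLinearMap.add_apply]
  have expand : L (A₀ + Ap t) (B₀ + Bp t)
      = L A₀ B₀ + L A₀ (Bp t) + L (Ap t) B₀ + L (Ap t) (Bp t) := by
    simp only [map_add, ContinuousLinearMap.add_apply]
    abel
  rw [hsplit, e1, e2, expand, e3]
  abel

end Bilin

section Gronwall

lemma pow_primitive {h : ℝ → ℝ} (hh : ∀ x y : ℝ, IntervalIntegrable h volume x y) :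
    ∀ n : ℕ, ∀ t : ℝ, 0 ≤ t →
      (∫ s in (0:ℝ)..t, h s) ^ (n + 1)
        = ∫ s in (0:ℝ)..t, h s * (((n : ℝ) + 1) * (∫ u in (0:ℝ)..s, h u) ^ n) := by
  set g : ℝ → ℝ := fun u => ∫ s in (0:ℝ)..u, h s with hg
  have hgc : Continuous g := intervalIntegral.continuous_primitive hh 0
  intro n
  induction n with
  | zero => intro t ht; simpa using rfl
  | succ n ih =>
    intro t ht
    push_cast
    have hb : ∀ x y : ℝ, IntervalIntegrable
        (fun s => h s * (((n : ℝ) + 1) * g s ^ n)) volume x y := by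
      intro x y
      have := II_bilin (ContinuousLinearMap.mul ℝ ℝ) (hh x y)
        ((continuous_const.mul (hgc.pow n)) : Continuous fun s => ((n : ℝ) + 1) * g s ^ n)
      simpa using this
    have key := integral_prod_rule (ContinuousLinearMap.mul ℝ ℝ)
      (A := g) (B := fun u => g u ^ (n + 1)) (A₀ := 0) (B₀ := 0)
      hh hb (fun u hu => by simp [hg]) (fun u hu => by simpa using ih u hu) ht
    simp only [ContinuousLinearMap.mul_apply'] at key
    calc g t ^ (n + 1 + 1) = g t * g t ^ (n + 1) := by ring
    _ = 0 * 0 + ∫ s in (0:ℝ)..t,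
          (h s * g s ^ (n + 1) + g s * (h s * (((n : ℝ) + 1) * g s ^ n))) := key
    _ = ∫ s in (0:ℝ)..t, h s * (((n : ℝ) + 1 + 1) * g s ^ (n + 1)) := by
        rw [zero_mul, zero_add]
        refine intervalIntegral.integral_congr fun s hs => ?_
        push_cast
        ring

lemma gronwall_zero {δ h : ℝ → ℝ} (hδc : Continuous δ) (hδ0 : ∀ s, 0 ≤ δ s)
    (hh : ∀ x y : ℝ, IntervalIntegrable h volume x y) (hh0 : ∀ s, 0 ≤ h s)
    {T : ℝ} (hT : 0 ≤ T)
    (hle : ∀ t ∈ Set.Icc (0:ℝ) T, δ t ≤ ∫ s in (0:ℝ)..t, h s * δ s) :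
    ∀ t ∈ Set.Icc (0:ℝ) T, δ t = 0 := by
  set g : ℝ → ℝ := fun u => ∫ s in (0:ℝ)..u, h s with hg
  have hgc : Continuous g := intervalIntegral.continuous_primitive hh 0
  obtain ⟨M, hM⟩ : ∃ M, ∀ t ∈ Set.Icc (0:ℝ) T, ‖δ t‖ ≤ M :=
    isCompact_Icc.exists_bound_of_continuousOn hδc.continuousOn
  have hMδ : ∀ t ∈ Set.Icc (0:ℝ) T, δ t ≤ M := fun t htt =>
    (le_abs_self _).trans (by simpa [Real.norm_eq_abs] using hM t htt)
  have hM0 : 0 ≤ M := le_trans (hδ0 0) (hMδ 0 ⟨le_refl _, hT⟩)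
  have hg0 : ∀ t ∈ Set.Icc (0:ℝ) T, 0 ≤ g t := fun t htt =>
    intervalIntegral.integral_nonneg htt.1 (fun u _ => hh0 u)
  have hgmono : ∀ t ∈ Set.Icc (0:ℝ) T, g t ≤ g T := fun t htt =>
    intervalIntegral.integral_mono_interval le_rfl htt.1 htt.2
      (Filter.Eventually.of_forall hh0) (hh 0 T)
  have claim : ∀ n : ℕ, ∀ t ∈ Set.Icc (0:ℝ) T, δ t ≤ M * g t ^ n / n.factorial := by
    intro n
    induction n with
    | zero => intro t htt; simp only [pow_zero, Nat.factorial_zero]; simpa using hMδ t htt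
    | succ n ih =>
      intro t htt
      have hIδ : IntervalIntegrable (fun s => h s * δ s) volume 0 t := by
        simpa using II_bilin (ContinuousLinearMap.mul ℝ ℝ) (hh 0 t) hδc
      have hIg : IntervalIntegrable (fun s => h s * (M * g s ^ n / n.factorial)) volume 0 t := by
        simpa using II_bilin (ContinuousLinearMap.mul ℝ ℝ) (hh 0 t)
          ((continuous_const.mul (hgc.pow n)).div_const _ :
            Continuous fun s => M * g s ^ n / n.factorial)
      have step1 : δ t ≤ ∫ s in (0:ℝ)..t, h s * (M * g s ^ n / n.factorial) := by
        refine (hle t htt).trans ?_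
        refine intervalIntegral.integral_mono_on htt.1 hIδ hIg fun s hs => ?_
        have hsT : s ∈ Set.Icc (0:ℝ) T := ⟨hs.1, hs.2.trans htt.2⟩
        exact mul_le_mul_of_nonneg_left (ih s hsT) (hh0 s)
      have hfact : ((n + 1).factorial : ℝ) = ((n : ℝ) + 1) * n.factorial := by
        exact_mod_cast Nat.factorial_succ n
      have step2 : (∫ s in (0:ℝ)..t, h s * (M * g s ^ n / n.factorial))
          = M * g t ^ (n + 1) / (n + 1).factorial := by
        have hp := pow_primitive hh n t htt.1
        have hc : (∫ s in (0:ℝ)..t, h s * (M * g s ^ n / n.factorial))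
            = (M / (n + 1).factorial) *
              ∫ s in (0:ℝ)..t, h s * (((n : ℝ) + 1) * g s ^ n) := by
          rw [← intervalIntegral.integral_const_mul]
          refine intervalIntegral.integral_congr fun s hs => ?_
          have h1 : (n.factorial : ℝ) ≠ 0 := by positivity
          have h2 : ((n + 1).factorial : ℝ) ≠ 0 := by positivity
          field_simp [hfact]
          rw [hfact]
          ring
        rw [hc, ← hp]
        ring
      exact step1.trans_eq step2
  intro t htt
  refine le_antisymm ?_ (hδ0 t)
  have hlim : Filter.Tendsto (fun n : ℕ => M * g T ^ n / n.factorial)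
      Filter.atTop (nhds 0) := by
    have := FloorSemiring.tendsto_pow_div_factorial_atTop (g T)
    have h2 := this.const_mul M
    simpa [mul_div_assoc] using h2
  refine ge_of_tendsto' hlim fun n => ?_
  calc δ t ≤ M * g t ^ n / n.factorial := claim n t htt
  _ ≤ M * g T ^ n / n.factorial := by
      have h1 : 0 ≤ g t := hg0 t htt
      have h2 : g t ≤ g T := hgmono t htt
      gcongr

end Gronwall

section Propagator

lemma star_intervalIntegral (f : ℝ → E →L[ℂ] E) (x y : ℝ) :
    star (∫ s in x..y, f s) = ∫ s in x..y, star (f s) := by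
  rw [intervalIntegral_eq_integral_uIoc, intervalIntegral_eq_integral_uIoc]
  have h := (starL' ℝ (A := E →L[ℂ] E)).integral_comp_comm
    (μ := volume.restrict (Set.uIoc x y)) f
  calc star ((if x ≤ y then (1:ℝ) else -1) • ∫ s in Set.uIoc x y, f s)
      = (if x ≤ y then (1:ℝ) else -1) • star (∫ s in Set.uIoc x y, f s) := by
        rw [star_smul, star_trivial]
    _ = _ := by
        rw [show star (∫ s in Set.uIoc x y, f s) = ∫ s in Set.uIoc x y, star (f s) from h.symm]

variable {H U : ℝ → E →L[ℂ] E}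

lemma prop_HU_II (hH : ∀ x y : ℝ, IntervalIntegrable H volume x y)
    (hU : IsPropagator H U) (x y : ℝ) :
    IntervalIntegrable (fun s => (H s).comp (U s)) volume x y := by
  simpa using II_bilin (ContinuousLinearMap.compL ℂ E E E) (hH x y) hU.1

lemma prop_rep (hH : ∀ x y : ℝ, IntervalIntegrable H volume x y) (hU : IsPropagator H U)
    (t : ℝ) :
    U t = 1 + ∫ s in (0:ℝ)..t, (-Complex.I) • ((H s).comp (U s)) := by
  rw [hU.2 t]
  simp [intervalIntegral.integral_smul, sub_eq_add_neg]

lemma prop_star_cont (hU : IsPropagator H U) : Continuous fun s => star (U s) :=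
  continuous_star.comp hU.1

lemma prop_star_rep (hH : ∀ x y : ℝ, IntervalIntegrable H volume x y)
    (hsa : ∀ t : ℝ, IsSelfAdjoint (H t)) (hU : IsPropagator H U) (t : ℝ) :
    star (U t) = 1 + ∫ s in (0:ℝ)..t, Complex.I • ((star (U s)).comp (H s)) := by
  have h1 := congrArg star (prop_rep hH hU t)
  rw [star_add, star_one, star_intervalIntegral] at h1
  rw [h1]
  congr 1
  refine intervalIntegral.integral_congr fun s _ => ?_
  calc star ((-Complex.I) • ((H s).comp (U s)))
      = star (-Complex.I) • star ((H s) * (U s)) := by rw [ContinuousLinearMap.mul_def, star_smul]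
    _ = Complex.I • (star (U s) * star (H s)) := by
        rw [star_mul]
        norm_num [Complex.star_def, Complex.conj_I]
    _ = Complex.I • ((star (U s)).comp (H s)) := by
        rw [ContinuousLinearMap.mul_def, (hsa s).star_eq]

lemma prop_a_II (hH : ∀ x y : ℝ, IntervalIntegrable H volume x y) (hU : IsPropagator H U)
    (x y : ℝ) :
    IntervalIntegrable (fun s => Complex.I • ((star (U s)).comp (H s))) volume x y := by
  have := II_bilin (ContinuousLinearMap.compL ℂ E E E).flip (hH x y) (prop_star_cont hU)
  exact this.smul Complex.I

lemma prop_isometry (hH : ∀ x y : ℝ, IntervalIntegrable H volume x y)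
    (hsa : ∀ t : ℝ, IsSelfAdjoint (H t)) (hU : IsPropagator H U) {t : ℝ} (ht : 0 ≤ t) :
    (star (U t)).comp (U t) = 1 := by
  have key := integral_prod_rule (ContinuousLinearMap.compL ℂ E E E)
    (A := fun s => star (U s)) (B := U) (A₀ := 1) (B₀ := 1)
    (prop_a_II hH hU)
    (b := fun s => (-Complex.I) • ((H s).comp (U s)))
    (fun x y => by exact (prop_HU_II hH hU x y).smul (-Complex.I))
    (fun u _ => prop_star_rep hH hsa hU u)
    (fun u _ => prop_rep hH hU u) ht
  simp only [ContinuousLinearMap.compL_apply] at key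
  have hz : ∀ s : ℝ, (Complex.I • ((star (U s)).comp (H s))).comp (U s)
      + (star (U s)).comp ((-Complex.I) • ((H s).comp (U s))) = 0 := by
    intro s
    simp [ContinuousLinearMap.smul_comp, ContinuousLinearMap.comp_smul,
      ContinuousLinearMap.comp_assoc]
  rw [key]
  have hzero : (∫ s in (0:ℝ)..t, ((Complex.I • ((star (U s)).comp (H s))).comp (U s)
      + (star (U s)).comp ((-Complex.I) • ((H s).comp (U s)))))
      = ∫ _ in (0:ℝ)..t, (0 : E →L[ℂ] E) :=
    intervalIntegral.integral_congr fun s _ => hz s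
  rw [hzero]
  simp [← ContinuousLinearMap.mul_def]

lemma isometry_norm_apply {T : E →L[ℂ] E} (h : (star T).comp T = 1) (x : E) :
    ‖T x‖ = ‖x‖ := by
  have hTx : (star T) (T x) = x := by
    rw [← ContinuousLinearMap.comp_apply, h, ContinuousLinearMap.one_apply]
  have h1 : (inner ℂ (T x) (T x) : ℂ) = inner ℂ x x := by
    rw [← ContinuousLinearMap.adjoint_inner_left, ← ContinuousLinearMap.star_eq_adjoint, hTx]
  have h2 := h1
  rw [inner_self_eq_norm_sq_to_K (𝕜 := ℂ), inner_self_eq_norm_sq_to_K (𝕜 := ℂ)] at h2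
  have h3 : ‖T x‖ ^ 2 = ‖x‖ ^ 2 := by exact_mod_cast h2
  nlinarith [norm_nonneg (T x), norm_nonneg x]

lemma isometry_norm_le {T : E →L[ℂ] E} (h : (star T).comp T = 1) : ‖T‖ ≤ 1 :=
  T.opNorm_le_bound zero_le_one fun x => by rw [isometry_norm_apply h x, one_mul]

lemma prop_D_cont (hU : IsPropagator H U) :
    Continuous fun s => (U s).comp (star (U s)) - 1 :=
  (hU.1.clm_comp (prop_star_cont hU)).sub continuous_const

lemma prop_coisometry (hH : ∀ x y : ℝ, IntervalIntegrable H volume x y)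
    (hsa : ∀ t : ℝ, IsSelfAdjoint (H t)) (hU : IsPropagator H U) {t : ℝ} (ht : 0 ≤ t) :
    (U t).comp (star (U t)) = 1 := by
  set D : ℝ → E →L[ℂ] E := fun s => (U s).comp (star (U s)) - 1 with hD
  set q : ℝ → E →L[ℂ] E := fun s =>
    ((-Complex.I) • ((H s).comp (U s))).comp (star (U s))
      + (U s).comp (Complex.I • ((star (U s)).comp (H s))) with hq
  have hqII : ∀ x y : ℝ, IntervalIntegrable q volume x y := by
    intro x y
    have h1 : IntervalIntegrable
        (fun s => ((-Complex.I) • ((H s).comp (U s))).comp (star (U s))) volume x y := by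
      simpa using II_bilin (ContinuousLinearMap.compL ℂ E E E)
        ((prop_HU_II hH hU x y).smul (-Complex.I) :
          IntervalIntegrable (fun s => (-Complex.I) • ((H s).comp (U s))) volume x y)
        (prop_star_cont hU)
    have h2 : IntervalIntegrable
        (fun s => (U s).comp (Complex.I • ((star (U s)).comp (H s)))) volume x y := by
      simpa using II_bilin (ContinuousLinearMap.compL ℂ E E E).flip
        (prop_a_II hH hU x y) hU.1
    exact h1.add h2
  have hDrep : ∀ u : ℝ, 0 ≤ u → D u = ∫ s in (0:ℝ)..u, q s := by
    intro u hu
    have key := integral_prod_rule (ContinuousLinearMap.compL ℂ E E E)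
      (A := U) (B := fun s => star (U s)) (A₀ := 1) (B₀ := 1)
      (a := fun s => (-Complex.I) • ((H s).comp (U s)))
      (b := fun s => Complex.I • ((star (U s)).comp (H s)))
      (fun x y => by exact (prop_HU_II hH hU x y).smul (-Complex.I))
      (prop_a_II hH hU)
      (fun v _ => prop_rep hH hU v) (fun v _ => prop_star_rep hH hsa hU v) hu
    simp only [ContinuousLinearMap.compL_apply] at key
    rw [hD]
    dsimp only
    rw [key, ← ContinuousLinearMap.mul_def, mul_one]
    exact add_sub_cancel_left 1 _
  have hqD : ∀ s : ℝ, q s = (-Complex.I) • ((H s).comp (D s))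
      + Complex.I • ((D s).comp (H s)) := by
    intro s
    rw [hq, hD]
    dsimp only
    simp only [← ContinuousLinearMap.mul_def, smul_mul_assoc, mul_smul_comm,
      mul_sub, sub_mul, mul_one, one_mul, mul_assoc, smul_sub]
    simp only [neg_smul, neg_neg, smul_neg]
    abel
  have hDc : Continuous D := prop_D_cont hU
  have hδ := gronwall_zero (δ := fun s => ‖D s‖) (h := fun s => 2 * ‖H s‖)
    hDc.norm (fun s => norm_nonneg _)
    (fun x y => by simpa using (hH x y).norm.const_mul 2)
    (fun s => by positivity) ht ?_ t (Set.mem_Icc.mpr ⟨ht, le_refl t⟩)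
  · have : D t = 0 := norm_eq_zero.mp hδ
    rw [hD] at this
    have h2 := sub_eq_zero.mp this
    exact h2
  · intro u hu
    have h1 : ‖D u‖ ≤ ∫ s in (0:ℝ)..u, ‖q s‖ := by
      rw [hDrep u hu.1]
      exact intervalIntegral.norm_integral_le_integral_norm hu.1
    refine h1.trans ?_
    refine intervalIntegral.integral_mono_on hu.1 (hqII 0 u).norm ?_ fun s hs => ?_
    · simpa using II_bilin (ContinuousLinearMap.mul ℝ ℝ)
        ((hH 0 u).norm.const_mul 2) hDc.norm
    · rw [hqD s]
      calc ‖(-Complex.I) • ((H s).comp (D s)) + Complex.I • ((D s).comp (H s))‖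
          ≤ ‖(-Complex.I) • ((H s).comp (D s))‖ + ‖Complex.I • ((D s).comp (H s))‖ :=
            norm_add_le _ _
        _ = ‖(H s).comp (D s)‖ + ‖(D s).comp (H s)‖ := by
            rw [norm_smul, norm_smul]
            simp [Complex.norm_I]
        _ ≤ ‖H s‖ * ‖D s‖ + ‖D s‖ * ‖H s‖ :=
            add_le_add ((H s).opNorm_comp_le (D s)) ((D s).opNorm_comp_le (H s))
        _ = 2 * ‖H s‖ * ‖D s‖ := by ring

lemma prop_norm_le (hH : ∀ x y : ℝ, IntervalIntegrable H volume x y)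
    (hsa : ∀ t : ℝ, IsSelfAdjoint (H t)) (hU : IsPropagator H U) {t : ℝ} (ht : 0 ≤ t) :
    ‖U t‖ ≤ 1 :=
  isometry_norm_le (prop_isometry hH hsa hU ht)

lemma prop_star_norm_le (hH : ∀ x y : ℝ, IntervalIntegrable H volume x y)
    (hsa : ∀ t : ℝ, IsSelfAdjoint (H t)) (hU : IsPropagator H U) {t : ℝ} (ht : 0 ≤ t) :
    ‖star (U t)‖ ≤ 1 := by
  rw [norm_star]; exact prop_norm_le hH hsa hU ht

lemma comp_norm_le_one {T S : E →L[ℂ] E} (h1 : ‖T‖ ≤ 1) (h2 : ‖S‖ ≤ 1) :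
    ‖T.comp S‖ ≤ 1 :=
  (T.opNorm_comp_le S).trans (mul_le_one₀ h1 (norm_nonneg S) h2)

lemma conj_norm_le {T M S : E →L[ℂ] E} (h1 : ‖T‖ ≤ 1) (h2 : ‖S‖ ≤ 1) :
    ‖T.comp (M.comp S)‖ ≤ ‖M‖ := by
  calc ‖T.comp (M.comp S)‖ ≤ ‖T‖ * ‖M.comp S‖ := T.opNorm_comp_le _
  _ ≤ 1 * (‖M‖ * ‖S‖) :=
      mul_le_mul h1 (M.opNorm_comp_le S) (norm_nonneg _) zero_le_one
  _ ≤ 1 * (‖M‖ * 1) := by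
      have := norm_nonneg M
      gcongr
  _ = ‖M‖ := by ring

end Propagator


/-- Rotating-frame bound:
`‖U₂ − U₁‖_{∞,t} ≤ ‖Ŝ₂₁‖_{∞,t} (1 + ‖H₁ − H₀‖_{1,t} + ‖H₂ − H₀‖_{1,t})`, where
`Ŝ₂₁(t) = ∫₀ᵗ U₀(s)* (H₂(s) − H₁(s)) U₀(s) ds`. -/
theorem rotating_frame_bound
    (H₀ H₁ H₂ U₀ U₁ U₂ : ℝ → E →L[ℂ] E)
    (hH₀int : ∀ a b : ℝ, IntervalIntegrable H₀ volume a b)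
    (hH₁int : ∀ a b : ℝ, IntervalIntegrable H₁ volume a b)
    (hH₂int : ∀ a b : ℝ, IntervalIntegrable H₂ volume a b)
    (hH₀sa : ∀ t : ℝ, IsSelfAdjoint (H₀ t))
    (hH₁sa : ∀ t : ℝ, IsSelfAdjoint (H₁ t))
    (hH₂sa : ∀ t : ℝ, IsSelfAdjoint (H₂ t))
    (hU₀ : IsPropagator H₀ U₀) (hU₁ : IsPropagator H₁ U₁) (hU₂ : IsPropagator H₂ U₂)
    (Shat : ℝ → E →L[ℂ] E)
    (hShat : ∀ t : ℝ, Shat t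
      = ∫ s in (0:ℝ)..t,
          ((ContinuousLinearMap.adjoint (U₀ s)).comp ((H₂ s - H₁ s).comp (U₀ s)))) :
    ∀ t : ℝ, 0 ≤ t →
      (⨆ s : Set.Icc (0:ℝ) t, ‖U₂ s - U₁ s‖)
        ≤ (⨆ s : Set.Icc (0:ℝ) t, ‖Shat s‖) *
          (1 + (∫ s in (0:ℝ)..t, ‖H₁ s - H₀ s‖) + (∫ s in (0:ℝ)..t, ‖H₂ s - H₀ s‖)) := by
  intro t ht
  have pU₀ : IsPropagator H₀ U₀ := hU₀
  have pU₁ : IsPropagator H₁ U₁ := hU₁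
  have pU₂ : IsPropagator H₂ U₂ := hU₂
  have hs₀c : Continuous fun s => star (U₀ s) := prop_star_cont pU₀
  have hs₂c : Continuous fun s => star (U₂ s) := prop_star_cont pU₂
  set L := ContinuousLinearMap.compL ℂ E E E with hL
  -- the difference Hamiltonians
  have h21II : ∀ x y : ℝ, IntervalIntegrable (fun s => H₂ s - H₁ s) volume x y :=
    fun x y => (hH₂int x y).sub (hH₁int x y)
  have h20II : ∀ x y : ℝ, IntervalIntegrable (fun s => H₂ s - H₀ s) volume x y :=
    fun x y => (hH₂int x y).sub (hH₀int x y)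
  have h10II : ∀ x y : ℝ, IntervalIntegrable (fun s => H₁ s - H₀ s) volume x y :=
    fun x y => (hH₁int x y).sub (hH₀int x y)
  -- generic: star(U) ∘ (M ∘ U') is interval integrable for integrable M, continuous U, U'
  have sandwichII : ∀ (M V W : ℝ → E →L[ℂ] E),
      (∀ x y : ℝ, IntervalIntegrable M volume x y) → Continuous V → Continuous W →
      ∀ x y : ℝ, IntervalIntegrable (fun s => (V s).comp ((M s).comp (W s))) volume x y := by
    intro M V W hM hV hW x y
    have inner : IntervalIntegrable (fun s => (M s).comp (W s)) volume x y := by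
      exact II_bilin L (hM x y) hW
    exact II_bilin L.flip inner hV
  -- σ
  set σf : ℝ → E →L[ℂ] E := fun s => (star (U₀ s)).comp ((H₂ s - H₁ s).comp (U₀ s)) with hσf
  have hσII : ∀ x y : ℝ, IntervalIntegrable σf volume x y :=
    sandwichII _ _ _ h21II hs₀c hU₀.1
  have hShat' : ∀ u : ℝ, Shat u = ∫ s in (0:ℝ)..u, σf s := by
    intro u
    rw [hShat u]
    refine intervalIntegral.integral_congr fun s _ => ?_
    rw [hσf]
    dsimp only
    rw [ContinuousLinearMap.star_eq_adjoint]
  have hShatc : Continuous Shat := by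
    have h1 : Continuous fun u => ∫ s in (0:ℝ)..u, σf s :=
      intervalIntegral.continuous_primitive hσII 0
    exact (funext hShat' : Shat = _) ▸ h1
  -- sup of Shat
  have hne : Nonempty (Set.Icc (0:ℝ) t) := ⟨⟨0, Set.mem_Icc.mpr ⟨le_refl 0, ht⟩⟩⟩
  set S := ⨆ s : Set.Icc (0:ℝ) t, ‖Shat ↑s‖ with hS
  have hbdd : BddAbove (Set.range fun s : Set.Icc (0:ℝ) t => ‖Shat ↑s‖) := by
    rw [show (fun s : Set.Icc (0:ℝ) t => ‖Shat ↑s‖)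
        = (fun s => ‖Shat s‖) ∘ Subtype.val from rfl, Set.range_comp, Subtype.range_coe]
    exact isCompact_Icc.bddAbove_image hShatc.norm.continuousOn
  have hSle : ∀ s ∈ Set.Icc (0:ℝ) t, ‖Shat s‖ ≤ S := fun s hs =>
    le_ciSup hbdd (⟨s, hs⟩ : Set.Icc (0:ℝ) t)
  have hS0 : 0 ≤ S := le_trans (norm_nonneg _) (hSle 0 ⟨le_refl 0, ht⟩)
  -- integral forms of the rotating-frame objects
  have hone : (1 : E →L[ℂ] E).comp (1 : E →L[ℂ] E) = 1 := by
    rw [← ContinuousLinearMap.mul_def, mul_one]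
  set b'f : ℝ → E →L[ℂ] E :=
    fun s => Complex.I • ((star (U₂ s)).comp ((H₂ s - H₀ s).comp (U₀ s))) with hb'f
  set c'f : ℝ → E →L[ℂ] E :=
    fun s => (-Complex.I) • ((star (U₀ s)).comp ((H₁ s - H₀ s).comp (U₁ s))) with hc'f
  have hb'II : ∀ x y : ℝ, IntervalIntegrable b'f volume x y := fun x y => by
    exact (sandwichII _ _ _ h20II hs₂c hU₀.1 x y).smul Complex.I
  have hc'II : ∀ x y : ℝ, IntervalIntegrable c'f volume x y := fun x y => by
    exact (sandwichII _ _ _ h10II hs₀c hU₁.1 x y).smul (-Complex.I)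
  have hBrep : ∀ u : ℝ, 0 ≤ u →
      (star (U₂ u)).comp (U₀ u) = 1 + ∫ s in (0:ℝ)..u, b'f s := by
    intro u hu
    have key := integral_prod_rule L (A := fun s => star (U₂ s)) (B := U₀)
      (A₀ := 1) (B₀ := 1)
      (a := fun s => Complex.I • ((star (U₂ s)).comp (H₂ s)))
      (b := fun s => (-Complex.I) • ((H₀ s).comp (U₀ s)))
      (prop_a_II hH₂int pU₂)
      (fun x y => by exact (prop_HU_II hH₀int pU₀ x y).smul (-Complex.I))
      (fun v _ => prop_star_rep hH₂int hH₂sa pU₂ v) (fun v _ => prop_rep hH₀int pU₀ v) hu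
    simp only [hL, ContinuousLinearMap.compL_apply] at key
    rw [key, hone]
    congr 1
    refine intervalIntegral.integral_congr fun s _ => ?_
    simp only [hb'f, ← ContinuousLinearMap.mul_def, smul_mul_assoc, mul_smul_comm,
      neg_smul, mul_assoc, mul_sub, sub_mul, smul_sub]
    simp only [mul_neg, mul_smul_comm, smul_neg, neg_neg, neg_smul]
    abel
  have hCrep : ∀ u : ℝ, 0 ≤ u →
      (star (U₀ u)).comp (U₁ u) = 1 + ∫ s in (0:ℝ)..u, c'f s := by
    intro u hu
    have key := integral_prod_rule L (A := fun s => star (U₀ s)) (B := U₁)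
      (A₀ := 1) (B₀ := 1)
      (a := fun s => Complex.I • ((star (U₀ s)).comp (H₀ s)))
      (b := fun s => (-Complex.I) • ((H₁ s).comp (U₁ s)))
      (prop_a_II hH₀int pU₀)
      (fun x y => by exact (prop_HU_II hH₁int pU₁ x y).smul (-Complex.I))
      (fun v _ => prop_star_rep hH₀int hH₀sa pU₀ v) (fun v _ => prop_rep hH₁int pU₁ v) hu
    simp only [hL, ContinuousLinearMap.compL_apply] at key
    rw [key, hone]
    congr 1
    refine intervalIntegral.integral_congr fun s _ => ?_
    simp only [hc'f, ← ContinuousLinearMap.mul_def, smul_mul_assoc, mul_smul_comm,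
      neg_smul, mul_assoc, mul_sub, sub_mul, smul_sub]
    simp only [mul_neg, mul_smul_comm, smul_neg, neg_neg, neg_smul]
    abel
  -- the triple product integrand
  set Tf : ℝ → E →L[ℂ] E := fun s =>
    ((star (U₂ s)).comp (U₀ s)).comp ((σf s).comp ((star (U₀ s)).comp (U₁ s))) with hTf
  have hxptwise : ∀ s : ℝ, 0 ≤ s →
      (Complex.I • ((star (U₂ s)).comp (H₂ s))).comp (U₁ s)
        + (star (U₂ s)).comp ((-Complex.I) • ((H₁ s).comp (U₁ s)))
      = Complex.I • Tf s := by
    intro s hs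
    have hcoM : U₀ s * star (U₀ s) = 1 := by
      rw [ContinuousLinearMap.mul_def]; exact prop_coisometry hH₀int hH₀sa pU₀ hs
    have hco2 : ∀ Z : E →L[ℂ] E, U₀ s * (star (U₀ s) * Z) = Z := fun Z => by
      rw [← mul_assoc, hcoM, one_mul]
    simp only [hTf, hσf, ← ContinuousLinearMap.mul_def, smul_mul_assoc, mul_smul_comm,
      neg_smul, mul_assoc, mul_sub, sub_mul, smul_sub]
    simp only [mul_neg, mul_smul_comm, smul_neg, neg_neg, neg_smul]
    simp only [hco2]
    abel
  have hXrep : ∀ u : ℝ, 0 ≤ u →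
      (star (U₂ u)).comp (U₁ u) = 1 + ∫ s in (0:ℝ)..u,
        ((Complex.I • ((star (U₂ s)).comp (H₂ s))).comp (U₁ s)
          + (star (U₂ s)).comp ((-Complex.I) • ((H₁ s).comp (U₁ s)))) := by
    intro u hu
    have key := integral_prod_rule L (A := fun s => star (U₂ s)) (B := U₁)
      (A₀ := 1) (B₀ := 1)
      (a := fun s => Complex.I • ((star (U₂ s)).comp (H₂ s)))
      (b := fun s => (-Complex.I) • ((H₁ s).comp (U₁ s)))
      (prop_a_II hH₂int pU₂)
      (fun x y => by exact (prop_HU_II hH₁int pU₁ x y).smul (-Complex.I))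
      (fun v _ => prop_star_rep hH₂int hH₂sa pU₂ v) (fun v _ => prop_rep hH₁int pU₁ v) hu
    simp only [hL, ContinuousLinearMap.compL_apply] at key
    rw [key, hone]
  -- first integration by parts: B ∘ Shat
  have hPrep : ∀ u : ℝ, 0 ≤ u →
      ((star (U₂ u)).comp (U₀ u)).comp (Shat u)
        = ∫ s in (0:ℝ)..u,
            ((b'f s).comp (Shat s) + ((star (U₂ s)).comp (U₀ s)).comp (σf s)) := by
    intro u hu
    have key := integral_prod_rule L (A := fun s => (star (U₂ s)).comp (U₀ s)) (B := Shat)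
      (A₀ := 1) (B₀ := 0) (a := b'f) (b := σf) hb'II hσII hBrep (fun v _ => by rw [zero_add]; exact hShat' v) hu
    simp only [hL, ContinuousLinearMap.compL_apply] at key
    rw [key, ContinuousLinearMap.comp_zero, zero_add]
  have hb'ShatII : ∀ x y : ℝ,
      IntervalIntegrable (fun s => (b'f s).comp (Shat s)) volume x y := fun x y => by
    exact II_bilin L (hb'II x y) hShatc
  have hBσII : ∀ x y : ℝ,
      IntervalIntegrable (fun s => ((star (U₂ s)).comp (U₀ s)).comp (σf s)) volume x y :=
    fun x y => by exact II_bilin L.flip (hσII x y) (hs₂c.clm_comp hU₀.1)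
  -- second integration by parts: (B ∘ Shat) ∘ C
  have hGrep : ∀ u : ℝ, 0 ≤ u →
      (((star (U₂ u)).comp (U₀ u)).comp (Shat u)).comp ((star (U₀ u)).comp (U₁ u))
        = ∫ s in (0:ℝ)..u,
            ((((b'f s).comp (Shat s) + ((star (U₂ s)).comp (U₀ s)).comp (σf s)).comp
                ((star (U₀ s)).comp (U₁ s)))
              + (((star (U₂ s)).comp (U₀ s)).comp (Shat s)).comp (c'f s)) := by
    intro u hu
    have key := integral_prod_rule L
      (A := fun s => ((star (U₂ s)).comp (U₀ s)).comp (Shat s))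
      (B := fun s => (star (U₀ s)).comp (U₁ s))
      (A₀ := 0) (B₀ := 1)
      (a := fun s => (b'f s).comp (Shat s) + ((star (U₂ s)).comp (U₀ s)).comp (σf s))
      (b := c'f)
      (fun x y => (hb'ShatII x y).add (hBσII x y)) hc'II
      (fun v hv => by rw [zero_add]; exact hPrep v hv) hCrep hu
    simp only [hL, ContinuousLinearMap.compL_apply] at key
    rw [key, ContinuousLinearMap.zero_comp, zero_add]
  -- interval integrability helpers for composition chains
  have compIIright : ∀ {f g : ℝ → E →L[ℂ] E} {x y : ℝ},
      IntervalIntegrable f volume x y → Continuous g →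
      IntervalIntegrable (fun u => (f u).comp (g u)) volume x y := by
    intro f g x y hf hg; exact II_bilin L hf hg
  have compIIleft : ∀ {f g : ℝ → E →L[ℂ] E} {x y : ℝ},
      IntervalIntegrable f volume x y → Continuous g →
      IntervalIntegrable (fun u => (g u).comp (f u)) volume x y := by
    intro f g x y hf hg; exact II_bilin L.flip hf hg
  have hCfc : Continuous fun u => (star (U₀ u)).comp (U₁ u) := hs₀c.clm_comp hU₁.1
  have hT1II : ∀ x y : ℝ, IntervalIntegrable
      (fun u => (b'f u).comp ((Shat u).comp ((star (U₀ u)).comp (U₁ u)))) volume x y :=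
    fun x y => compIIright (hb'II x y) (hShatc.clm_comp hCfc)
  have hT3II : ∀ x y : ℝ, IntervalIntegrable
      (fun u => (star (U₂ u)).comp ((U₀ u).comp ((Shat u).comp (c'f u)))) volume x y :=
    fun x y => compIIleft (compIIleft (compIIleft (hc'II x y) hShatc) hU₀.1) hs₂c
  have hTfII : ∀ x y : ℝ, IntervalIntegrable Tf volume x y := fun x y => by
    have h1 : IntervalIntegrable (fun u => (σf u).comp ((star (U₀ u)).comp (U₁ u))) volume x y :=
      compIIright (hσII x y) hCfc
    exact compIIleft h1 (hs₂c.clm_comp hU₀.1)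
  -- pointwise operator norm bounds
  have hnb' : ∀ u : ℝ, 0 ≤ u → ‖b'f u‖ ≤ ‖H₂ u - H₀ u‖ := by
    intro u hu
    rw [hb'f]
    dsimp only
    rw [norm_smul, Complex.norm_I, one_mul]
    exact conj_norm_le (prop_star_norm_le hH₂int hH₂sa pU₂ hu)
      (prop_norm_le hH₀int hH₀sa pU₀ hu)
  have hnc' : ∀ u : ℝ, 0 ≤ u → ‖c'f u‖ ≤ ‖H₁ u - H₀ u‖ := by
    intro u hu
    rw [hc'f]
    dsimp only
    rw [norm_smul, norm_neg, Complex.norm_I, one_mul]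
    exact conj_norm_le (prop_star_norm_le hH₀int hH₀sa pU₀ hu)
      (prop_norm_le hH₁int hH₁sa pU₁ hu)
  have hnB : ∀ u : ℝ, 0 ≤ u → ‖(star (U₂ u)).comp (U₀ u)‖ ≤ 1 := fun u hu =>
    comp_norm_le_one (prop_star_norm_le hH₂int hH₂sa pU₂ hu)
      (prop_norm_le hH₀int hH₀sa pU₀ hu)
  have hnC : ∀ u : ℝ, 0 ≤ u → ‖(star (U₀ u)).comp (U₁ u)‖ ≤ 1 := fun u hu =>
    comp_norm_le_one (prop_star_norm_le hH₀int hH₀sa pU₀ hu)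
      (prop_norm_le hH₁int hH₁sa pU₁ hu)
  -- nonnegativity of the time-integrated norms
  have hi20 : ∀ x y : ℝ, x ≤ y →
      (∫ u in x..y, ‖H₂ u - H₀ u‖) ≤ ∫ u in (0:ℝ)..t, ‖H₂ u - H₀ u‖ → True := fun _ _ _ _ => trivial
  -- the key pointwise bound
  have key_bound : ∀ s ∈ Set.Icc (0:ℝ) t, ‖U₂ s - U₁ s‖
      ≤ S * (1 + (∫ u in (0:ℝ)..t, ‖H₁ u - H₀ u‖) + ∫ u in (0:ℝ)..t, ‖H₂ u - H₀ u‖) := by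
    intro s hs
    obtain ⟨hs0, hst⟩ := hs
    have hcoM : U₂ s * star (U₂ s) = 1 := by
      rw [ContinuousLinearMap.mul_def]; exact prop_coisometry hH₂int hH₂sa pU₂ hs0
    have hdiff : U₂ s - U₁ s = (U₂ s).comp (1 - (star (U₂ s)).comp (U₁ s)) := by
      simp only [← ContinuousLinearMap.mul_def]
      rw [mul_sub, mul_one, ← mul_assoc, hcoM, one_mul]
    have hd1 : ‖U₂ s - U₁ s‖ ≤ ‖1 - (star (U₂ s)).comp (U₁ s)‖ := by
      rw [hdiff]
      calc ‖(U₂ s).comp (1 - (star (U₂ s)).comp (U₁ s))‖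
          ≤ ‖U₂ s‖ * ‖1 - (star (U₂ s)).comp (U₁ s)‖ := (U₂ s).opNorm_comp_le _
      _ ≤ 1 * ‖1 - (star (U₂ s)).comp (U₁ s)‖ :=
          mul_le_mul_of_nonneg_right (prop_norm_le hH₂int hH₂sa pU₂ hs0) (norm_nonneg _)
      _ = _ := one_mul _
    have hXcongr : (∫ u in (0:ℝ)..s,
        ((Complex.I • ((star (U₂ u)).comp (H₂ u))).comp (U₁ u)
          + (star (U₂ u)).comp ((-Complex.I) • ((H₁ u).comp (U₁ u)))))
        = Complex.I • ∫ u in (0:ℝ)..s, Tf u := by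
      rw [← intervalIntegral.integral_smul]
      refine intervalIntegral.integral_congr fun u hu => ?_
      rw [Set.uIcc_of_le hs0] at hu
      exact hxptwise u hu.1
    have h1X : ‖1 - (star (U₂ s)).comp (U₁ s)‖ = ‖∫ u in (0:ℝ)..s, Tf u‖ := by
      rw [hXrep s hs0, hXcongr]
      have heq : (1 : E →L[ℂ] E) - (1 + Complex.I • ∫ u in (0:ℝ)..s, Tf u)
          = -(Complex.I • ∫ u in (0:ℝ)..s, Tf u) := by abel
      rw [heq, norm_neg, norm_smul, Complex.norm_I, one_mul]
    -- integration by parts rearrangement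
    have hGsplit : (∫ u in (0:ℝ)..s,
        ((((b'f u).comp (Shat u) + ((star (U₂ u)).comp (U₀ u)).comp (σf u)).comp
            ((star (U₀ u)).comp (U₁ u)))
          + (((star (U₂ u)).comp (U₀ u)).comp (Shat u)).comp (c'f u)))
        = (∫ u in (0:ℝ)..s, (b'f u).comp ((Shat u).comp ((star (U₀ u)).comp (U₁ u))))
          + (∫ u in (0:ℝ)..s, Tf u)
          + ∫ u in (0:ℝ)..s, (star (U₂ u)).comp ((U₀ u).comp ((Shat u).comp (c'f u))) := by
      rw [← intervalIntegral.integral_add (hT1II 0 s) (hTfII 0 s),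
        ← intervalIntegral.integral_add ((hT1II 0 s).add (hTfII 0 s)) (hT3II 0 s)]
      refine intervalIntegral.integral_congr fun u _ => ?_
      simp only [hTf, ContinuousLinearMap.add_comp, ContinuousLinearMap.comp_assoc]
    have hsplit : (∫ u in (0:ℝ)..s, Tf u)
        = (((star (U₂ s)).comp (U₀ s)).comp (Shat s)).comp ((star (U₀ s)).comp (U₁ s))
          - (∫ u in (0:ℝ)..s, (b'f u).comp ((Shat u).comp ((star (U₀ u)).comp (U₁ u))))
          - ∫ u in (0:ℝ)..s, (star (U₂ u)).comp ((U₀ u).comp ((Shat u).comp (c'f u))) := by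
      rw [hGrep s hs0, hGsplit]
      abel
    -- bound the boundary term
    have hSs : ‖Shat s‖ ≤ S := hSle s ⟨hs0, hst⟩
    have hb1 : ‖(((star (U₂ s)).comp (U₀ s)).comp (Shat s)).comp ((star (U₀ s)).comp (U₁ s))‖
        ≤ S := by
      calc ‖(((star (U₂ s)).comp (U₀ s)).comp (Shat s)).comp ((star (U₀ s)).comp (U₁ s))‖
          ≤ ‖((star (U₂ s)).comp (U₀ s)).comp (Shat s)‖ * ‖(star (U₀ s)).comp (U₁ s)‖ :=
            ContinuousLinearMap.opNorm_comp_le _ _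
      _ ≤ (‖(star (U₂ s)).comp (U₀ s)‖ * ‖Shat s‖) * ‖(star (U₀ s)).comp (U₁ s)‖ :=
            mul_le_mul_of_nonneg_right (ContinuousLinearMap.opNorm_comp_le _ _) (norm_nonneg _)
      _ ≤ (1 * S) * 1 :=
            mul_le_mul (mul_le_mul (hnB s hs0) hSs (norm_nonneg _) zero_le_one)
              (hnC s hs0) (norm_nonneg _) (mul_nonneg zero_le_one hS0)
      _ = S := by ring
    -- bound the two integral remainders
    have hIT1 : ‖∫ u in (0:ℝ)..s, (b'f u).comp ((Shat u).comp ((star (U₀ u)).comp (U₁ u)))‖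
        ≤ (∫ u in (0:ℝ)..t, ‖H₂ u - H₀ u‖) * S := by
      calc ‖∫ u in (0:ℝ)..s, (b'f u).comp ((Shat u).comp ((star (U₀ u)).comp (U₁ u)))‖
          ≤ ∫ u in (0:ℝ)..s, ‖(b'f u).comp ((Shat u).comp ((star (U₀ u)).comp (U₁ u)))‖ :=
            intervalIntegral.norm_integral_le_integral_norm hs0
      _ ≤ ∫ u in (0:ℝ)..s, ‖H₂ u - H₀ u‖ * S := by
          refine intervalIntegral.integral_mono_on hs0 (hT1II 0 s).norm
            (((h20II 0 s).norm).mul_const S) fun u hu => ?_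
          calc ‖(b'f u).comp ((Shat u).comp ((star (U₀ u)).comp (U₁ u)))‖
              ≤ ‖b'f u‖ * ‖(Shat u).comp ((star (U₀ u)).comp (U₁ u))‖ :=
                ContinuousLinearMap.opNorm_comp_le _ _
          _ ≤ ‖b'f u‖ * (‖Shat u‖ * ‖(star (U₀ u)).comp (U₁ u)‖) :=
                mul_le_mul_of_nonneg_left (ContinuousLinearMap.opNorm_comp_le _ _)
                  (norm_nonneg _)
          _ ≤ ‖H₂ u - H₀ u‖ * (S * 1) :=
                mul_le_mul (hnb' u hu.1)
                  (mul_le_mul (hSle u ⟨hu.1, hu.2.trans hst⟩) (hnC u hu.1)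
                    (norm_nonneg _) hS0)
                  (mul_nonneg (norm_nonneg _) (norm_nonneg _)) (norm_nonneg _)
          _ = ‖H₂ u - H₀ u‖ * S := by ring
      _ ≤ ∫ u in (0:ℝ)..t, ‖H₂ u - H₀ u‖ * S := by
          refine intervalIntegral.integral_mono_interval le_rfl hs0 hst
            (Filter.Eventually.of_forall fun u => mul_nonneg (norm_nonneg _) hS0)
            (((h20II 0 t).norm).mul_const S)
      _ = (∫ u in (0:ℝ)..t, ‖H₂ u - H₀ u‖) * S := by
          rw [intervalIntegral.integral_mul_const]
    have hIT3 : ‖∫ u in (0:ℝ)..s, (star (U₂ u)).comp ((U₀ u).comp ((Shat u).comp (c'f u)))‖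
        ≤ (∫ u in (0:ℝ)..t, ‖H₁ u - H₀ u‖) * S := by
      calc ‖∫ u in (0:ℝ)..s, (star (U₂ u)).comp ((U₀ u).comp ((Shat u).comp (c'f u)))‖
          ≤ ∫ u in (0:ℝ)..s, ‖(star (U₂ u)).comp ((U₀ u).comp ((Shat u).comp (c'f u)))‖ :=
            intervalIntegral.norm_integral_le_integral_norm hs0
      _ ≤ ∫ u in (0:ℝ)..s, ‖H₁ u - H₀ u‖ * S := by
          refine intervalIntegral.integral_mono_on hs0 (hT3II 0 s).norm
            (((h10II 0 s).norm).mul_const S) fun u hu => ?_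
          have e1 : ‖(Shat u).comp (c'f u)‖ ≤ S * ‖H₁ u - H₀ u‖ := by
            calc ‖(Shat u).comp (c'f u)‖ ≤ ‖Shat u‖ * ‖c'f u‖ :=
                  ContinuousLinearMap.opNorm_comp_le _ _
            _ ≤ S * ‖H₁ u - H₀ u‖ :=
                  mul_le_mul (hSle u ⟨hu.1, hu.2.trans hst⟩) (hnc' u hu.1) (norm_nonneg _) hS0
          have e2 : ‖(U₀ u).comp ((Shat u).comp (c'f u))‖ ≤ S * ‖H₁ u - H₀ u‖ := by
            calc ‖(U₀ u).comp ((Shat u).comp (c'f u))‖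
                ≤ ‖U₀ u‖ * ‖(Shat u).comp (c'f u)‖ := ContinuousLinearMap.opNorm_comp_le _ _
            _ ≤ 1 * (S * ‖H₁ u - H₀ u‖) :=
                  mul_le_mul (prop_norm_le hH₀int hH₀sa pU₀ hu.1) e1 (norm_nonneg _) zero_le_one
            _ = S * ‖H₁ u - H₀ u‖ := one_mul _
          have e3 : ‖(star (U₂ u)).comp ((U₀ u).comp ((Shat u).comp (c'f u)))‖
              ≤ S * ‖H₁ u - H₀ u‖ := by
            calc ‖(star (U₂ u)).comp ((U₀ u).comp ((Shat u).comp (c'f u)))‖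
                ≤ ‖star (U₂ u)‖ * ‖(U₀ u).comp ((Shat u).comp (c'f u))‖ :=
                  ContinuousLinearMap.opNorm_comp_le _ _
            _ ≤ 1 * (S * ‖H₁ u - H₀ u‖) :=
                  mul_le_mul (prop_star_norm_le hH₂int hH₂sa pU₂ hu.1) e2
                    (norm_nonneg _) zero_le_one
            _ = S * ‖H₁ u - H₀ u‖ := one_mul _
          linarith [e3]
      _ ≤ ∫ u in (0:ℝ)..t, ‖H₁ u - H₀ u‖ * S := by
          refine intervalIntegral.integral_mono_interval le_rfl hs0 hst
            (Filter.Eventually.of_forall fun u => mul_nonneg (norm_nonneg _) hS0)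
            (((h10II 0 t).norm).mul_const S)
      _ = (∫ u in (0:ℝ)..t, ‖H₁ u - H₀ u‖) * S := by
          rw [intervalIntegral.integral_mul_const]
    calc ‖U₂ s - U₁ s‖ ≤ ‖1 - (star (U₂ s)).comp (U₁ s)‖ := hd1
    _ = ‖∫ u in (0:ℝ)..s, Tf u‖ := h1X
    _ ≤ ‖(((star (U₂ s)).comp (U₀ s)).comp (Shat s)).comp ((star (U₀ s)).comp (U₁ s))‖
        + ‖∫ u in (0:ℝ)..s, (b'f u).comp ((Shat u).comp ((star (U₀ u)).comp (U₁ u)))‖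
        + ‖∫ u in (0:ℝ)..s, (star (U₂ u)).comp ((U₀ u).comp ((Shat u).comp (c'f u)))‖ := by
        rw [hsplit]
        exact (norm_sub_le _ _).trans (add_le_add (norm_sub_le _ _) le_rfl)
    _ ≤ S + (∫ u in (0:ℝ)..t, ‖H₂ u - H₀ u‖) * S + (∫ u in (0:ℝ)..t, ‖H₁ u - H₀ u‖) * S :=
        add_le_add (add_le_add hb1 hIT1) hIT3
    _ = S * (1 + (∫ u in (0:ℝ)..t, ‖H₁ u - H₀ u‖) + ∫ u in (0:ℝ)..t, ‖H₂ u - H₀ u‖) := by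
        ring
  exact ciSup_le fun s => key_bound s s.2
end

section
/- Convergence of parameter-dependent evolutions: Fix T > 0, an index set A ⊆ ℝ, and a filter of neighborhoods of a limit point κ₀ of A (possibly κ₀ = ∞). For each κ ∈ A let H_κ, H̄_κ : ℝ → B(ℋ) be locally integrable maps with pointwise self-adjoint values and integrable on [0,T], with propagators U_κ, Ū_κ, and set S_κ(t) = ∫₀ᵗ (H_κ(s) − H̄_κ(s)) ds. Then for every κ ∈ A and every t ∈ [0,T] one has ‖U_κ(t) − Ū_κ(t)‖ ≤ ‖S_κ‖_{∞,T} · (1 + ‖H_κ‖_{1,T} + ‖H̄_κ‖_{1,T}); consequently, if ‖S_κ‖_{∞,T} · (1 + ‖H_κ‖_{1,T} + ‖H̄_κ‖_{1,T}) → 0 as κ → κ₀, then sup_{t ∈ [0,T]} ‖U_κ(t) − Ū_κ(t)‖ → 0 as κ → κ₀. -/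
open MeasureTheory intervalIntegral

set_option linter.unusedSectionVars false
set_option linter.unusedVariables false
set_option maxHeartbeats 1600000
open Set


variable {E : Type*} [NormedAddCommGroup E] [InnerProductSpace ℂ E] [CompleteSpace E]
  [TopologicalSpace.SeparableSpace E]

section Aux
variable {𝔸 : Type*} [NormedRing 𝔸] [NormedSpace ℝ 𝔸] [IsScalarTower ℝ 𝔸 𝔸]
  [SMulCommClass ℝ 𝔸 𝔸] [CompleteSpace 𝔸]


variable {𝔸 : Type*} [NormedRing 𝔸] [NormedSpace ℝ 𝔸] [IsScalarTower ℝ 𝔸 𝔸]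
  [SMulCommClass ℝ 𝔸 𝔸] [CompleteSpace 𝔸]

lemma aux_intInt_mul_cont {f u : ℝ → 𝔸} (hf : ∀ a b : ℝ, IntervalIntegrable f volume a b)
    (hu : Continuous u) (a b : ℝ) : IntervalIntegrable (fun s => f s * u s) volume a b := by
  obtain ⟨C, hC⟩ := (isCompact_uIcc (a := a) (b := b)).exists_bound_of_continuousOn
    hu.continuousOn
  refine IntervalIntegrable.mono_fun' ((hf a b).norm.mul_const C) ?_ ?_
  · have h1 : AEStronglyMeasurable f (volume.restrict (Set.uIoc a b)) :=
      (hf (min a b) (max a b)).aestronglyMeasurable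
    exact h1.mul hu.aestronglyMeasurable
  · refine (ae_restrict_mem measurableSet_uIoc).mono fun x hx => ?_
    exact (norm_mul_le _ _).trans
      (mul_le_mul_of_nonneg_left (hC x (uIoc_subset_uIcc hx)) (norm_nonneg _))

lemma aux_cont_mul_intInt {f u : ℝ → 𝔸} (hf : ∀ a b : ℝ, IntervalIntegrable f volume a b)
    (hu : Continuous u) (a b : ℝ) : IntervalIntegrable (fun s => u s * f s) volume a b := by
  obtain ⟨C, hC⟩ := (isCompact_uIcc (a := a) (b := b)).exists_bound_of_continuousOn
    hu.continuousOn
  refine IntervalIntegrable.mono_fun' ((hf a b).norm.const_mul C) ?_ ?_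
  · have h1 : AEStronglyMeasurable f (volume.restrict (Set.uIoc a b)) :=
      (hf (min a b) (max a b)).aestronglyMeasurable
    exact hu.aestronglyMeasurable.mul h1
  · refine (ae_restrict_mem measurableSet_uIoc).mono fun x hx => ?_
    exact (norm_mul_le _ _).trans
      (mul_le_mul_of_nonneg_right (hC x (uIoc_subset_uIcc hx)) (norm_nonneg _))


lemma aux_fubini_tri {f g : ℝ → 𝔸} {t : ℝ} (ht : 0 ≤ t)
    (hf : IntegrableOn f (Ioc 0 t)) (hg : IntegrableOn g (Ioc 0 t)) :
    (∫ s in Ioc (0:ℝ) t, f s * ∫ r in Ioc (0:ℝ) s, g r)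
      + (∫ s in Ioc (0:ℝ) t, (∫ r in Ioc (0:ℝ) s, f r) * g s)
      = (∫ s in Ioc (0:ℝ) t, f s) * ∫ s in Ioc (0:ℝ) t, g s := by
  set ρ : Measure ℝ := volume.restrict (Ioc (0:ℝ) t) with hρ
  have hfρ : Integrable f ρ := hf
  have hgρ : Integrable g ρ := hg
  set φ : ℝ × ℝ → 𝔸 := fun p => f p.1 * g p.2 with hφdef
  have hφm : AEStronglyMeasurable φ (ρ.prod ρ) :=
    (ContinuousLinearMap.mul ℝ 𝔸).aestronglyMeasurable_comp₂ hfρ.1.comp_fst hgρ.1.comp_snd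
  have hint : ∀ s : ℝ, Integrable (fun r => f s * g r) ρ := fun s =>
    (ContinuousLinearMap.mul ℝ 𝔸 (f s)).integrable_comp hgρ
  have hφ : Integrable φ (ρ.prod ρ) := by
    refine (integrable_prod_iff hφm).2 ⟨Filter.Eventually.of_forall hint, ?_⟩
    refine ((hfρ.norm.mul_const (∫ r, ‖g r‖ ∂ρ)).mono' (hφm.norm.integral_prod_right')
      (Filter.Eventually.of_forall fun s => ?_))
    rw [Real.norm_of_nonneg (integral_nonneg fun r => norm_nonneg _)]
    calc ∫ r, ‖φ (s, r)‖ ∂ρ ≤ ∫ r, ‖f s‖ * ‖g r‖ ∂ρ := by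
          exact integral_mono (hint s).norm (hgρ.norm.const_mul _)
            (fun r => norm_mul_le _ _)
      _ = ‖f s‖ * ∫ r, ‖g r‖ ∂ρ := integral_const_mul _ _
  have hD₁ : MeasurableSet {p : ℝ × ℝ | p.2 ≤ p.1} :=
    measurableSet_le measurable_snd measurable_fst
  have hD₂ : MeasurableSet {p : ℝ × ℝ | p.1 < p.2} :=
    measurableSet_lt measurable_fst measurable_snd
  have e0 : ∫ p, φ p ∂(ρ.prod ρ) = (∫ s, f s ∂ρ) * ∫ s, g s ∂ρ := by
    rw [integral_prod _ hφ]
    calc ∫ s, ∫ r, f s * g r ∂ρ ∂ρ = ∫ s, f s * ∫ r, g r ∂ρ ∂ρ :=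
          integral_congr_ae (Filter.Eventually.of_forall fun s =>
            (ContinuousLinearMap.mul ℝ 𝔸 (f s)).integral_comp_comm hgρ)
      _ = (∫ s, f s ∂ρ) * ∫ r, g r ∂ρ :=
          ((ContinuousLinearMap.mul ℝ 𝔸).flip (∫ r, g r ∂ρ)).integral_comp_comm hfρ
  have e1 : ∫ p, ({p : ℝ × ℝ | p.2 ≤ p.1}).indicator φ p ∂(ρ.prod ρ)
      = ∫ s in Ioc (0:ℝ) t, f s * ∫ r in Ioc (0:ℝ) s, g r := by
    rw [integral_prod _ (hφ.indicator hD₁)]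
    refine setIntegral_congr_fun measurableSet_Ioc (fun s hs => ?_)
    have h1 : ∀ r : ℝ, ({p : ℝ × ℝ | p.2 ≤ p.1}).indicator φ (s, r)
        = (Iic s).indicator (fun r => f s * g r) r := by
      intro r
      by_cases h : r ≤ s <;> simp [Set.indicator, h, hφdef]
    calc ∫ r, ({p : ℝ × ℝ | p.2 ≤ p.1}).indicator φ (s, r) ∂ρ
        = ∫ r, (Iic s).indicator (fun r => f s * g r) r ∂ρ := by simp_rw [h1]
      _ = ∫ r in Iic s, f s * g r ∂ρ := integral_indicator measurableSet_Iic
      _ = ∫ r in Iic s ∩ Ioc 0 t, f s * g r := by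
          rw [hρ, Measure.restrict_restrict measurableSet_Iic]
      _ = ∫ r in Ioc (0:ℝ) s, f s * g r := by
          rw [show Iic s ∩ Ioc (0:ℝ) t = Ioc (0:ℝ) s from Set.ext fun r =>
            ⟨fun h' => ⟨h'.2.1, h'.1⟩, fun h' => ⟨h'.2, h'.1, h'.2.trans hs.2⟩⟩]
      _ = f s * ∫ r in Ioc (0:ℝ) s, g r :=
          (ContinuousLinearMap.mul ℝ 𝔸 (f s)).integral_comp_comm
            (hg.mono_set (Ioc_subset_Ioc_right hs.2))
  have e2 : ∫ p, ({p : ℝ × ℝ | p.1 < p.2}).indicator φ p ∂(ρ.prod ρ)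
      = ∫ s in Ioc (0:ℝ) t, (∫ r in Ioc (0:ℝ) s, f r) * g s := by
    rw [integral_prod_symm _ (hφ.indicator hD₂)]
    refine setIntegral_congr_fun measurableSet_Ioc (fun r hr => ?_)
    have h1 : ∀ s : ℝ, ({p : ℝ × ℝ | p.1 < p.2}).indicator φ (s, r)
        = (Iio r).indicator (fun s => f s * g r) s := by
      intro s
      by_cases h : s < r <;> simp [Set.indicator, h, hφdef]
    calc ∫ s, ({p : ℝ × ℝ | p.1 < p.2}).indicator φ (s, r) ∂ρ
        = ∫ s, (Iio r).indicator (fun s => f s * g r) s ∂ρ := by simp_rw [h1]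
      _ = ∫ s in Iio r, f s * g r ∂ρ := integral_indicator measurableSet_Iio
      _ = ∫ s in Iio r ∩ Ioc 0 t, f s * g r := by
          rw [hρ, Measure.restrict_restrict measurableSet_Iio]
      _ = ∫ s in Ioo (0:ℝ) r, f s * g r := by
          rw [show Iio r ∩ Ioc (0:ℝ) t = Ioo (0:ℝ) r from Set.ext fun s =>
            ⟨fun h' => ⟨h'.2.1, h'.1⟩, fun h' => ⟨h'.2, h'.1, h'.2.le.trans hr.2⟩⟩]
      _ = ∫ s in Ioc (0:ℝ) r, f s * g r := (integral_Ioc_eq_integral_Ioo).symm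
      _ = (∫ s in Ioc (0:ℝ) r, f s) * g r :=
          ((ContinuousLinearMap.mul ℝ 𝔸).flip (g r)).integral_comp_comm
            (hf.mono_set (Ioc_subset_Ioc_right hr.2))
  rw [← e1, ← e2, ← integral_add (hφ.indicator hD₁) (hφ.indicator hD₂), ← e0]
  refine integral_congr_ae (Filter.Eventually.of_forall fun p => ?_)
  by_cases h : p.2 ≤ p.1
  · simp only [Set.indicator_apply, Set.mem_setOf_eq, if_pos h, if_neg (not_lt.2 h), add_zero]
  · simp only [Set.indicator_apply, Set.mem_setOf_eq, if_neg h, if_pos (lt_of_not_ge h),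
      zero_add]


lemma aux_prod_rule {f g : ℝ → 𝔸} (F0 G0 : 𝔸)
    (hf : ∀ a b : ℝ, IntervalIntegrable f volume a b)
    (hg : ∀ a b : ℝ, IntervalIntegrable g volume a b)
    {t : ℝ} (ht : 0 ≤ t) :
    (F0 + ∫ s in (0:ℝ)..t, f s) * (G0 + ∫ s in (0:ℝ)..t, g s)
      = F0 * G0 + ∫ s in (0:ℝ)..t,
          (f s * (G0 + ∫ r in (0:ℝ)..s, g r) + (F0 + ∫ r in (0:ℝ)..s, f r) * g s) := by
  have hPf : Continuous fun s => ∫ r in (0:ℝ)..s, f r := intervalIntegral.continuous_primitive hf 0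
  have hPg : Continuous fun s => ∫ r in (0:ℝ)..s, g r := intervalIntegral.continuous_primitive hg 0
  -- integrability of the pieces
  have hA : ∀ a b : ℝ, IntervalIntegrable (fun s => f s * (G0 + ∫ r in (0:ℝ)..s, g r)) volume a b :=
    aux_intInt_mul_cont hf (continuous_const.add hPg)
  have hB : ∀ a b : ℝ, IntervalIntegrable (fun s => (F0 + ∫ r in (0:ℝ)..s, f r) * g s) volume a b :=
    aux_cont_mul_intInt hg (continuous_const.add hPf)
  have hA1 : ∀ a b : ℝ, IntervalIntegrable (fun s => f s * G0) volume a b :=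
    aux_intInt_mul_cont hf continuous_const
  have hA2 : ∀ a b : ℝ, IntervalIntegrable (fun s => f s * ∫ r in (0:ℝ)..s, g r) volume a b :=
    aux_intInt_mul_cont hf hPg
  have hB1 : ∀ a b : ℝ, IntervalIntegrable (fun s => F0 * g s) volume a b :=
    aux_cont_mul_intInt hg continuous_const
  have hB2 : ∀ a b : ℝ, IntervalIntegrable (fun s => (∫ r in (0:ℝ)..s, f r) * g s) volume a b :=
    aux_cont_mul_intInt hg hPf
  have split1 : (∫ s in (0:ℝ)..t,
        (f s * (G0 + ∫ r in (0:ℝ)..s, g r) + (F0 + ∫ r in (0:ℝ)..s, f r) * g s))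
      = (∫ s in (0:ℝ)..t, f s * G0) + (∫ s in (0:ℝ)..t, f s * ∫ r in (0:ℝ)..s, g r)
        + ((∫ s in (0:ℝ)..t, F0 * g s) + ∫ s in (0:ℝ)..t, (∫ r in (0:ℝ)..s, f r) * g s) := by
    rw [intervalIntegral.integral_add (hA 0 t) (hB 0 t)]
    congr 1
    · rw [← intervalIntegral.integral_add (hA1 0 t) (hA2 0 t)]
      exact intervalIntegral.integral_congr fun s _ => mul_add _ _ _
    · rw [← intervalIntegral.integral_add (hB1 0 t) (hB2 0 t)]
      exact intervalIntegral.integral_congr fun s _ => add_mul _ _ _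
  have e1 : (∫ s in (0:ℝ)..t, f s * G0) = (∫ s in (0:ℝ)..t, f s) * G0 :=
    ((ContinuousLinearMap.mul ℝ 𝔸).flip G0).intervalIntegral_comp_comm (hf 0 t)
  have e2 : (∫ s in (0:ℝ)..t, F0 * g s) = F0 * ∫ s in (0:ℝ)..t, g s :=
    (ContinuousLinearMap.mul ℝ 𝔸 F0).intervalIntegral_comp_comm (hg 0 t)
  have core : (∫ s in (0:ℝ)..t, f s * ∫ r in (0:ℝ)..s, g r)
      + (∫ s in (0:ℝ)..t, (∫ r in (0:ℝ)..s, f r) * g s)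
      = (∫ s in (0:ℝ)..t, f s) * ∫ s in (0:ℝ)..t, g s := by
    rw [integral_of_le ht, integral_of_le ht, integral_of_le ht, integral_of_le ht]
    have c1 : ∀ s ∈ Ioc (0:ℝ) t, f s * (∫ r in (0:ℝ)..s, g r) = f s * ∫ r in Ioc (0:ℝ) s, g r :=
      fun s hs => by rw [integral_of_le hs.1.le]
    have c2 : ∀ s ∈ Ioc (0:ℝ) t,
        (∫ r in (0:ℝ)..s, f r) * g s = (∫ r in Ioc (0:ℝ) s, f r) * g s :=
      fun s hs => by rw [integral_of_le hs.1.le]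
    rw [setIntegral_congr_fun measurableSet_Ioc c1, setIntegral_congr_fun measurableSet_Ioc c2]
    exact aux_fubini_tri ht ((hf 0 t).1) ((hg 0 t).1)
  rw [split1, e1, e2, add_mul, mul_add, mul_add]
  rw [← core]
  abel

end Aux

lemma aux_star_intervalIntegral {F : ℝ → E →L[ℂ] E} {a b : ℝ}
    (hF : IntervalIntegrable F volume a b) :
    star (∫ s in a..b, F s) = ∫ s in a..b, star (F s) := by
  have h := ((starL' ℝ : (E →L[ℂ] E) ≃L[ℝ] (E →L[ℂ] E)).toContinuousLinearMap
      ).intervalIntegral_comp_comm hF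
  simpa using h.symm

section PropFacts
variable {H U : ℝ → E →L[ℂ] E}
  (hH : ∀ a b : ℝ, IntervalIntegrable H volume a b)
  (hsa : ∀ t : ℝ, IsSelfAdjoint (H t))
  (hU : IsPropagator H U)

include hH hU

lemma prop_integrand_int : ∀ a b : ℝ,
    IntervalIntegrable (fun s => (-Complex.I) • (H s * U s)) volume a b := fun a b =>
  ((aux_intInt_mul_cont hH hU.1 a b).smul (-Complex.I))

lemma prop_add_eq : ∀ τ : ℝ, U τ = 1 + ∫ s in (0:ℝ)..τ, (-Complex.I) • (H s * U s) := by
  intro τ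
  rw [hU.2 τ]
  rw [intervalIntegral.integral_smul]
  show _ = 1 + (-Complex.I) • ∫ s in (0:ℝ)..τ, H s * U s
  rw [neg_smul, ← sub_eq_add_neg]
  rfl

lemma prop_star_integrand_int : ∀ a b : ℝ,
    IntervalIntegrable (fun s => Complex.I • (star (U s) * H s)) volume a b := fun a b =>
  ((aux_cont_mul_intInt hH (hU.1.star) a b).smul Complex.I)

include hsa in
lemma prop_star_eq : ∀ τ : ℝ, star (U τ)
    = 1 + ∫ s in (0:ℝ)..τ, Complex.I • (star (U s) * H s) := by
  intro τ
  have h1 := congrArg star (prop_add_eq hH hU τ)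
  rw [star_add, star_one, aux_star_intervalIntegral (prop_integrand_int hH hU 0 τ)] at h1
  rw [h1]
  congr 1
  refine intervalIntegral.integral_congr fun s _ => ?_
  rw [star_smul, star_mul]
  rw [(hsa s).star_eq]
  simp [Complex.conj_I]

include hsa in
lemma prop_star_mul_self : ∀ τ : ℝ, 0 ≤ τ → star (U τ) * U τ = 1 := by
  intro τ hτ
  have h := aux_prod_rule (𝔸 := E →L[ℂ] E) 1 1 (prop_star_integrand_int hH hU)
    (prop_integrand_int hH hU) hτ
  simp only [← prop_star_eq hH hsa hU, ← prop_add_eq hH hU] at h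
  have hzero : ∀ s : ℝ, Complex.I • (star (U s) * H s) * U s
      + star (U s) * ((-Complex.I) • (H s * U s)) = 0 := by
    intro s
    rw [smul_mul_assoc, mul_smul_comm, mul_assoc, neg_smul, add_neg_cancel]
  rw [h, intervalIntegral.integral_congr (fun s _ => hzero s), intervalIntegral.integral_zero,
    add_zero, one_mul]

include hsa in
lemma prop_self_mul_star : ∀ τ : ℝ, 0 ≤ τ → U τ * star (U τ) = 1 := by
  have hU0 : U 0 = 1 := by
    rw [prop_add_eq hH hU 0, intervalIntegral.integral_same, add_zero]
  haveI : PreconnectedSpace (Ici (0:ℝ)) := Subtype.preconnectedSpace isPreconnected_Ici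
  set q : Ici (0:ℝ) → E →L[ℂ] E := fun x => U x * star (U x) with hq
  have hqc : Continuous q :=
    ((hU.1.comp continuous_subtype_val).mul (hU.1.comp continuous_subtype_val).star)
  have hidem : ∀ x : Ici (0:ℝ), q x * q x = q x := by
    rintro ⟨τ, hτ⟩
    show (U τ * star (U τ)) * (U τ * star (U τ)) = U τ * star (U τ)
    rw [mul_assoc, ← mul_assoc (star (U τ)), prop_star_mul_self hH hsa hU τ hτ, one_mul]
  have hset : {x : Ici (0:ℝ) | q x = 1} = {x : Ici (0:ℝ) | ‖q x - 1‖ < 1} := by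
    ext x
    simp only [Set.mem_setOf_eq]
    constructor
    · intro h; rw [h, sub_self, norm_zero]; exact one_pos
    · intro h
      have ha : (q x - 1) * (q x - 1) = -(q x - 1) := by
        rw [sub_mul, mul_sub, mul_sub, hidem x, mul_one, one_mul, mul_one]
        abel
      rcases eq_or_lt_of_le (norm_nonneg (q x - 1)) with h0 | h0
      · rw [sub_eq_zero.1 (norm_eq_zero.1 h0.symm)]
      · exfalso
        have h2 : ‖q x - 1‖ = ‖(q x - 1) * (q x - 1)‖ := by rw [ha, norm_neg]
        have h3 : ‖(q x - 1) * (q x - 1)‖ ≤ ‖q x - 1‖ * ‖q x - 1‖ := norm_mul_le _ _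
        nlinarith
  have hclopen : IsClopen {x : Ici (0:ℝ) | q x = 1} := by
    constructor
    · exact isClosed_eq hqc continuous_const
    · rw [hset]
      exact isOpen_lt ((hqc.sub continuous_const).norm) continuous_const
  have hall := hclopen.eq_univ ⟨⟨0, Set.self_mem_Ici⟩, by
    show q ⟨0, Set.self_mem_Ici⟩ = 1
    simp [hq, hU0]⟩
  intro τ hτ
  have : (⟨τ, hτ⟩ : Ici (0:ℝ)) ∈ {x : Ici (0:ℝ) | q x = 1} := hall ▸ Set.mem_univ _
  exact this

include hsa in
lemma prop_norm_le_s3 : ∀ τ : ℝ, 0 ≤ τ → ‖U τ‖ ≤ 1 := by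
  intro τ hτ
  have h1 : ‖star (U τ) * U τ‖ = ‖U τ‖ * ‖U τ‖ := CStarRing.norm_star_mul_self
  rw [prop_star_mul_self hH hsa hU τ hτ] at h1
  have h2 : ‖(1 : E →L[ℂ] E)‖ ≤ 1 := ContinuousLinearMap.norm_id_le
  nlinarith [norm_nonneg (U τ)]

end PropFacts


section MainBound

variable {H Hb U W S' : ℝ → E →L[ℂ] E} {T : ℝ}

lemma main_bound (hT : 0 < T)
    (hH : ∀ a b : ℝ, IntervalIntegrable H volume a b)
    (hHb : ∀ a b : ℝ, IntervalIntegrable Hb volume a b)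
    (hsa : ∀ t : ℝ, IsSelfAdjoint (H t)) (hsab : ∀ t : ℝ, IsSelfAdjoint (Hb t))
    (hU : IsPropagator H U) (hW : IsPropagator Hb W)
    (hS : ∀ t : ℝ, S' t = ∫ s in (0:ℝ)..t, (H s - Hb s))
    {t : ℝ} (ht : t ∈ Icc (0:ℝ) T) :
    ‖U t - W t‖ ≤ (⨆ s : Icc (0:ℝ) T, ‖S' s‖) *
      (1 + (∫ s in (0:ℝ)..T, ‖H s‖) + (∫ s in (0:ℝ)..T, ‖Hb s‖)) := by
  obtain ⟨ht0, htT⟩ := ht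
  have hhd : ∀ a b : ℝ, IntervalIntegrable (fun s => H s - Hb s) volume a b :=
    fun a b => (hH a b).sub (hHb a b)
  have hS'cont : Continuous S' := by
    rw [funext hS]
    exact intervalIntegral.continuous_primitive hhd 0
  set M := ⨆ s : Icc (0:ℝ) T, ‖S' s‖ with hMdef
  have hMbdd : BddAbove (Set.range fun s : Icc (0:ℝ) T => ‖S' ↑s‖) := by
    refine BddAbove.mono ?_ (((isCompact_Icc : IsCompact (Icc (0:ℝ) T))).image hS'cont.norm).bddAbove
    rintro y ⟨s, rfl⟩
    exact ⟨s, s.2, rfl⟩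
  have hM : ∀ s ∈ Icc (0:ℝ) T, ‖S' s‖ ≤ M := fun s hs => le_ciSup hMbdd (⟨s, hs⟩ : Icc (0:ℝ) T)
  have hM0 : 0 ≤ M := le_trans (norm_nonneg (S' 0)) (hM 0 ⟨le_refl 0, hT.le⟩)
  -- abbreviations for the integrands
  have hfW : ∀ a b : ℝ,
      IntervalIntegrable (fun s => Complex.I • (star (W s) * Hb s)) volume a b :=
    prop_star_integrand_int hHb hW
  have hgU : ∀ a b : ℝ,
      IntervalIntegrable (fun s => (-Complex.I) • (H s * U s)) volume a b :=
    prop_integrand_int hH hU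
  have hq : ∀ a b : ℝ, IntervalIntegrable
      (fun s => Complex.I • (star (W s) * Hb s) * S' s + star (W s) * (H s - Hb s))
      volume a b :=
    fun a b => (aux_intInt_mul_cont hfW hS'cont a b).add
      (aux_cont_mul_intInt hhd hW.1.star a b)
  -- step Q
  have stepQ : ∀ τ : ℝ, 0 ≤ τ → star (W τ) * S' τ
      = ∫ s in (0:ℝ)..τ,
          (Complex.I • (star (W s) * Hb s) * S' s + star (W s) * (H s - Hb s)) := by
    intro τ hτ
    have h := aux_prod_rule (1 : E →L[ℂ] E) 0 hfW hhd hτ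
    simp only [zero_add, mul_zero] at h
    simp only [← prop_star_eq hHb hsab hW, ← hS] at h
    exact h
  -- step K
  have stepK : ∀ τ : ℝ, 0 ≤ τ → star (W τ) * U τ
      = 1 + ∫ s in (0:ℝ)..τ,
          (Complex.I • (star (W s) * Hb s) * U s
            + star (W s) * ((-Complex.I) • (H s * U s))) := by
    intro τ hτ
    have h := aux_prod_rule (1 : E →L[ℂ] E) 1 hfW hgU hτ
    simp only [← prop_star_eq hHb hsab hW, ← prop_add_eq hH hU] at h
    rw [h, one_mul]
  -- step QU
  have stepQU : ∀ τ : ℝ, 0 ≤ τ → (star (W τ) * S' τ) * U τ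
      = ∫ s in (0:ℝ)..τ,
          ((Complex.I • (star (W s) * Hb s) * S' s + star (W s) * (H s - Hb s)) * U s
            + (star (W s) * S' s) * ((-Complex.I) • (H s * U s))) := by
    intro τ hτ
    have h := aux_prod_rule (0 : E →L[ℂ] E) 1 hq hgU hτ
    simp only [zero_add, zero_mul] at h
    simp only [← prop_add_eq hH hU] at h
    rw [← stepQ τ hτ] at h
    rw [h]
    refine intervalIntegral.integral_congr fun s hs => ?_
    rw [Set.uIcc_of_le hτ] at hs
    rw [← stepQ s hs.1]
  -- pointwise algebra
  have hc : ∀ s : ℝ,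
      Complex.I • (star (W s) * Hb s) * U s + star (W s) * ((-Complex.I) • (H s * U s))
        = (-Complex.I) • ((star (W s) * (H s - Hb s)) * U s) := by
    intro s
    rw [smul_mul_assoc, mul_smul_comm, mul_sub, sub_mul, ← mul_assoc, neg_smul, neg_smul,
      smul_sub]
    abel
  have he : ∀ s : ℝ,
      (Complex.I • (star (W s) * Hb s) * S' s + star (W s) * (H s - Hb s)) * U s
          + (star (W s) * S' s) * ((-Complex.I) • (H s * U s))
        = (star (W s) * (H s - Hb s)) * U s
          + (Complex.I • (((star (W s) * Hb s) * S' s) * U s)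
             - Complex.I • ((star (W s) * S' s) * (H s * U s))) := by
    intro s
    rw [add_mul, smul_mul_assoc, smul_mul_assoc, mul_smul_comm, neg_smul]
    abel
  -- integrabilities
  have hY : ∀ a b : ℝ,
      IntervalIntegrable (fun s => (star (W s) * (H s - Hb s)) * U s) volume a b :=
    aux_intInt_mul_cont (aux_cont_mul_intInt hhd hW.1.star) hU.1
  have he1 : ∀ a b : ℝ, IntervalIntegrable
      (fun s => Complex.I • (((star (W s) * Hb s) * S' s) * U s)) volume a b := fun a b =>
    ((aux_intInt_mul_cont (aux_intInt_mul_cont (aux_cont_mul_intInt hHb hW.1.star) hS'cont)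
      hU.1 a b).smul Complex.I)
  have he2 : ∀ a b : ℝ, IntervalIntegrable
      (fun s => Complex.I • ((star (W s) * S' s) * (H s * U s))) volume a b := fun a b =>
    ((aux_cont_mul_intInt (aux_intInt_mul_cont hH hU.1) (hW.1.star.mul hS'cont) a b).smul
      Complex.I)
  -- Y equation
  have hYeq : ∀ τ : ℝ, 0 ≤ τ →
      (∫ s in (0:ℝ)..τ, (star (W s) * (H s - Hb s)) * U s)
        = (star (W τ) * S' τ) * U τ
          - ∫ s in (0:ℝ)..τ,
              (Complex.I • (((star (W s) * Hb s) * S' s) * U s)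
                - Complex.I • ((star (W s) * S' s) * (H s * U s))) := by
    intro τ hτ
    have h := stepQU τ hτ
    rw [intervalIntegral.integral_congr (fun s _ => he s)] at h
    rw [intervalIntegral.integral_add (hY 0 τ) ((he1 0 τ).sub (he2 0 τ))] at h
    exact eq_sub_of_add_eq h.symm
  -- key identity
  have hKey : star (W t) * U t - 1
      = (-Complex.I) • (∫ s in (0:ℝ)..t, (star (W s) * (H s - Hb s)) * U s) := by
    rw [stepK t ht0, add_sub_cancel_left, intervalIntegral.integral_congr (fun s _ => hc s),
      intervalIntegral.integral_smul]
  have hDiff : U t - W t = W t * (star (W t) * U t - 1) := by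
    rw [mul_sub, mul_one, ← mul_assoc, prop_self_mul_star hHb hsab hW t ht0, one_mul]
  have hnW : ∀ s ∈ Icc (0:ℝ) T, ‖W s‖ ≤ 1 := fun s hs => prop_norm_le_s3 hHb hsab hW s hs.1
  have hnU : ∀ s ∈ Icc (0:ℝ) T, ‖U s‖ ≤ 1 := fun s hs => prop_norm_le_s3 hH hsa hU s hs.1
  have hnsW : ∀ s ∈ Icc (0:ℝ) T, ‖star (W s)‖ ≤ 1 := fun s hs => by
    rw [norm_star]; exact hnW s hs
  have hbound_int : IntervalIntegrable (fun s => M * ‖Hb s‖ + M * ‖H s‖) volume 0 t :=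
    (((hHb 0 t).norm.const_mul M).add ((hH 0 t).norm.const_mul M))
  have hEnorm : ‖∫ s in (0:ℝ)..t,
        (Complex.I • (((star (W s) * Hb s) * S' s) * U s)
          - Complex.I • ((star (W s) * S' s) * (H s * U s)))‖
      ≤ |∫ s in (0:ℝ)..t, (M * ‖Hb s‖ + M * ‖H s‖)| := by
    refine intervalIntegral.norm_integral_le_abs_of_norm_le ?_ hbound_int
    refine (ae_restrict_mem measurableSet_uIoc).mono fun s hs => ?_
    rw [Set.uIoc_of_le ht0] at hs
    have hsIcc : s ∈ Icc (0:ℝ) T := ⟨hs.1.le, hs.2.trans htT⟩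
    have h1 : ‖((star (W s) * Hb s) * S' s) * U s‖ ≤ M * ‖Hb s‖ := by
      calc ‖((star (W s) * Hb s) * S' s) * U s‖
          ≤ ‖(star (W s) * Hb s) * S' s‖ * ‖U s‖ := norm_mul_le _ _
        _ ≤ ‖(star (W s) * Hb s) * S' s‖ * 1 :=
            mul_le_mul_of_nonneg_left (hnU s hsIcc) (norm_nonneg _)
        _ = ‖(star (W s) * Hb s) * S' s‖ := mul_one _
        _ ≤ ‖star (W s) * Hb s‖ * ‖S' s‖ := norm_mul_le _ _
        _ ≤ (‖star (W s)‖ * ‖Hb s‖) * ‖S' s‖ :=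
            mul_le_mul_of_nonneg_right (norm_mul_le _ _) (norm_nonneg _)
        _ ≤ (1 * ‖Hb s‖) * ‖S' s‖ :=
            mul_le_mul_of_nonneg_right
              (mul_le_mul_of_nonneg_right (hnsW s hsIcc) (norm_nonneg _)) (norm_nonneg _)
        _ = ‖Hb s‖ * ‖S' s‖ := by rw [one_mul]
        _ ≤ ‖Hb s‖ * M := mul_le_mul_of_nonneg_left (hM s hsIcc) (norm_nonneg _)
        _ = M * ‖Hb s‖ := mul_comm _ _
    have h2 : ‖(star (W s) * S' s) * (H s * U s)‖ ≤ M * ‖H s‖ := by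
      calc ‖(star (W s) * S' s) * (H s * U s)‖
          ≤ ‖star (W s) * S' s‖ * ‖H s * U s‖ := norm_mul_le _ _
        _ ≤ (‖star (W s)‖ * ‖S' s‖) * (‖H s‖ * ‖U s‖) :=
            mul_le_mul (norm_mul_le _ _) (norm_mul_le _ _) (norm_nonneg _)
              (mul_nonneg (norm_nonneg _) (norm_nonneg _))
        _ ≤ (1 * M) * (‖H s‖ * ‖U s‖) :=
            mul_le_mul_of_nonneg_right
              (mul_le_mul (hnsW s hsIcc) (hM s hsIcc) (norm_nonneg _) zero_le_one)
              (mul_nonneg (norm_nonneg _) (norm_nonneg _))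
        _ = M * (‖H s‖ * ‖U s‖) := by rw [one_mul]
        _ ≤ M * (‖H s‖ * 1) :=
            mul_le_mul_of_nonneg_left
              (mul_le_mul_of_nonneg_left (hnU s hsIcc) (norm_nonneg _)) hM0
        _ = M * ‖H s‖ := by rw [mul_one]
    calc ‖Complex.I • (((star (W s) * Hb s) * S' s) * U s)
          - Complex.I • ((star (W s) * S' s) * (H s * U s))‖
        ≤ ‖Complex.I • (((star (W s) * Hb s) * S' s) * U s)‖
          + ‖Complex.I • ((star (W s) * S' s) * (H s * U s))‖ := norm_sub_le _ _
      _ = ‖((star (W s) * Hb s) * S' s) * U s‖ + ‖(star (W s) * S' s) * (H s * U s)‖ := by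
          rw [norm_smul, norm_smul, Complex.norm_I, one_mul, one_mul]
      _ ≤ M * ‖Hb s‖ + M * ‖H s‖ := add_le_add h1 h2
  have hQtU : ‖(star (W t) * S' t) * U t‖ ≤ M := by
    nlinarith [norm_mul_le (star (W t) * S' t) (U t), norm_mul_le (star (W t)) (S' t),
      hnsW t ⟨ht0, htT⟩, hnU t ⟨ht0, htT⟩, hM t ⟨ht0, htT⟩, hM0,
      norm_nonneg (star (W t)), norm_nonneg (S' t), norm_nonneg (U t),
      norm_nonneg (star (W t) * S' t)]
  have habs : |∫ s in (0:ℝ)..t, (M * ‖Hb s‖ + M * ‖H s‖)|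
      = ∫ s in (0:ℝ)..t, (M * ‖Hb s‖ + M * ‖H s‖) :=
    abs_of_nonneg (intervalIntegral.integral_nonneg ht0 fun s _ => by positivity)
  have hsplit2 : (∫ s in (0:ℝ)..t, (M * ‖Hb s‖ + M * ‖H s‖))
      = M * (∫ s in (0:ℝ)..t, ‖Hb s‖) + M * ∫ s in (0:ℝ)..t, ‖H s‖ := by
    rw [intervalIntegral.integral_add ((hHb 0 t).norm.const_mul M)
      ((hH 0 t).norm.const_mul M), intervalIntegral.integral_const_mul,
      intervalIntegral.integral_const_mul]
  have hIb : (∫ s in (0:ℝ)..t, ‖Hb s‖) ≤ ∫ s in (0:ℝ)..T, ‖Hb s‖ :=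
    intervalIntegral.integral_mono_interval (le_refl 0) ht0 htT
      (Filter.Eventually.of_forall fun s => norm_nonneg _) ((hHb 0 T).norm)
  have hIa : (∫ s in (0:ℝ)..t, ‖H s‖) ≤ ∫ s in (0:ℝ)..T, ‖H s‖ :=
    intervalIntegral.integral_mono_interval (le_refl 0) ht0 htT
      (Filter.Eventually.of_forall fun s => norm_nonneg _) ((hH 0 T).norm)
  have hE2 : ‖∫ s in (0:ℝ)..t,
        (Complex.I • (((star (W s) * Hb s) * S' s) * U s)
          - Complex.I • ((star (W s) * S' s) * (H s * U s)))‖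
      ≤ M * (∫ s in (0:ℝ)..t, ‖Hb s‖) + M * ∫ s in (0:ℝ)..t, ‖H s‖ :=
    hEnorm.trans (le_of_eq (habs.trans hsplit2))
  calc ‖U t - W t‖ = ‖W t * (star (W t) * U t - 1)‖ := by rw [← hDiff]
    _ ≤ ‖W t‖ * ‖star (W t) * U t - 1‖ := norm_mul_le _ _
    _ ≤ 1 * ‖star (W t) * U t - 1‖ :=
        mul_le_mul_of_nonneg_right (hnW t ⟨ht0, htT⟩) (norm_nonneg _)
    _ = ‖star (W t) * U t - 1‖ := one_mul _
    _ = ‖∫ s in (0:ℝ)..t, (star (W s) * (H s - Hb s)) * U s‖ := by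
        rw [hKey, norm_smul, norm_neg, Complex.norm_I, one_mul]
    _ = ‖(star (W t) * S' t) * U t
          - ∫ s in (0:ℝ)..t,
              (Complex.I • (((star (W s) * Hb s) * S' s) * U s)
                - Complex.I • ((star (W s) * S' s) * (H s * U s)))‖ := by
        rw [hYeq t ht0]
    _ ≤ ‖(star (W t) * S' t) * U t‖
          + ‖∫ s in (0:ℝ)..t,
              (Complex.I • (((star (W s) * Hb s) * S' s) * U s)
                - Complex.I • ((star (W s) * S' s) * (H s * U s)))‖ := norm_sub_le _ _
    _ ≤ M * (1 + (∫ s in (0:ℝ)..T, ‖H s‖) + ∫ s in (0:ℝ)..T, ‖Hb s‖) := by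
        nlinarith [mul_le_mul_of_nonneg_left hIb hM0, mul_le_mul_of_nonneg_left hIa hM0,
          hQtU, hE2]

end MainBound


/-- Convergence of parameter-dependent evolutions.  `l` is a (nontrivial) filter of
neighborhoods of the limit point `κ₀` of the index set `A` (possibly `κ₀ = ∞`), so
`l ≤ 𝓟 A`.  For every `κ ∈ A` and `t ∈ [0,T]` one has the universal bound
`‖U_κ(t) − Ū_κ(t)‖ ≤ ‖S_κ‖_{∞,T} (1 + ‖H_κ‖_{1,T} + ‖H̄_κ‖_{1,T})`, and consequently,
if that bound tends to `0` along `l`, then `sup_{t∈[0,T]} ‖U_κ(t) − Ū_κ(t)‖ → 0` along `l`. -/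
theorem parameter_convergence
    (T : ℝ) (hT : 0 < T) (A : Set ℝ) (l : Filter ℝ) [l.NeBot] (hl : l ≤ Filter.principal A)
    (H Hbar : ℝ → ℝ → E →L[ℂ] E) (U Ubar : ℝ → ℝ → E →L[ℂ] E)
    (hHint : ∀ κ ∈ A, ∀ a b : ℝ, IntervalIntegrable (H κ) volume a b)
    (hHbarint : ∀ κ ∈ A, ∀ a b : ℝ, IntervalIntegrable (Hbar κ) volume a b)
    (hHsa : ∀ κ ∈ A, ∀ t : ℝ, IsSelfAdjoint (H κ t))
    (hHbarsa : ∀ κ ∈ A, ∀ t : ℝ, IsSelfAdjoint (Hbar κ t))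
    (hU : ∀ κ ∈ A, IsPropagator (H κ) (U κ))
    (hUbar : ∀ κ ∈ A, IsPropagator (Hbar κ) (Ubar κ))
    (S : ℝ → ℝ → E →L[ℂ] E)
    (hS : ∀ κ ∈ A, ∀ t : ℝ, S κ t = ∫ s in (0:ℝ)..t, (H κ s - Hbar κ s)) :
    (∀ κ ∈ A, ∀ t ∈ Set.Icc (0:ℝ) T,
      ‖U κ t - Ubar κ t‖
        ≤ (⨆ s : Set.Icc (0:ℝ) T, ‖S κ s‖) *
          (1 + (∫ s in (0:ℝ)..T, ‖H κ s‖) + (∫ s in (0:ℝ)..T, ‖Hbar κ s‖)))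
    ∧
    (Filter.Tendsto
        (fun κ => (⨆ s : Set.Icc (0:ℝ) T, ‖S κ s‖) *
          (1 + (∫ s in (0:ℝ)..T, ‖H κ s‖) + (∫ s in (0:ℝ)..T, ‖Hbar κ s‖)))
        l (nhds 0) →
      Filter.Tendsto (fun κ => ⨆ t : Set.Icc (0:ℝ) T, ‖U κ t - Ubar κ t‖) l (nhds 0)) := by
  have hbound : ∀ κ ∈ A, ∀ t ∈ Set.Icc (0:ℝ) T,
      ‖U κ t - Ubar κ t‖
        ≤ (⨆ s : Set.Icc (0:ℝ) T, ‖S κ s‖) *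
          (1 + (∫ s in (0:ℝ)..T, ‖H κ s‖) + (∫ s in (0:ℝ)..T, ‖Hbar κ s‖)) :=
    fun κ hκ t ht => main_bound hT (hHint κ hκ) (hHbarint κ hκ) (hHsa κ hκ) (hHbarsa κ hκ)
      (hU κ hκ) (hUbar κ hκ) (hS κ hκ) ht
  refine ⟨hbound, fun hTend => ?_⟩
  have hAev : ∀ᶠ κ in l, κ ∈ A := hl (Filter.mem_principal_self A)
  haveI : Nonempty (Set.Icc (0:ℝ) T) := ⟨⟨0, le_refl 0, hT.le⟩⟩
  refine squeeze_zero' (hAev.mono fun κ _ => Real.iSup_nonneg fun s => norm_nonneg _)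
    (hAev.mono fun κ hκ => ciSup_le fun t => hbound κ hκ t t.2) hTend
end

section
/- Strong-coupling limit bound: Let H₀, H₁ ∈ B(ℋ) be bounded self-adjoint operators, and assume H₀ has the finite spectral representation H₀ = Σ_{ℓ=1}^m E_ℓ P_ℓ with real eigenvalues E_ℓ satisfying E_k ≠ E_ℓ for k ≠ ℓ, where P₁,…,P_m are self-adjoint projections with P_k P_ℓ = δ_{kℓ} P_ℓ and Σ_{ℓ=1}^m P_ℓ = 1. Let η = min_{k ≠ ℓ} |E_k − E_ℓ| and let H_Z = Σ_{ℓ=1}^m P_ℓ H₁ P_ℓ be the Zeno Hamiltonian. Then for every κ > 0, every T ≥ 0 and every t ∈ [0,T]: ‖exp(−it(κ H₀ + H₁)) − exp(−it(κ H₀ + H_Z))‖ ≤ (2√m/(κη))·‖H₁‖·(1 + 2T‖H₁‖). -/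
open MeasureTheory

variable {E : Type*} [NormedAddCommGroup E] [InnerProductSpace ℂ E] [CompleteSpace E]
  [TopologicalSpace.SeparableSpace E]

set_option linter.unusedSectionVars false
set_option maxHeartbeats 1000000
set_option synthInstance.maxHeartbeats 200000

open NormedSpace Complex
open scoped InnerProductSpace

lemma pyth {m : ℕ} (v : Fin m → E) (h : ∀ k l, k ≠ l → ⟪v k, v l⟫_ℂ = 0) :
    ‖∑ l, v l‖ ^ 2 = ∑ l, ‖v l‖ ^ 2 := by
  have : (⟪∑ k, v k, ∑ l, v l⟫_ℂ) = ∑ k, ⟪v k, v k⟫_ℂ := by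
    rw [sum_inner]
    refine Finset.sum_congr rfl fun k _ => ?_
    rw [inner_sum]
    rw [Finset.sum_eq_single k (fun l _ hlk => h k l (Ne.symm hlk)) (by simp)]
  have h2 : ∀ x : E, ‖x‖ ^ 2 = RCLike.re (⟪x, x⟫_ℂ) := fun x => by
    rw [← inner_self_eq_norm_sq (𝕜 := ℂ)]
  calc ‖∑ l, v l‖ ^ 2 = RCLike.re (⟪∑ k, v k, ∑ l, v l⟫_ℂ) := h2 _
    _ = ∑ k, RCLike.re (⟪v k, v k⟫_ℂ) := by rw [this, map_sum]
    _ = ∑ l, ‖v l‖ ^ 2 := by simp [← h2]; norm_cast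

section Proj
variable {m : ℕ} (P : Fin m → E →L[ℂ] E)
  (hPsa : ∀ l, IsSelfAdjoint (P l))
  (hPorth : ∀ k l : Fin m, P k * P l = if k = l then P l else 0)
  (hPsum : ∑ l, P l = 1)

include hPsa hPorth in
lemma proj_inner_orth (k l : Fin m) (hkl : k ≠ l) (u v : E) : ⟪P k u, P l v⟫_ℂ = 0 := by
  have hadj : ContinuousLinearMap.adjoint (P k) = P k :=
    (ContinuousLinearMap.isSelfAdjoint_iff'.mp (hPsa k))
  rw [← hadj, ContinuousLinearMap.adjoint_inner_left]
  have : P k (P l v) = (P k * P l) v := rfl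
  rw [this, hPorth k l, if_neg hkl]
  simp

include hPsa hPorth hPsum in
lemma proj_parseval (x : E) : ∑ l, ‖P l x‖ ^ 2 = ‖x‖ ^ 2 := by
  have hx : x = ∑ l, P l x := by
    have := congrArg (fun A : E →L[ℂ] E => A x) hPsum
    simpa using this.symm
  conv_rhs => rw [hx]
  rw [pyth _ (fun k l hkl => proj_inner_orth P hPsa hPorth k l hkl x x)]
end Proj

section Proj2
variable {m : ℕ} (P : Fin m → E →L[ℂ] E)
  (hPsa : ∀ l, IsSelfAdjoint (P l))
  (hPorth : ∀ k l : Fin m, P k * P l = if k = l then P l else 0)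
  (hPsum : ∑ l, P l = 1)

include hPsa hPorth hPsum in
lemma proj_norm_le (l : Fin m) (x : E) : ‖P l x‖ ≤ ‖x‖ := by
  have h1 : ‖P l x‖ ^ 2 ≤ ‖x‖ ^ 2 := by
    rw [← proj_parseval P hPsa hPorth hPsum x]
    exact Finset.single_le_sum (f := fun i => ‖P i x‖ ^ 2) (fun i _ => sq_nonneg _) (Finset.mem_univ l)
  nlinarith [norm_nonneg (P l x), norm_nonneg x]

include hPsa hPorth in
lemma norm_sq_sum_proj_mul (A : Fin m → E →L[ℂ] E) (x : E) :
    ‖(∑ k, P k * A k) x‖ ^ 2 = ∑ k, ‖P k ((A k) x)‖ ^ 2 := by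
  have h1 : (∑ k, P k * A k) x = ∑ k, P k ((A k) x) := by
    rw [ContinuousLinearMap.sum_apply]; rfl
  rw [h1, pyth _ (fun k l hkl => proj_inner_orth P hPsa hPorth k l hkl _ _)]

include hPsa hPorth hPsum in
lemma norm_pinch (H₁ : E →L[ℂ] E) : ‖∑ l, P l * H₁ * P l‖ ≤ ‖H₁‖ := by
  refine ContinuousLinearMap.opNorm_le_bound _ (norm_nonneg H₁) fun x => ?_
  have h2 : ‖(∑ l, P l * H₁ * P l) x‖ ^ 2 ≤ (‖H₁‖ * ‖x‖) ^ 2 := by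
    have he : ∀ l : Fin m, P l * H₁ * P l = P l * (H₁ * P l) := fun l => mul_assoc _ _ _
    simp_rw [he]
    rw [norm_sq_sum_proj_mul P hPsa hPorth]
    calc ∑ k, ‖P k ((H₁ * P k) x)‖ ^ 2 ≤ ∑ k, (‖H₁‖ * ‖P k x‖) ^ 2 := by
          refine Finset.sum_le_sum fun k _ => ?_
          have hb1 : ‖P k ((H₁ * P k) x)‖ ≤ ‖H₁ (P k x)‖ :=
            proj_norm_le P hPsa hPorth hPsum k _
          have hb2 : ‖H₁ (P k x)‖ ≤ ‖H₁‖ * ‖P k x‖ := H₁.le_opNorm _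
          have := hb1.trans hb2
          nlinarith [norm_nonneg (P k ((H₁ * P k) x))]
      _ = ‖H₁‖ ^ 2 * ∑ k, ‖P k x‖ ^ 2 := by rw [Finset.mul_sum]; ring_nf
      _ = (‖H₁‖ * ‖x‖) ^ 2 := by rw [proj_parseval P hPsa hPorth hPsum x]; ring
  nlinarith [norm_nonneg ((∑ l, P l * H₁ * P l) x), mul_nonneg (norm_nonneg H₁) (norm_nonneg x)]
end Proj2

section Ybits
variable {m : ℕ} (P : Fin m → E →L[ℂ] E)
  (hPsa : ∀ l, IsSelfAdjoint (P l))
  (hPorth : ∀ k l : Fin m, P k * P l = if k = l then P l else 0)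
  (hPsum : ∑ l, P l = 1)
  (Ev : Fin m → ℝ) (η : ℝ) (hηpos : 0 < η)
  (hη : ∀ k l : Fin m, k ≠ l → η ≤ |Ev k - Ev l|)

-- coefficient
noncomputable def cf (k l : Fin m) : ℂ := if l = k then 0 else ((Ev k : ℂ) - Ev l)⁻¹

include hη hηpos in
lemma cf_abs_le (k l : Fin m) : ‖cf Ev k l‖ ≤ η⁻¹ := by
  unfold cf
  split_ifs with h
  · simp; positivity
  · have hne : k ≠ l := fun hc => h (hc ▸ rfl)
    have h1 : ((Ev k : ℂ) - Ev l) = ((Ev k - Ev l : ℝ) : ℂ) := by push_cast; ring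
    rw [h1, norm_inv, Complex.norm_real, Real.norm_eq_abs]
    exact inv_anti₀ hηpos (hη k l hne)

noncomputable def Cop (k : Fin m) : E →L[ℂ] E := ∑ l, cf Ev k l • P l

include hPsa hPorth hPsum hηpos hη in
lemma Cop_norm_le (k : Fin m) (x : E) : ‖Cop P Ev k x‖ ≤ η⁻¹ * ‖x‖ := by
  have h1 : Cop P Ev k x = ∑ l, cf Ev k l • P l x := by
    unfold Cop; rw [ContinuousLinearMap.sum_apply]; rfl
  have h2 : ‖Cop P Ev k x‖ ^ 2 = ∑ l, ‖cf Ev k l • P l x‖ ^ 2 := by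
    rw [h1]
    refine pyth _ fun a b hab => ?_
    rw [inner_smul_left, inner_smul_right, proj_inner_orth P hPsa hPorth a b hab, mul_zero, mul_zero]
  have h3 : ‖Cop P Ev k x‖ ^ 2 ≤ (η⁻¹ * ‖x‖) ^ 2 := by
    rw [h2]
    calc ∑ l, ‖cf Ev k l • P l x‖ ^ 2 ≤ ∑ l, (η⁻¹ * ‖P l x‖) ^ 2 := by
          refine Finset.sum_le_sum fun l _ => ?_
          rw [norm_smul]
          have h4 := cf_abs_le Ev η hηpos hη k l
          have h5 : (0:ℝ) ≤ ‖P l x‖ := norm_nonneg _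
          exact pow_le_pow_left₀ (mul_nonneg (norm_nonneg _) h5)
            (mul_le_mul_of_nonneg_right h4 h5) 2
      _ = η⁻¹ ^ 2 * ∑ l, ‖P l x‖ ^ 2 := by rw [Finset.mul_sum]; ring_nf
      _ = (η⁻¹ * ‖x‖) ^ 2 := by rw [proj_parseval P hPsa hPorth hPsum x]; ring
  nlinarith [norm_nonneg (Cop P Ev k x), mul_nonneg (le_of_lt (inv_pos.mpr hηpos)) (norm_nonneg x)]

include hPsa hPorth hPsum hηpos hη in
lemma Y_norm_le (H₁ : E →L[ℂ] E) :
    ‖∑ k, P k * (H₁ * Cop P Ev k)‖ ≤ Real.sqrt m * ‖H₁‖ / η := by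
  have hc : 0 ≤ Real.sqrt m * ‖H₁‖ / η := by positivity
  refine ContinuousLinearMap.opNorm_le_bound _ hc fun x => ?_
  have h2 : ‖(∑ k, P k * (H₁ * Cop P Ev k)) x‖ ^ 2 ≤ (Real.sqrt m * ‖H₁‖ / η * ‖x‖) ^ 2 := by
    rw [norm_sq_sum_proj_mul P hPsa hPorth]
    have hsq : (Real.sqrt m) ^ 2 = (m : ℝ) := Real.sq_sqrt (Nat.cast_nonneg m)
    calc ∑ k, ‖P k ((H₁ * Cop P Ev k) x)‖ ^ 2
        ≤ ∑ _k : Fin m, (‖H₁‖ * (η⁻¹ * ‖x‖)) ^ 2 := by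
          refine Finset.sum_le_sum fun k _ => ?_
          have hb1 : ‖P k ((H₁ * Cop P Ev k) x)‖ ≤ ‖H₁ (Cop P Ev k x)‖ :=
            proj_norm_le P hPsa hPorth hPsum k _
          have hb2 : ‖H₁ (Cop P Ev k x)‖ ≤ ‖H₁‖ * ‖Cop P Ev k x‖ := H₁.le_opNorm _
          have hb3 := Cop_norm_le P hPsa hPorth hPsum Ev η hηpos hη k x
          have hb4 : ‖P k ((H₁ * Cop P Ev k) x)‖ ≤ ‖H₁‖ * (η⁻¹ * ‖x‖) := by
            refine (hb1.trans hb2).trans ?_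
            exact mul_le_mul_of_nonneg_left hb3 (norm_nonneg H₁)
          nlinarith [norm_nonneg (P k ((H₁ * Cop P Ev k) x))]
      _ = (Real.sqrt m * ‖H₁‖ / η * ‖x‖) ^ 2 := by
          rw [Finset.sum_const, Finset.card_univ, Fintype.card_fin, nsmul_eq_mul]
          field_simp
          ring_nf
          rw [hsq]
          ring
  nlinarith [norm_nonneg ((∑ k, P k * (H₁ * Cop P Ev k)) x),
    mul_nonneg hc (norm_nonneg x)]
end Ybits

section Comm
variable {m : ℕ} (P : Fin m → E →L[ℂ] E)
  (hPorth : ∀ k l : Fin m, P k * P l = if k = l then P l else 0)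
  (hPsum : ∑ l, P l = 1)
  (Ev : Fin m → ℝ)
  (hEdist : ∀ k l : Fin m, k ≠ l → Ev k ≠ Ev l)

include hPorth in
lemma H₀_mul_P (H₀ : E →L[ℂ] E) (hH₀ : H₀ = ∑ l, ((Ev l : ℂ)) • P l) (k : Fin m) :
    H₀ * P k = (Ev k : ℂ) • P k := by
  rw [hH₀, Finset.sum_mul]
  have : ∀ j : Fin m, ((Ev j : ℂ) • P j) * P k = if j = k then (Ev j : ℂ) • P k else 0 := by
    intro j
    rw [smul_mul_assoc, hPorth j k]
    split_ifs <;> simp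
  simp_rw [this]
  simp

include hPorth in
lemma P_mul_H₀ (H₀ : E →L[ℂ] E) (hH₀ : H₀ = ∑ l, ((Ev l : ℂ)) • P l) (k : Fin m) :
    P k * H₀ = (Ev k : ℂ) • P k := by
  rw [hH₀, Finset.mul_sum]
  have : ∀ j : Fin m, P k * ((Ev j : ℂ) • P j) = if j = k then (Ev j : ℂ) • P k else 0 := by
    intro j
    rw [mul_smul_comm, hPorth k j]
    by_cases h : j = k
    · subst h; simp
    · rw [if_neg (fun hc => h hc.symm), if_neg h, smul_zero]
  simp_rw [this]
  simp

include hPorth hPsum hEdist in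
lemma key_Cop (H₀ : E →L[ℂ] E) (hH₀ : H₀ = ∑ l, ((Ev l : ℂ)) • P l) (k : Fin m) :
    (Ev k : ℂ) • Cop P Ev k - Cop P Ev k * H₀ = 1 - P k := by
  have h1 : Cop P Ev k * H₀ = ∑ l, (cf Ev k l * (Ev l : ℂ)) • P l := by
    unfold Cop
    rw [Finset.sum_mul]
    refine Finset.sum_congr rfl fun l _ => ?_
    rw [smul_mul_assoc, P_mul_H₀ P hPorth Ev H₀ hH₀ l, smul_smul]
  have h2 : (Ev k : ℂ) • Cop P Ev k = ∑ l, ((Ev k : ℂ) * cf Ev k l) • P l := by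
    unfold Cop
    rw [Finset.smul_sum]
    refine Finset.sum_congr rfl fun l _ => ?_
    rw [smul_smul]
  rw [h1, h2, ← Finset.sum_sub_distrib]
  have h3 : ∀ l : Fin m, ((Ev k : ℂ) * cf Ev k l) • P l - (cf Ev k l * (Ev l : ℂ)) • P l
      = (if l = k then 0 else P l) := by
    intro l
    rw [← sub_smul]
    have : (Ev k : ℂ) * cf Ev k l - cf Ev k l * (Ev l : ℂ) = cf Ev k l * ((Ev k : ℂ) - Ev l) := by
      ring
    rw [this]
    unfold cf
    split_ifs with h
    · simp
    · have hne : k ≠ l := fun hc => h (hc ▸ rfl)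
      have hnz : ((Ev k : ℂ) - Ev l) ≠ 0 := by
        have := hEdist k l hne
        intro hc
        apply this
        have : ((Ev k : ℝ) : ℂ) = ((Ev l : ℝ) : ℂ) := by linear_combination hc
        exact_mod_cast this
      rw [inv_mul_cancel₀ hnz, one_smul]
  simp_rw [h3]
  have h4 : ∑ l, (if l = k then (0 : E →L[ℂ] E) else P l)
      = ∑ l, (P l - if l = k then P l else 0) := by
    refine Finset.sum_congr rfl fun l _ => ?_
    split_ifs <;> simp
  rw [h4, Finset.sum_sub_distrib, hPsum, Finset.sum_ite_eq' Finset.univ k P,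
    if_pos (Finset.mem_univ k)]

include hPorth hPsum hEdist in
lemma comm_H₀_Y (H₀ H₁ : E →L[ℂ] E) (hH₀ : H₀ = ∑ l, ((Ev l : ℂ)) • P l) :
    H₀ * (∑ k, P k * (H₁ * Cop P Ev k)) - (∑ k, P k * (H₁ * Cop P Ev k)) * H₀
      = H₁ - ∑ l, P l * H₁ * P l := by
  rw [Finset.mul_sum, Finset.sum_mul, ← Finset.sum_sub_distrib]
  have h1 : ∀ k : Fin m, H₀ * (P k * (H₁ * Cop P Ev k)) - P k * (H₁ * Cop P Ev k) * H₀
      = P k * H₁ - P k * H₁ * P k := by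
    intro k
    have e1 : H₀ * (P k * (H₁ * Cop P Ev k)) = P k * (H₁ * ((Ev k : ℂ) • Cop P Ev k)) := by
      rw [← mul_assoc, H₀_mul_P P hPorth Ev H₀ hH₀ k, smul_mul_assoc, mul_smul_comm,
        mul_smul_comm]
    have e2 : P k * (H₁ * Cop P Ev k) * H₀ = P k * (H₁ * (Cop P Ev k * H₀)) := by
      rw [mul_assoc, mul_assoc]
    rw [e1, e2, ← mul_sub, ← mul_sub, key_Cop P hPorth hPsum Ev hEdist H₀ hH₀ k]
    rw [mul_sub, mul_sub, mul_one, ← mul_assoc]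
  simp_rw [h1]
  rw [Finset.sum_sub_distrib, ← Finset.sum_mul, hPsum, one_mul]
end Comm

section Core
variable [Nontrivial E]

lemma exp_norm_one' (A : E →L[ℂ] E) (hA : IsSelfAdjoint A) (r : ℝ) :
    ‖NormedSpace.exp (r • ((-I) • A))‖ = 1 := by
  have hsa : IsSelfAdjoint ((((-r : ℝ)) : ℂ) • A) := by
    show star _ = _
    rw [star_smul, hA.star_eq, Complex.star_def, Complex.conj_ofReal]
  have h1 : r • ((-I) • A) = I • ((((-r : ℝ)) : ℂ) • A) := by
    have : r • ((-I) • A) = ((r : ℂ)) • ((-I) • A) := by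
      rw [← Complex.coe_algebraMap]; exact (algebraMap_smul ℂ r _).symm
    rw [this, smul_smul, smul_smul]
    congr 1
    push_cast
    ring
  rw [h1]
  let +nondep : NormedAlgebra ℚ (E →L[ℂ] E) := .restrictScalars ℚ ℂ _
  exact CStarRing.norm_coe_unitary
    ⟨_, exp_mem_unitary_of_mem_skewAdjoint (hsa.smul_mem_skewAdjoint conj_I)⟩

lemma core (A B Y W : E →L[ℂ] E) (κ : ℝ) (hκ0 : 0 ≤ κ)
    (hAsa : IsSelfAdjoint A) (hBsa : IsSelfAdjoint B)
    (hkey : A * Y - Y * B = κ • (A - B) + W)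
    (t : ℝ) (ht0 : 0 ≤ t) :
    κ * ‖NormedSpace.exp ((-(I * (t : ℂ))) • A) - NormedSpace.exp ((-(I * (t : ℂ))) • B)‖
      ≤ 2 * ‖Y‖ + t * ‖W‖ := by
  set MA := (-I) • A with hMA
  set MB := (-I) • B with hMB
  have hbridge : ∀ (C : E →L[ℂ] E) (r : ℝ),
      NormedSpace.exp ((-(I * (r : ℂ))) • C) = NormedSpace.exp (r • ((-I) • C)) := by
    intro C r
    congr 1
    have h : r • ((-I) • C) = ((r : ℂ)) • ((-I) • C) := by
      rw [← Complex.coe_algebraMap]; exact (algebraMap_smul ℂ r _).symm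
    rw [h, smul_smul]
    congr 1
    ring
  have hnA : ∀ r : ℝ, ‖NormedSpace.exp (r • MA)‖ = 1 := fun r => exp_norm_one' A hAsa r
  have hnB : ∀ r : ℝ, ‖NormedSpace.exp (r • MB)‖ = 1 := fun r => exp_norm_one' B hBsa r
  set U : ℝ → E →L[ℂ] E := fun s : ℝ => NormedSpace.exp ((t - s) • MA) with hUdef
  set V : ℝ → E →L[ℂ] E := fun s : ℝ => NormedSpace.exp (s • MB) with hVdef
  set D : ℝ → E →L[ℂ] E := fun s => κ • (U s * V s) - U s * (Y * V s) with hDdef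
  set D' : ℝ → E →L[ℂ] E := fun s => U s * (((-I) • W) * V s) with hD'def
  have hVMB : ∀ s : ℝ, V s * MB = MB * V s := fun s =>
    (((Commute.refl MB).smul_right s).exp_right).symm.eq
  have hUderiv : ∀ s : ℝ, HasDerivAt U (-(U s * MA)) s := by
    intro s
    have h1 := (hasDerivAt_exp_smul_const MA (t - s)).scomp (𝕜 := ℝ) s
      ((hasDerivAt_id s).const_sub t)
    exact h1.congr_deriv (neg_one_smul ℝ _)
  have hVderiv : ∀ s : ℝ, HasDerivAt V (V s * MB) s := fun s => hasDerivAt_exp_smul_const MB s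
  have hZ : κ • (MB - MA) - (Y * MB - MA * Y) = (-I) • W := by
    have h1 : MB - MA = (-I) • (B - A) := by rw [hMA, hMB, smul_sub]
    have h2 : Y * MB - MA * Y = (-I) • (Y * B - A * Y) := by
      rw [hMA, hMB, mul_smul_comm, smul_mul_assoc, smul_sub]
    rw [h1, h2, smul_comm κ (-I), ← smul_sub]
    congr 1
    have h4 : κ • (B - A) = -(κ • (A - B)) := by rw [← smul_neg, neg_sub]
    have h5 : Y * B - A * Y = -(κ • (A - B) + W) := by rw [← hkey]; abel
    rw [h4, h5]; abel
  have hDeriv : ∀ s : ℝ, HasDerivAt D (D' s) s := by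
    intro s
    have hF := (hUderiv s).mul (hVderiv s)
    have hG := (hUderiv s).mul ((hVderiv s).const_mul Y)
    have hcomb := (hF.const_smul κ).sub hG
    refine hcomb.congr_deriv ?_
    rw [hVMB s]
    have e1 : (-(U s * MA)) * V s + U s * (MB * V s) = U s * ((MB - MA) * V s) := by
      noncomm_ring
    have e2 : (-(U s * MA)) * (Y * V s) + U s * (Y * (MB * V s))
        = U s * ((Y * MB - MA * Y) * V s) := by noncomm_ring
    rw [e1, e2, ← mul_smul_comm, ← smul_mul_assoc, ← mul_sub, ← sub_mul, hZ]
  have hcont : Continuous D' := by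
    let +nondep : NormedAlgebra ℚ (E →L[ℂ] E) := .restrictScalars ℚ ℂ _
    have hUc : Continuous U :=
      exp_continuous.comp ((continuous_const.sub continuous_id).smul continuous_const)
    have hVc : Continuous V := exp_continuous.comp (continuous_id.smul continuous_const)
    exact hUc.mul (continuous_const.mul hVc)
  have hinteq : ∫ s in (0:ℝ)..t, D' s = D t - D 0 :=
    intervalIntegral.integral_eq_sub_of_hasDerivAt (fun s _ => hDeriv s)
      (hcont.intervalIntegrable 0 t)
  have hbndD' : ∀ s : ℝ, ‖D' s‖ ≤ ‖W‖ := by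
    intro s
    calc ‖D' s‖ = ‖U s * (((-I) • W) * V s)‖ := rfl
      _ ≤ ‖U s‖ * ‖((-I) • W) * V s‖ := norm_mul_le _ _
      _ ≤ ‖U s‖ * (‖(-I) • W‖ * ‖V s‖) := by
          gcongr
          exact norm_mul_le _ _
      _ = ‖W‖ := by
          rw [hnA, hnB, norm_smul]
          simp
  have hbnd : ‖D t - D 0‖ ≤ t * ‖W‖ := by
    rw [← hinteq]
    have h := intervalIntegral.norm_integral_le_of_norm_le_const
      (C := ‖W‖) (f := D') (a := 0) (b := t) (fun s _ => hbndD' s)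
    simpa [_root_.abs_of_nonneg ht0, mul_comm] using h
  have hUt : U t = 1 := by simp [hUdef]
  have hV0 : V 0 = 1 := by simp [hVdef]
  have hfin : κ • (U 0 - V t) = (D 0 - D t) + (U 0 * Y - Y * V t) := by
    have hD0 : D 0 = κ • U 0 - U 0 * Y := by simp [hDdef, hV0]
    have hDt : D t = κ • V t - Y * V t := by simp [hDdef, hUt]
    rw [hD0, hDt, smul_sub]
    abel
  have hnorm2 : κ * ‖U 0 - V t‖ ≤ 2 * ‖Y‖ + t * ‖W‖ := by
    have hY0 : ‖U 0 * Y‖ ≤ ‖Y‖ := by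
      calc ‖U 0 * Y‖ ≤ ‖U 0‖ * ‖Y‖ := norm_mul_le _ _
        _ = ‖Y‖ := by rw [hnA]; ring
    have hYt : ‖Y * V t‖ ≤ ‖Y‖ := by
      calc ‖Y * V t‖ ≤ ‖Y‖ * ‖V t‖ := norm_mul_le _ _
        _ = ‖Y‖ := by rw [hnB]; ring
    calc κ * ‖U 0 - V t‖ = ‖κ • (U 0 - V t)‖ := by
          rw [norm_smul, Real.norm_eq_abs, _root_.abs_of_nonneg hκ0]
      _ = ‖(D 0 - D t) + (U 0 * Y - Y * V t)‖ := by rw [hfin]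
      _ ≤ ‖D 0 - D t‖ + ‖U 0 * Y - Y * V t‖ := norm_add_le _ _
      _ ≤ ‖D 0 - D t‖ + (‖U 0 * Y‖ + ‖Y * V t‖) := by
          gcongr
          exact norm_sub_le _ _
      _ ≤ t * ‖W‖ + (‖Y‖ + ‖Y‖) := by
          gcongr
          rw [norm_sub_rev]
          exact hbnd
      _ = 2 * ‖Y‖ + t * ‖W‖ := by ring
  have hgoal : NormedSpace.exp ((-(I * (t : ℂ))) • A) - NormedSpace.exp ((-(I * (t : ℂ))) • B) = U 0 - V t := by
    rw [hbridge A t, hbridge B t]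
    simp only [hUdef, hVdef, sub_zero, hMA, hMB]
  rw [hgoal]
  exact hnorm2
end Core


/-- Strong-coupling limit bound:
`‖exp(−it(κH₀+H₁)) − exp(−it(κH₀+H_Z))‖ ≤ (2√m/(κη)) ‖H₁‖ (1 + 2T‖H₁‖)` for `t ∈ [0,T]`,
where `H₀ = Σ_ℓ E_ℓ P_ℓ` is a finite spectral representation, `η` the minimal spectral gap,
and `H_Z = Σ_ℓ P_ℓ H₁ P_ℓ` the Zeno Hamiltonian. -/
theorem strong_coupling_limit
    (m : ℕ) (hm : 1 ≤ m)
    (Ev : Fin m → ℝ) (P : Fin m → E →L[ℂ] E)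
    (hEdist : ∀ k l : Fin m, k ≠ l → Ev k ≠ Ev l)
    (hPsa : ∀ l, IsSelfAdjoint (P l))
    (hPorth : ∀ k l : Fin m, P k * P l = if k = l then P l else 0)
    (hPsum : ∑ l, P l = 1)
    (H₀ H₁ : E →L[ℂ] E) (hH₁sa : IsSelfAdjoint H₁)
    (hH₀ : H₀ = ∑ l, Ev l • P l)
    (η : ℝ) (hηpos : 0 < η)
    (hη : ∀ k l : Fin m, k ≠ l → η ≤ |Ev k - Ev l|)
    (HZ : E →L[ℂ] E) (hHZ : HZ = ∑ l, P l * H₁ * P l)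
    (κ : ℝ) (hκ : 0 < κ) (T : ℝ) (hT : 0 ≤ T) :
    ∀ t ∈ Set.Icc (0:ℝ) T,
      ‖NormedSpace.exp ((-(Complex.I * (t : ℂ))) • (κ • H₀ + H₁))
        - NormedSpace.exp ((-(Complex.I * (t : ℂ))) • (κ • H₀ + HZ))‖
        ≤ (2 * Real.sqrt m / (κ * η)) * ‖H₁‖ * (1 + 2 * T * ‖H₁‖) := by
  intro t ht
  have hRHS0 : 0 ≤ (2 * Real.sqrt m / (κ * η)) * ‖H₁‖ * (1 + 2 * T * ‖H₁‖) := by positivity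
  rcases subsingleton_or_nontrivial E with hE | hE
  · haveI : Subsingleton (E →L[ℂ] E) :=
      ⟨fun a b => ContinuousLinearMap.ext fun x => Subsingleton.elim _ _⟩
    have h0 : NormedSpace.exp ((-(Complex.I * (t : ℂ))) • (κ • H₀ + H₁))
        - NormedSpace.exp ((-(Complex.I * (t : ℂ))) • (κ • H₀ + HZ)) = 0 :=
      Subsingleton.elim _ _
    rw [h0, norm_zero]
    exact hRHS0
  · have hH₀c : H₀ = ∑ l, ((Ev l : ℂ)) • P l := by
      rw [hH₀]
      refine Finset.sum_congr rfl fun l _ => ?_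
      rw [← Complex.coe_algebraMap]
      exact (algebraMap_smul ℂ (Ev l) (P l)).symm
    have hH₀sa : IsSelfAdjoint H₀ := by
      rw [hH₀c]
      show star _ = _
      rw [star_sum]
      refine Finset.sum_congr rfl fun l _ => ?_
      rw [star_smul, (hPsa l).star_eq, Complex.star_def, Complex.conj_ofReal]
    have hHZsa : IsSelfAdjoint HZ := by
      rw [hHZ]
      show star _ = _
      rw [star_sum]
      refine Finset.sum_congr rfl fun l _ => ?_
      rw [star_mul, star_mul, (hPsa l).star_eq, hH₁sa.star_eq, mul_assoc]
    have hκH₀sa : IsSelfAdjoint (κ • H₀) := by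
      show star _ = _
      rw [star_smul, star_trivial, hH₀sa.star_eq]
    have hAsa : IsSelfAdjoint (κ • H₀ + H₁) := hκH₀sa.add hH₁sa
    have hBsa : IsSelfAdjoint (κ • H₀ + HZ) := hκH₀sa.add hHZsa
    set Y := ∑ k, P k * (H₁ * Cop P Ev k) with hYdef
    have hYnorm : ‖Y‖ ≤ Real.sqrt m * ‖H₁‖ / η :=
      Y_norm_le P hPsa hPorth hPsum Ev η hηpos hη H₁
    have hHZnorm : ‖HZ‖ ≤ ‖H₁‖ := by rw [hHZ]; exact norm_pinch P hPsa hPorth hPsum H₁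
    have hcommY : H₀ * Y - Y * H₀ = H₁ - HZ := by
      rw [hHZ]; exact comm_H₀_Y P hPorth hPsum Ev hEdist H₀ H₁ hH₀c
    set W := H₁ * Y - Y * HZ with hWdef
    have hWnorm : ‖W‖ ≤ 2 * ‖Y‖ * ‖H₁‖ := by
      calc ‖W‖ ≤ ‖H₁ * Y‖ + ‖Y * HZ‖ := norm_sub_le _ _
        _ ≤ ‖H₁‖ * ‖Y‖ + ‖Y‖ * ‖HZ‖ := add_le_add (norm_mul_le _ _) (norm_mul_le _ _)
        _ ≤ 2 * ‖Y‖ * ‖H₁‖ := by nlinarith [norm_nonneg Y, norm_nonneg H₁, hHZnorm]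
    have hkey : (κ • H₀ + H₁) * Y - Y * (κ • H₀ + HZ)
        = κ • ((κ • H₀ + H₁) - (κ • H₀ + HZ)) + W := by
      have h1 : (κ • H₀ + H₁) - (κ • H₀ + HZ) = H₁ - HZ := by abel
      rw [h1, add_mul, mul_add, smul_mul_assoc, mul_smul_comm, ← hcommY, smul_sub, hWdef]
      abel
    have hcore := core (κ • H₀ + H₁) (κ • H₀ + HZ) Y W κ (le_of_lt hκ) hAsa hBsa hkey t ht.1
    set L := ‖NormedSpace.exp ((-(Complex.I * (t : ℂ))) • (κ • H₀ + H₁))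
        - NormedSpace.exp ((-(Complex.I * (t : ℂ))) • (κ • H₀ + HZ))‖ with hLdef
    have hb : (0:ℝ) ≤ Real.sqrt m * ‖H₁‖ / η := by positivity
    have h2 : t * ‖W‖ ≤ T * (2 * ‖Y‖ * ‖H₁‖) :=
      mul_le_mul ht.2 hWnorm (norm_nonneg W) hT
    have hκmul : κ * L ≤ κ * ((2 * Real.sqrt m / (κ * η)) * ‖H₁‖ * (1 + 2 * T * ‖H₁‖)) := by
      have hRHSκ : κ * ((2 * Real.sqrt m / (κ * η)) * ‖H₁‖ * (1 + 2 * T * ‖H₁‖))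
          = 2 * (Real.sqrt m * ‖H₁‖ / η) * (1 + 2 * T * ‖H₁‖) := by
        field_simp
      rw [hRHSκ]
      calc κ * L ≤ 2 * ‖Y‖ + t * ‖W‖ := hcore
        _ ≤ 2 * ‖Y‖ + T * (2 * ‖Y‖ * ‖H₁‖) := by linarith
        _ ≤ 2 * (Real.sqrt m * ‖H₁‖ / η) * (1 + 2 * T * ‖H₁‖) := by
            nlinarith [norm_nonneg Y, norm_nonneg H₁, hYnorm, hb, hT,
              mul_nonneg (mul_nonneg hT hb) (norm_nonneg H₁),
              mul_le_mul_of_nonneg_right hYnorm (norm_nonneg H₁),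
              mul_le_mul_of_nonneg_left
                (mul_le_mul_of_nonneg_right hYnorm (norm_nonneg H₁)) hT]
    exact le_of_mul_le_mul_left hκmul hκ
end
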